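/- arXiv:0807.1079 — 11 statements merged into one kernel-verified Lean document; each statement's English description precedes it below -/
import Mathlib

section
/- Let r > 0 be a real number. Let Z be a set of homeomorphisms of [0, r) onto itself (with respect to the usual topology) such that: (i) z(α) ≥ α for every z ∈ Z and every α ∈ [0, r); (ii) for every z ∈ Z, the support supp(z) is an interval; and (iii) the union ⋃_{z∈Z} supp(z) is dense in (0, r). Let f be a bijection of [0, r) onto itself such that f commutes with every element of Z (f ∘ z = z ∘ f for all z ∈ Z), f is right-continuous at every point of [0, r), and f has only finitely many points of discontinuity. Then f is continuous on all of [0, r). -/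
/-!
On the support `S` of some `z ∈ Z`, `f` is continuous: by `f = z⁻¹ ∘ f ∘ z` a discontinuity at
`t ∈ S` propagates to `z t, z² t, …`, an increasing orbit inside `S`, contradicting finiteness.
Being continuous and injective on the interval `S`, with `f (z t) = z (f t) > f t`, the map `f`
is then strictly increasing on `S`, and it maps `S` onto itself.

At a point `x > 0` outside all supports, supports accumulate at `x` from both sides, each lying on
one side of `x`, and inside each of them `f` sends some point near `x` to a point near `x`. By
right-continuity this forces `f x = x`. On an interval `(m, x)` free of discontinuities, `f` is
continuous and injective, increasing because it is so on a support inside `(m, x)`, and its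
values approach `x` from below; so `f` is also left-continuous at `x`.
-/

open Set Filter Topology

def suppOn {α : Type*} (s : Set α) (z : α → α) : Set α := {t ∈ s | z t ≠ t}

structure IsStrictMonoInvariantInterval {α : Type*} [LinearOrder α] (f : α → α) (S : Set α) :
    Prop where
  ordConnected : S.OrdConnected
  bijOn : BijOn f S S
  strictMonoOn : StrictMonoOn f S

section Supports

variable {α : Type*} {s : Set α} {z w f : α → α}

theorem mapsTo_suppOn (hz : MapsTo z s s) (hinj : InjOn z s) :
    MapsTo z (suppOn s z) (suppOn s z) :=
  fun _ ht => ⟨hz ht.1, fun h => ht.2 (hinj (hz ht.1) ht.1 h)⟩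

theorem bijOn_suppOn (hz : MapsTo z s s) (hf : BijOn f s s)
    (hcomm : ∀ t ∈ s, f (z t) = z (f t)) : BijOn f (suppOn s z) (suppOn s z) := by
  refine ⟨fun t ht => ⟨hf.mapsTo ht.1, ?_⟩, hf.injOn.mono (sep_subset _ _), fun u hu => ?_⟩
  · rw [← hcomm t ht.1]
    exact fun h => ht.2 (hf.injOn (hz ht.1) ht.1 h)
  · obtain ⟨t, hts, rfl⟩ := hf.surjOn hu.1
    refine ⟨t, ⟨hts, fun h => hu.2 ?_⟩, rfl⟩
    rw [← hcomm t hts, h]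

theorem lt_apply_of_mem_suppOn [PartialOrder α] (hge : ∀ t ∈ s, t ≤ z t) {t : α}
    (ht : t ∈ suppOn s z) : t < z t :=
  (hge t ht.1).lt_of_ne ht.2.symm

theorem continuousWithinAt_of_continuousWithinAt_apply [TopologicalSpace α] {t : α}
    (hz : MapsTo z s s) (hf : MapsTo f s s) (hw : LeftInvOn w z s)
    (hcomm : ∀ u ∈ s, f (z u) = z (f u)) (ht : t ∈ s) (hzc : ContinuousWithinAt z s t)
    (hwc : ContinuousWithinAt w s (f (z t))) (h : ContinuousWithinAt f s (z t)) :
    ContinuousWithinAt f s t := by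
  have hconj : ∀ u ∈ s, f u = (w ∘ f ∘ z) u := fun u hu => by
    rw [Function.comp_apply, Function.comp_apply, hcomm u hu, hw (hf hu)]
  exact (hwc.comp (x := t) (h.comp hzc hz) (hf.comp hz)).congr hconj (hconj t ht)

theorem Set.Finite.eq_empty_of_mapsTo_of_forall_lt [LinearOrder α] {D : Set α} {g : α → α}
    (hD : D.Finite) (hg : MapsTo g D D) (hlt : ∀ t ∈ D, t < g t) : D = ∅ := by
  refine eq_empty_of_forall_notMem fun t ht => ?_
  obtain ⟨m, hm, hmax⟩ := exists_max_image D id hD ⟨t, ht⟩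
  exact (hlt m hm).not_ge (hmax _ (hg hm))

theorem continuousWithinAt_of_mem_suppOn [LinearOrder α] [TopologicalSpace α]
    (hz : MapsTo z s s) (hzc : ContinuousOn z s) (hw : LeftInvOn w z s)
    (hwc : ContinuousOn w s) (hge : ∀ t ∈ s, t ≤ z t) (hf : MapsTo f s s)
    (hcomm : ∀ t ∈ s, f (z t) = z (f t)) (hfin : {t ∈ s | ¬ContinuousWithinAt f s t}.Finite)
    {t : α} (ht : t ∈ suppOn s z) : ContinuousWithinAt f s t := by
  have hD : {u ∈ suppOn s z | ¬ContinuousWithinAt f s u} = ∅ := by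
    refine (hfin.subset fun u hu => ⟨hu.1.1, hu.2⟩).eq_empty_of_mapsTo_of_forall_lt
      (fun u hu => ⟨mapsTo_suppOn hz hw.injOn hu.1, fun h => hu.2 ?_⟩)
      fun u hu => lt_apply_of_mem_suppOn hge hu.1
    exact continuousWithinAt_of_continuousWithinAt_apply hz hf hw hcomm hu.1.1 (hzc _ hu.1.1)
      (hwc _ (hf (hz hu.1.1))) h
  by_contra h
  exact (hD.subset ⟨ht, h⟩ : t ∈ (∅ : Set α))

theorem ContinuousOn.strictMonoOn_of_injOn_ordConnected [ConditionallyCompleteLinearOrder α]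
    [TopologicalSpace α] [OrderTopology α] [DenselyOrdered α] {δ : Type*} [LinearOrder δ]
    [TopologicalSpace δ] [OrderClosedTopology δ] {J : Set α} {g : α → δ} {p q : α}
    (hJ : J.OrdConnected) (hc : ContinuousOn g J) (hi : InjOn g J) (hp : p ∈ J) (hq : q ∈ J)
    (hpq : p < q) (hgpq : g p < g q) : StrictMonoOn g J := by
  intro u hu v hv huv
  have hsub : Icc (min u p) (max v q) ⊆ J := hJ.out (min_rec' J hu hp) (max_rec' J hv hq)
  have hu' : u ∈ Icc (min u p) (max v q) := ⟨min_le_left _ _, huv.le.trans (le_max_left _ _)⟩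
  have hv' : v ∈ Icc (min u p) (max v q) := ⟨(min_le_left _ _).trans huv.le, le_max_left _ _⟩
  have hp' : p ∈ Icc (min u p) (max v q) := ⟨min_le_right _ _, hpq.le.trans (le_max_right _ _)⟩
  have hq' : q ∈ Icc (min u p) (max v q) := ⟨(min_le_right _ _).trans hpq.le, le_max_right _ _⟩
  rcases (hc.mono hsub).strictMonoOn_of_injOn_Icc' (hu'.1.trans hu'.2) (hi.mono hsub) with
    hmono | hanti
  · exact hmono hu' hv' huv
  · exact absurd hgpq (hanti hp' hq' hpq).not_gt

theorem isStrictMonoInvariantInterval_suppOn [ConditionallyCompleteLinearOrder α]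
    [TopologicalSpace α] [OrderTopology α] [DenselyOrdered α]
    (hz : MapsTo z s s) (hzc : ContinuousOn z s) (hw : LeftInvOn w z s)
    (hwc : ContinuousOn w s) (hge : ∀ t ∈ s, t ≤ z t) (hsupp : (suppOn s z).OrdConnected)
    (hf : BijOn f s s) (hcomm : ∀ t ∈ s, f (z t) = z (f t))
    (hfin : {t ∈ s | ¬ContinuousWithinAt f s t}.Finite) :
    IsStrictMonoInvariantInterval f (suppOn s z) where
  ordConnected := hsupp
  bijOn := bijOn_suppOn hz hf hcomm
  strictMonoOn t ht := by
    have hfz : f t < f (z t) := by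
      rw [hcomm t ht.1]
      exact lt_apply_of_mem_suppOn hge ((bijOn_suppOn hz hf hcomm).mapsTo ht)
    refine ContinuousOn.strictMonoOn_of_injOn_ordConnected hsupp (fun u hu => ?_)
      (hf.injOn.mono (sep_subset _ _)) ht (mapsTo_suppOn hz hw.injOn ht)
      (lt_apply_of_mem_suppOn hge ht) hfz ht
    exact (continuousWithinAt_of_mem_suppOn hz hzc hw hwc hge hf.mapsTo hcomm hfin hu).mono
      (sep_subset _ _)

end Supports

theorem Set.OrdConnected.subset_Ioi_of_lt {α : Type*} [LinearOrder α] {S : Set α} {x a : α}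
    (hS : S.OrdConnected) (hx : x ∉ S) (ha : a ∈ S) (hxa : x < a) : S ⊆ Ioi x :=
  fun _ hu => not_le.1 fun hux => hx (hS.out hu ha ⟨hux, hxa.le⟩)

theorem Set.OrdConnected.subset_Iio_of_lt {α : Type*} [LinearOrder α] {S : Set α} {x a : α}
    (hS : S.OrdConnected) (hx : x ∉ S) (ha : a ∈ S) (hax : a < x) : S ⊆ Iio x :=
  fun _ hu => not_le.1 fun hxu => hx (hS.out ha hu ⟨hax.le, hxu⟩)

namespace IsStrictMonoInvariantInterval

variable {α : Type*} [LinearOrder α] {f : α → α} {S : Set α} {x a : α}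

-- The witness is `min a (f⁻¹ a)`.
theorem exists_mem_Ioc (hS : IsStrictMonoInvariantInterval f S) (hx : x ∉ S) (ha : a ∈ S)
    (hxa : x < a) : ∃ s ∈ Ioc x a, f s ∈ Ioc x a := by
  have hSx := hS.ordConnected.subset_Ioi_of_lt hx ha hxa
  obtain ⟨b, hb, rfl⟩ := hS.bijOn.surjOn ha
  rcases le_or_gt b (f b) with hle | hlt
  · exact ⟨b, ⟨hSx hb, hle⟩, hxa, le_rfl⟩
  · exact ⟨f b, ⟨hxa, le_rfl⟩, hSx (hS.bijOn.mapsTo ha), (hS.strictMonoOn ha hb hlt).le⟩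

theorem exists_mem_Ico (hS : IsStrictMonoInvariantInterval f S) (hx : x ∉ S) (ha : a ∈ S)
    (hax : a < x) : ∃ s ∈ Ico a x, f s ∈ Ico a x := by
  have hSx := hS.ordConnected.subset_Iio_of_lt hx ha hax
  obtain ⟨b, hb, rfl⟩ := hS.bijOn.surjOn ha
  rcases le_or_gt (f b) b with hle | hlt
  · exact ⟨b, ⟨hle, hSx hb⟩, le_rfl, hax⟩
  · exact ⟨f b, ⟨le_rfl, hax⟩, (hS.strictMonoOn hb ha hlt).le, hSx (hS.bijOn.mapsTo ha)⟩

end IsStrictMonoInvariantInterval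

theorem eq_of_continuousWithinAt_of_forall_exists {X Y : Type*} [PseudoMetricSpace X]
    [MetricSpace Y] {f : X → Y} {s : Set X} {x : X} {y : Y} (hf : ContinuousWithinAt f s x)
    (h : ∀ ε > 0, ∃ t ∈ s, dist t x < ε ∧ dist (f t) y < ε) : f x = y := by
  refine eq_of_forall_dist_le fun ε hε => ?_
  obtain ⟨δ, hδ, hfδ⟩ := Metric.continuousWithinAt_iff.1 hf (ε / 2) (half_pos hε)
  obtain ⟨t, hts, htx, hfty⟩ := h (min δ (ε / 2)) (lt_min hδ (half_pos hε))
  calc dist (f x) y ≤ dist (f t) (f x) + dist (f t) y := dist_triangle_left _ _ _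
    _ ≤ ε / 2 + ε / 2 := add_le_add (hfδ hts (htx.trans_le (min_le_left _ _))).le
        (hfty.trans_le (min_le_right _ _)).le
    _ = ε := add_halves ε

theorem IsOpen.frequently_nhdsWithin_mem_of_subset_closure {X : Type*} [TopologicalSpace X]
    {U O W : Set X} {x : X} (hW : IsOpen W) (hO : O ⊆ closure U)
    (h : ∃ᶠ t in 𝓝[W] x, t ∈ O) : ∃ᶠ t in 𝓝[W] x, t ∈ U := by
  rw [frequently_nhdsWithin_iff] at h ⊢
  have hclosure : x ∈ closure (O ∩ W) := mem_closure_iff_frequently.2 h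
  exact mem_closure_iff_frequently.1 <| closure_minimal
    ((inter_subset_inter_left W hO).trans hW.closure_inter) isClosed_closure hclosure

theorem frequently_mem_nhdsGT_and_nhdsLT_of_Ioo_subset_closure {U : Set ℝ} {a b x : ℝ}
    (h : Ioo a b ⊆ closure U) (hx : x ∈ Ioo a b) :
    (∃ᶠ t in 𝓝[>] x, t ∈ U) ∧ ∃ᶠ t in 𝓝[<] x, t ∈ U :=
  ⟨isOpen_Ioi.frequently_nhdsWithin_mem_of_subset_closure h <| Eventually.frequently <|
      mem_of_superset (Ioo_mem_nhdsGT hx.2) (Ioo_subset_Ioo_left hx.1.le),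
    isOpen_Iio.frequently_nhdsWithin_mem_of_subset_closure h <| Eventually.frequently <|
      mem_of_superset (Ioo_mem_nhdsLT hx.1) (Ioo_subset_Ioo_right hx.2.le)⟩

theorem Set.Finite.exists_Ioo_subset_diff {D : Set ℝ} (hD : D.Finite) {l x : ℝ} (hlx : l < x) :
    ∃ m < x, Ioo m x ⊆ Ioo l x \ D := by
  have hD' : (D \ {x})ᶜ ∈ 𝓝 x := (hD.subset sdiff_subset).isClosed.isOpen_compl.mem_nhds (by simp)
  have : Ioo l x \ D ∈ 𝓝[<] x := by
    filter_upwards [Ioo_mem_nhdsLT hlx, nhdsWithin_le_nhds hD'] with t ht htD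
    exact ⟨ht, fun h => htD ⟨h, ht.2.ne⟩⟩
  exact (mem_nhdsLT_iff_exists_Ioo_subset' hlx).1 this

section OutsideSupports

variable {f : ℝ → ℝ} {𝒮 : Set (Set ℝ)} {x m : ℝ}

theorem apply_eq_self_of_notMem_sUnion (h𝒮 : ∀ S ∈ 𝒮, IsStrictMonoInvariantInterval f S)
    (hx : x ∉ ⋃₀ 𝒮) (hR : ∃ᶠ t in 𝓝[>] x, t ∈ ⋃₀ 𝒮) (hc : ContinuousWithinAt f (Ici x) x) :
    f x = x := by
  refine eq_of_continuousWithinAt_of_forall_exists hc fun ε hε => ?_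
  obtain ⟨a, ⟨S, hS, haS⟩, hxa, haε⟩ :=
    (hR.and_eventually (Ioo_mem_nhdsGT (lt_add_of_pos_right x hε))).exists
  obtain ⟨t, ht, hft⟩ := (h𝒮 S hS).exists_mem_Ioc (fun h => hx ⟨S, hS, h⟩) haS hxa
  have hball : Ioc x a ⊆ Metric.ball x ε := fun u hu => by
    rw [Real.ball_eq_Ioo]
    exact ⟨by linarith [hu.1], by linarith [hu.2]⟩
  exact ⟨t, ht.1.le, hball ht, hball hft⟩

theorem strictMonoOn_Ioo_of_notMem_sUnion (h𝒮 : ∀ S ∈ 𝒮, IsStrictMonoInvariantInterval f S)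
    (hgt : ∀ S ∈ 𝒮, ∀ t ∈ S, ∃ u ∈ S, t < u) (hx : x ∉ ⋃₀ 𝒮)
    (hL : ∃ᶠ t in 𝓝[<] x, t ∈ ⋃₀ 𝒮) (hm : m < x) (hc : ContinuousOn f (Ioo m x))
    (hi : InjOn f (Ioo m x)) : StrictMonoOn f (Ioo m x) := by
  obtain ⟨a, ⟨S, hS, haS⟩, hma, hax⟩ := (hL.and_eventually (Ioo_mem_nhdsLT hm)).exists
  obtain ⟨b, hbS, hab⟩ := hgt S hS a haS
  have hbx : b < x :=
    (h𝒮 S hS).ordConnected.subset_Iio_of_lt (fun h => hx ⟨S, hS, h⟩) haS hax hbS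
  exact hc.strictMonoOn_of_injOn_ordConnected ordConnected_Ioo hi ⟨hma, hax⟩
    ⟨hma.trans hab, hbx⟩ hab ((h𝒮 S hS).strictMonoOn haS hbS hab)

theorem continuousWithinAt_Iic_of_notMem_sUnion
    (h𝒮 : ∀ S ∈ 𝒮, IsStrictMonoInvariantInterval f S) (hx : x ∉ ⋃₀ 𝒮)
    (hL : ∃ᶠ t in 𝓝[<] x, t ∈ ⋃₀ 𝒮) (hm : m < x) (hmono : StrictMonoOn f (Ioo m x))
    (hfx : f x = x) : ContinuousWithinAt f (Iic x) x := by
  have happroach : ∀ b < x, ∃ s ∈ Ioo m x, b ≤ s ∧ f s ∈ Ico b x := fun b hb => by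
    obtain ⟨a, ⟨S, hS, haS⟩, hba, hax⟩ :=
      (hL.and_eventually (Ioo_mem_nhdsLT (max_lt hb hm))).exists
    obtain ⟨s, hs, hfs⟩ := (h𝒮 S hS).exists_mem_Ico (fun h => hx ⟨S, hS, h⟩) haS hax
    have hbs : b ≤ s := (le_max_left b m).trans (hba.le.trans hs.1)
    exact ⟨s, ⟨(le_max_right b m).trans_lt (hba.trans_le hs.1), hs.2⟩, hbs,
      (le_max_left b m).trans (hba.le.trans hfs.1), hfs.2⟩
  have hlt : ∀ t ∈ Ioo m x, f t < x := fun t ht => by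
    obtain ⟨s, hs, hts, hfs⟩ := happroach t ht.2
    exact (hmono.monotoneOn ht hs hts).trans_lt hfs.2
  have hmono' : StrictMonoOn f (Ioc m x) := by
    intro u hu v hv huv
    rcases hv.2.eq_or_lt with hvx | hvx
    · rw [hvx, hfx]
      exact hlt u ⟨hu.1, hvx ▸ huv⟩
    · exact hmono ⟨hu.1, huv.trans hvx⟩ ⟨hv.1, hvx⟩ huv
  refine hmono'.continuousWithinAt_left_of_exists_between (Ioc_mem_nhdsLE hm) fun b hb => ?_
  rw [hfx] at hb ⊢
  obtain ⟨s, hs, -, hfs⟩ := happroach b hb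
  exact ⟨s, ⟨hs.1, hs.2.le⟩, hfs⟩

theorem continuousAt_of_notMem_sUnion (h𝒮 : ∀ S ∈ 𝒮, IsStrictMonoInvariantInterval f S)
    (hgt : ∀ S ∈ 𝒮, ∀ t ∈ S, ∃ u ∈ S, t < u) (hx : x ∉ ⋃₀ 𝒮)
    (hR : ∃ᶠ t in 𝓝[>] x, t ∈ ⋃₀ 𝒮) (hL : ∃ᶠ t in 𝓝[<] x, t ∈ ⋃₀ 𝒮)
    (hright : ContinuousWithinAt f (Ici x) x) (hm : m < x) (hc : ContinuousOn f (Ioo m x))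
    (hi : InjOn f (Ioo m x)) : ContinuousAt f x := by
  have hfx : f x = x := apply_eq_self_of_notMem_sUnion h𝒮 hx hR hright
  have hmono := strictMonoOn_Ioo_of_notMem_sUnion h𝒮 hgt hx hL hm hc hi
  exact continuousAt_iff_continuous_left_right.2
    ⟨continuousWithinAt_Iic_of_notMem_sUnion h𝒮 hx hL hm hmono hfx, hright⟩

end OutsideSupports

theorem continuousOn_of_commutes_with_dense_family_general
    (r : ℝ) (Z : Set (ℝ → ℝ))
    (hZbij : ∀ z ∈ Z, Set.BijOn z (Set.Ico 0 r) (Set.Ico 0 r))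
    (hZcont : ∀ z ∈ Z, ContinuousOn z (Set.Ico 0 r))
    (hZinv : ∀ z ∈ Z, ∃ w : ℝ → ℝ,
      Set.InvOn w z (Set.Ico 0 r) (Set.Ico 0 r) ∧ ContinuousOn w (Set.Ico 0 r))
    (hZge : ∀ z ∈ Z, ∀ α ∈ Set.Ico 0 r, α ≤ z α)
    (hZsupp : ∀ z ∈ Z, Set.OrdConnected {t ∈ Set.Ico 0 r | z t ≠ t})
    (hZdense : Set.Ioo 0 r ⊆ closure (⋃ z ∈ Z, {t ∈ Set.Ico 0 r | z t ≠ t}))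
    (f : ℝ → ℝ) (hf : Set.BijOn f (Set.Ico 0 r) (Set.Ico 0 r))
    (hcomm : ∀ z ∈ Z, ∀ t ∈ Set.Ico 0 r, f (z t) = z (f t))
    (hrc : ∀ x ∈ Set.Ico 0 r, ContinuousWithinAt f (Set.Ico x r) x)
    (hfin : {x ∈ Set.Ico 0 r | ¬ ContinuousWithinAt f (Set.Ico 0 r) x}.Finite) :
    ContinuousOn f (Set.Ico 0 r) := by
  choose! w hw hwc using hZinv
  set 𝒮 := suppOn (Ico 0 r) '' Z
  have h𝒮 : ∀ S ∈ 𝒮, IsStrictMonoInvariantInterval f S := by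
    rintro _ ⟨z, hz, rfl⟩
    exact isStrictMonoInvariantInterval_suppOn (hZbij z hz).mapsTo (hZcont z hz) (hw z hz).1
      (hwc z hz) (hZge z hz) (hZsupp z hz) hf (hcomm z hz) hfin
  have hgt : ∀ S ∈ 𝒮, ∀ t ∈ S, ∃ u ∈ S, t < u := by
    rintro _ ⟨z, hz, rfl⟩ t ht
    exact ⟨z t, mapsTo_suppOn (hZbij z hz).mapsTo (hw z hz).1.injOn ht,
      lt_apply_of_mem_suppOn (hZge z hz) ht⟩
  have hdense : Ioo 0 r ⊆ closure (⋃₀ 𝒮) := by rwa [sUnion_image]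
  intro x hx
  by_cases hx𝒮 : x ∈ ⋃₀ 𝒮
  · obtain ⟨_, ⟨z, hz, rfl⟩, hxz⟩ := hx𝒮
    exact continuousWithinAt_of_mem_suppOn (hZbij z hz).mapsTo (hZcont z hz) (hw z hz).1
      (hwc z hz) (hZge z hz) hf.mapsTo (hcomm z hz) hfin hxz
  rcases hx.1.eq_or_lt with rfl | hx0
  · exact hrc 0 hx
  obtain ⟨hR, hL⟩ := frequently_mem_nhdsGT_and_nhdsLT_of_Ioo_subset_closure hdense ⟨hx0, hx.2⟩
  obtain ⟨m, hm, hmx⟩ := hfin.exists_Ioo_subset_diff hx0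
  have hmI : Ioo m x ⊆ Ico 0 r := fun t ht => ⟨(hmx ht).1.1.le, (hmx ht).1.2.trans hx.2⟩
  have hc : ContinuousOn f (Ioo m x) := fun t ht =>
    (not_not.1 fun h => (hmx ht).2 ⟨hmI ht, h⟩).mono hmI
  have hright : ContinuousWithinAt f (Ici x) x := (continuousWithinAt_Ico_iff_Ici hx.2).1 (hrc x hx)
  exact (continuousAt_of_notMem_sUnion h𝒮 hgt hx𝒮 hR hL hright hm hc
    (hf.injOn.mono hmI)).continuousWithinAt

/-- Let `r > 0`.  Let `Z` be a set of homeomorphisms of `[0, r)` onto itself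
(with respect to the usual topology) such that: (i) `z α ≥ α` for every `z ∈ Z` and every
`α ∈ [0, r)`; (ii) for every `z ∈ Z`, the support `supp z = {t ∈ [0,r) | z t ≠ t}` is an
interval; (iii) the union of the supports is dense in `(0, r)`.  Let `f` be a bijection of
`[0, r)` onto itself which commutes with every element of `Z`, is right-continuous at every
point of `[0, r)`, and has only finitely many points of discontinuity.  Then `f` is
continuous on all of `[0, r)`. -/
theorem continuousOn_of_commutes_with_dense_family
    (r : ℝ) (hr : 0 < r) (Z : Set (ℝ → ℝ))
    (hZbij : ∀ z ∈ Z, Set.BijOn z (Set.Ico 0 r) (Set.Ico 0 r))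
    (hZcont : ∀ z ∈ Z, ContinuousOn z (Set.Ico 0 r))
    (hZinv : ∀ z ∈ Z, ∃ w : ℝ → ℝ,
      Set.InvOn w z (Set.Ico 0 r) (Set.Ico 0 r) ∧ ContinuousOn w (Set.Ico 0 r))
    (hZge : ∀ z ∈ Z, ∀ α ∈ Set.Ico 0 r, α ≤ z α)
    (hZsupp : ∀ z ∈ Z, Set.OrdConnected {t ∈ Set.Ico 0 r | z t ≠ t})
    (hZdense : Set.Ioo 0 r ⊆ closure (⋃ z ∈ Z, {t ∈ Set.Ico 0 r | z t ≠ t}))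
    (f : ℝ → ℝ) (hf : Set.BijOn f (Set.Ico 0 r) (Set.Ico 0 r))
    (hcomm : ∀ z ∈ Z, ∀ t ∈ Set.Ico 0 r, f (z t) = z (f t))
    (hrc : ∀ x ∈ Set.Ico 0 r, ContinuousWithinAt f (Set.Ico x r) x)
    (hfin : {x ∈ Set.Ico 0 r | ¬ ContinuousWithinAt f (Set.Ico 0 r) x}.Finite) :
    ContinuousOn f (Set.Ico 0 r) :=
  continuousOn_of_commutes_with_dense_family_general r Z hZbij hZcont hZinv hZge hZsupp hZdense f hf
    hcomm hrc hfin
end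

section
/- Let r > 0 be a real number. Let z be a homeomorphism of [0, r) onto itself (with respect to the usual topology) such that z(α) > α for every α ∈ (0, r). Let f be a bijection of [0, r) onto itself such that f commutes with z (f ∘ z = z ∘ f), f is right-continuous at 0, and f has only finitely many points of discontinuity. Then f is continuous on all of [0, r). -/
/-!
Since `f = z⁻¹ ∘ f ∘ z` with `z` and `z⁻¹` continuous, continuity of `f` at `z x` forces
continuity at `x`, so `z` maps the finite set of discontinuities of `f` into itself. That set
avoids `0` and `z` strictly increases its points, so a largest discontinuity would be pushed past
itself; hence there is none.
-/

open Set

theorem continuousWithinAt_of_continuousWithinAt_apply_of_semiconj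
    {α β : Type*} [TopologicalSpace α] [TopologicalSpace β] {s : Set α} {t : Set β}
    {f : α → β} {z : α → α} {z' w : β → β} {x : α}
    (hf : MapsTo f s t) (hz : MapsTo z s s) (hzc : ContinuousOn z s)
    (hwc : ContinuousOn w t) (hw : LeftInvOn w z' t) (hcomm : ∀ y ∈ s, f (z y) = z' (f y))
    (hx : x ∈ s) (h : ContinuousWithinAt f s (z x)) : ContinuousWithinAt f s x := by
  have hf_eq : EqOn (w ∘ f ∘ z) f s := fun y hy => by
    simp only [Function.comp_apply, hcomm y hy, hw (hf hy)]
  have hfz : ContinuousWithinAt (f ∘ z) s x := h.comp (hzc x hx) hz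
  have hcomp : ContinuousWithinAt (w ∘ f ∘ z) s x :=
    ContinuousWithinAt.comp (g := w) (f := f ∘ z) (hwc _ (hf (hz hx))) hfz (hf.comp hz)
  exact hcomp.congr (fun y hy => (hf_eq hy).symm) (hf_eq hx).symm

theorem Set.Finite.eq_empty_of_mapsTo_of_lt_apply {α : Type*} [Preorder α] {s : Set α}
    {z : α → α} (hs : s.Finite) (hz : MapsTo z s s) (hlt : ∀ x ∈ s, x < z x) : s = ∅ := by
  by_contra hne
  obtain ⟨a, ha⟩ := hs.exists_maximal (nonempty_iff_ne_empty.2 hne)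
  exact (hlt a ha.1).not_ge (ha.2 (hz ha.1) (hlt a ha.1).le)

theorem continuousOn_of_commutes_with_expanding_homeo_general
    (r : ℝ) (z : ℝ → ℝ)
    (hzbij : Set.BijOn z (Set.Ico 0 r) (Set.Ico 0 r))
    (hzcont : ContinuousOn z (Set.Ico 0 r))
    (hzinv : ∃ w : ℝ → ℝ,
      Set.InvOn w z (Set.Ico 0 r) (Set.Ico 0 r) ∧ ContinuousOn w (Set.Ico 0 r))
    (hzgt : ∀ α ∈ Set.Ioo 0 r, α < z α)
    (f : ℝ → ℝ) (hf : Set.BijOn f (Set.Ico 0 r) (Set.Ico 0 r))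
    (hcomm : ∀ t ∈ Set.Ico 0 r, f (z t) = z (f t))
    (hrc0 : ContinuousWithinAt f (Set.Ico 0 r) 0)
    (hfin : {x ∈ Set.Ico 0 r | ¬ ContinuousWithinAt f (Set.Ico 0 r) x}.Finite) :
    ContinuousOn f (Set.Ico 0 r) := by
  obtain ⟨w, hw, hwc⟩ := hzinv
  set D := {x ∈ Set.Ico 0 r | ¬ ContinuousWithinAt f (Set.Ico 0 r) x}
  have hDz : MapsTo z D D := fun x hx =>
    ⟨hzbij.mapsTo hx.1, fun h => hx.2 <|
      continuousWithinAt_of_continuousWithinAt_apply_of_semiconj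
        hf.mapsTo hzbij.mapsTo hzcont hwc hw.1 hcomm hx.1 h⟩
  have hDlt : ∀ x ∈ D, x < z x := fun x hx =>
    hzgt x ⟨hx.1.1.lt_of_ne (by rintro rfl; exact hx.2 hrc0), hx.1.2⟩
  have hD : D = ∅ := hfin.eq_empty_of_mapsTo_of_lt_apply hDz hDlt
  intro x hx
  by_contra h
  exact hD.subset ⟨hx, h⟩

/-- Let `r > 0`.  Let `z` be a homeomorphism of `[0, r)` onto itself (with
respect to the usual topology) such that `z α > α` for every `α ∈ (0, r)`.  Let `f` be a
bijection of `[0, r)` onto itself commuting with `z`, right-continuous at `0`, and with only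
finitely many points of discontinuity.  Then `f` is continuous on all of `[0, r)`. -/
theorem continuousOn_of_commutes_with_expanding_homeo
    (r : ℝ) (hr : 0 < r) (z : ℝ → ℝ)
    (hzbij : Set.BijOn z (Set.Ico 0 r) (Set.Ico 0 r))
    (hzcont : ContinuousOn z (Set.Ico 0 r))
    (hzinv : ∃ w : ℝ → ℝ,
      Set.InvOn w z (Set.Ico 0 r) (Set.Ico 0 r) ∧ ContinuousOn w (Set.Ico 0 r))
    (hzgt : ∀ α ∈ Set.Ioo 0 r, α < z α)
    (f : ℝ → ℝ) (hf : Set.BijOn f (Set.Ico 0 r) (Set.Ico 0 r))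
    (hcomm : ∀ t ∈ Set.Ico 0 r, f (z t) = z (f t))
    (hrc0 : ContinuousWithinAt f (Set.Ico 0 r) 0)
    (hfin : {x ∈ Set.Ico 0 r | ¬ ContinuousWithinAt f (Set.Ico 0 r) x}.Finite) :
    ContinuousOn f (Set.Ico 0 r) :=
  continuousOn_of_commutes_with_expanding_homeo_general r z hzbij hzcont hzinv hzgt f hf hcomm hrc0
    hfin
end

section
/- Let α, β ∈ [0, r] ∩ A with α < β, and set I = (α, β). Let x ∈ F_I(r,Λ,A) satisfy fix(x) ∩ I ∩ A = ∅. Then the map φ : F_I(r,Λ,A) → Λ sending y to its right slope y′⁺(α) at α is a group homomorphism, and the restriction of φ to the centralizer of x in F_I(r,Λ,A) is injective. The same conclusions hold for the map y ↦ y′⁻(β) sending y to its left slope at β. -/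
open Set

noncomputable section

/-- The multiplicative group of positive real numbers. -/
abbrev PosReal : Type := {x : ℝ // 0 < x}

namespace ThompsonStein

/-- The support of a permutation of `ℝ`: the set of non-fixed points. -/
def supp (f : Equiv.Perm ℝ) : Set ℝ := {t | f t ≠ t}

/-- The fixed-point set of a permutation of `ℝ`. -/
def fixSet (f : Equiv.Perm ℝ) : Set ℝ := {t | f t = t}

/-- Membership in the Stein–Thompson group `F(r, Λ, A)`, where elements of the group of
piecewise affine homeomorphisms of `[0, r)` are encoded as the permutations of `ℝ` fixing
every point outside `[0, r)`.  The conditions say: `f` fixes the complement of `[0, r)`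
(so it restricts to a bijection of `[0, r)`), it is strictly increasing and continuous on
`[0, r)`, and it is piecewise affine with respect to a finite subdivision
`0 = t 0 < t 1 < ⋯ < t n = r` whose points and their images lie in `A`, the slope of each
affine piece lying in `Λ`. -/
def MemF (r : ℝ) (Λ : Subgroup PosReal) (A : AddSubgroup ℝ) (f : Equiv.Perm ℝ) : Prop :=
  (∀ t : ℝ, t ∉ Set.Ico 0 r → f t = t) ∧
  StrictMonoOn f (Set.Ico 0 r) ∧
  ContinuousOn f (Set.Ico 0 r) ∧
  ∃ n : ℕ, ∃ t : Fin (n + 1) → ℝ,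
    StrictMono t ∧ t 0 = 0 ∧ t (Fin.last n) = r ∧
    (∀ i, t i ∈ A) ∧ (∀ i, f (t i) ∈ A) ∧
    ∀ i : Fin n, ∃ s : PosReal, s ∈ Λ ∧ ∃ c : ℝ,
      ∀ u ∈ Set.Icc (t i.castSucc) (t i.succ), f u = (s : ℝ) * u + c

/-- Membership in `F_S(r, Λ, A)`: the elements of `F(r, Λ, A)` with support contained
in `S`. -/
def MemFOn (r : ℝ) (Λ : Subgroup PosReal) (A : AddSubgroup ℝ) (S : Set ℝ)
    (f : Equiv.Perm ℝ) : Prop :=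
  MemF r Λ A f ∧ supp f ⊆ S

/-- `f` has right slope `s` at `γ`:  `f` is affine with slope `s` on some interval
`(γ, γ + ε)` to the right of `γ`. -/
def HasRightSlope (f : ℝ → ℝ) (γ s : ℝ) : Prop :=
  ∃ ε > (0 : ℝ), ∃ c : ℝ, ∀ u ∈ Set.Ioo γ (γ + ε), f u = s * u + c

/-- `f` has left slope `s` at `γ`:  `f` is affine with slope `s` on some interval
`(γ - ε, γ)` to the left of `γ`. -/
def HasLeftSlope (f : ℝ → ℝ) (γ s : ℝ) : Prop :=
  ∃ ε > (0 : ℝ), ∃ c : ℝ, ∀ u ∈ Set.Ioo (γ - ε) γ, f u = s * u + c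

end ThompsonStein

/-!
An element `y` of `F_I(r, Λ, A)` fixes `α`, so near `α` it is `u ↦ s (u - α) + α` with `s ∈ Λ`;
composing such germs multiplies the slopes. For injectivity, let `y ≠ z` commute with `x` and have
the same slope at `α`, and let `γ` be the infimum of `D = {u | y u ≠ z u}`. Then `y = z` just to
the right of `α`, so `α < γ < β`; `x` maps `D` onto itself and is increasing and continuous, so it
fixes `γ`. Finally `y = z` just to the left of `γ` while `γ ∈ closure D`, which is impossible if
`y` and `z` are both affine near `γ`; hence `γ` is a breakpoint of `y` or `z`, so `γ ∈ A`,
contradicting `fix(x) ∩ I ∩ A = ∅`. The left slope at `β` is symmetric, with `sup D`.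
-/

theorem Fin.exists_castSucc_and_not_succ {n : ℕ} {p : Fin (n + 1) → Prop} (h0 : p 0)
    (hlast : ¬ p (Fin.last n)) : ∃ i : Fin n, p i.castSucc ∧ ¬ p i.succ := by
  induction n with
  | zero => exact absurd h0 hlast
  | succ n ih =>
    by_cases h : p (Fin.last n).castSucc
    · exact ⟨Fin.last n, h, hlast⟩
    · obtain ⟨i, hi, hi'⟩ := ih (p := p ∘ Fin.castSucc) h0 h
      exact ⟨i.castSucc, hi, by rwa [Fin.succ_castSucc]⟩

theorem Equiv.Perm.image_setOf_ne_of_commute {α : Type*} {x y z : Equiv.Perm α}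
    (hxy : Commute x y) (hxz : Commute x z) : x '' {u | y u ≠ z u} = {u | y u ≠ z u} := by
  ext v
  have hy : y (x⁻¹ v) = x⁻¹ (y v) := (congrArg (· v) hxy.inv_left.eq).symm
  have hz : z (x⁻¹ v) = x⁻¹ (z v) := (congrArg (· v) hxz.inv_left.eq).symm
  rw [Equiv.image_eq_preimage_symm, ← Equiv.Perm.inv_def]
  change y (x⁻¹ v) ≠ z (x⁻¹ v) ↔ y v ≠ z v
  rw [hy, hz, x⁻¹.injective.ne_iff]

namespace ThompsonStein

open Filter Topology

lemma affine_coeffs_eq_of_eventually {l : Filter ℝ} [l.NeBot] {γ : ℝ} (hl : l ≤ 𝓝[≠] γ)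
    {s c s' c' : ℝ} (h : ∀ᶠ u in l, s * u + c = s' * u + c') : s = s' ∧ c = c' := by
  have hs : s = s' := by
    by_contra hne
    have hpt : ∀ᶠ u in l, u = (c' - c) / (s - s') :=
      h.mono fun u hu => (eq_div_iff (sub_ne_zero.2 hne)).2 (by linarith)
    have hγ : (c' - c) / (s - s') = γ :=
      tendsto_nhds_unique (tendsto_const_nhds.congr' (hpt.mono fun u hu => hu.symm))
        (hl.trans nhdsWithin_le_nhds)
    obtain ⟨u, hu, hu'⟩ := (hpt.and (hl self_mem_nhdsWithin)).exists
    exact hu' (hu.trans hγ)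
  subst hs
  obtain ⟨u, hu⟩ := h.exists
  exact ⟨rfl, by linarith⟩

section Slopes

variable {f g : ℝ → ℝ} {γ s t : ℝ}

lemma hasRightSlope_iff : HasRightSlope f γ s ↔ ∃ c, ∀ᶠ u in 𝓝[>] γ, f u = s * u + c := by
  constructor
  · rintro ⟨ε, hε, c, hc⟩
    exact ⟨c, mem_nhdsGT_iff_exists_Ioo_subset.2 ⟨γ + ε, by simpa using hε, hc⟩⟩
  · rintro ⟨c, hc⟩
    obtain ⟨b, hb, hsub⟩ := mem_nhdsGT_iff_exists_Ioo_subset.1 hc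
    exact ⟨b - γ, sub_pos.2 hb, c, fun u hu => hsub (by rwa [add_sub_cancel] at hu)⟩

lemma hasLeftSlope_iff : HasLeftSlope f γ s ↔ ∃ c, ∀ᶠ u in 𝓝[<] γ, f u = s * u + c := by
  constructor
  · rintro ⟨ε, hε, c, hc⟩
    exact ⟨c, mem_nhdsLT_iff_exists_Ioo_subset.2 ⟨γ - ε, by simpa using hε, hc⟩⟩
  · rintro ⟨c, hc⟩
    obtain ⟨a, ha, hsub⟩ := mem_nhdsLT_iff_exists_Ioo_subset.1 hc
    exact ⟨γ - a, sub_pos.2 ha, c, fun u hu => hsub (by rwa [sub_sub_cancel] at hu)⟩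

lemma HasRightSlope.unique {s' : ℝ} (h : HasRightSlope f γ s) (h' : HasRightSlope f γ s') :
    s = s' := by
  obtain ⟨c, hc⟩ := hasRightSlope_iff.1 h
  obtain ⟨c', hc'⟩ := hasRightSlope_iff.1 h'
  have hl : 𝓝[>] γ ≤ 𝓝[≠] γ := nhdsWithin_mono _ fun _ hu => ne_of_gt hu
  refine (affine_coeffs_eq_of_eventually hl (c := c) (c' := c') ?_).1
  filter_upwards [hc, hc'] with u hu hu' using hu ▸ hu'

lemma HasLeftSlope.unique {s' : ℝ} (h : HasLeftSlope f γ s) (h' : HasLeftSlope f γ s') :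
    s = s' := by
  obtain ⟨c, hc⟩ := hasLeftSlope_iff.1 h
  obtain ⟨c', hc'⟩ := hasLeftSlope_iff.1 h'
  have hl : 𝓝[<] γ ≤ 𝓝[≠] γ := nhdsWithin_mono _ fun _ hu => ne_of_lt hu
  refine (affine_coeffs_eq_of_eventually hl (c := c) (c' := c') ?_).1
  filter_upwards [hc, hc'] with u hu hu' using hu ▸ hu'

lemma hasRightSlope_of_eventually (h : ∀ᶠ u in 𝓝[>] γ, f u = s * (u - γ) + γ) :
    HasRightSlope f γ s :=
  hasRightSlope_iff.2 ⟨γ - s * γ, h.mono fun u hu => by rw [hu]; ring⟩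

lemma hasLeftSlope_of_eventually (h : ∀ᶠ u in 𝓝[<] γ, f u = s * (u - γ) + γ) :
    HasLeftSlope f γ s :=
  hasLeftSlope_iff.2 ⟨γ - s * γ, h.mono fun u hu => by rw [hu]; ring⟩

lemma tendsto_dilation_nhds (γ t : ℝ) : Tendsto (fun u => t * (u - γ) + γ) (𝓝 γ) (𝓝 γ) := by
  have : Continuous fun u => t * (u - γ) + γ := by fun_prop
  simpa using this.tendsto γ

lemma tendsto_nhdsGT_of_eventually (ht : 0 < t) (hg : ∀ᶠ u in 𝓝[>] γ, g u = t * (u - γ) + γ) :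
    Tendsto g (𝓝[>] γ) (𝓝[>] γ) := by
  refine tendsto_nhdsWithin_iff.2 ⟨?_, ?_⟩
  · exact ((tendsto_dilation_nhds γ t).mono_left nhdsWithin_le_nhds).congr'
      (hg.mono fun _ hu => hu.symm)
  · filter_upwards [hg, self_mem_nhdsWithin] with u hu hγu
    rw [hu, mem_Ioi, lt_add_iff_pos_left]
    exact mul_pos ht (sub_pos.2 hγu)

lemma tendsto_nhdsLT_of_eventually (ht : 0 < t) (hg : ∀ᶠ u in 𝓝[<] γ, g u = t * (u - γ) + γ) :
    Tendsto g (𝓝[<] γ) (𝓝[<] γ) := by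
  refine tendsto_nhdsWithin_iff.2 ⟨?_, ?_⟩
  · exact ((tendsto_dilation_nhds γ t).mono_left nhdsWithin_le_nhds).congr'
      (hg.mono fun _ hu => hu.symm)
  · filter_upwards [hg, self_mem_nhdsWithin] with u hu hγu
    rw [hu, mem_Iio, add_lt_iff_neg_right]
    exact mul_neg_of_pos_of_neg ht (sub_neg.2 hγu)

lemma hasRightSlope_comp (hf : ∀ᶠ u in 𝓝[>] γ, f u = s * (u - γ) + γ)
    (hg : ∀ᶠ u in 𝓝[>] γ, g u = t * (u - γ) + γ) (ht : 0 < t) :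
    HasRightSlope (f ∘ g) γ (s * t) := by
  refine hasRightSlope_of_eventually ?_
  filter_upwards [(tendsto_nhdsGT_of_eventually ht hg).eventually hf, hg] with u hfu hgu
  rw [Function.comp_apply, hfu, hgu]; ring

lemma hasLeftSlope_comp (hf : ∀ᶠ u in 𝓝[<] γ, f u = s * (u - γ) + γ)
    (hg : ∀ᶠ u in 𝓝[<] γ, g u = t * (u - γ) + γ) (ht : 0 < t) :
    HasLeftSlope (f ∘ g) γ (s * t) := by
  refine hasLeftSlope_of_eventually ?_
  filter_upwards [(tendsto_nhdsLT_of_eventually ht hg).eventually hf, hg] with u hfu hgu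
  rw [Function.comp_apply, hfu, hgu]; ring

end Slopes

section MemF

variable {r : ℝ} {Λ : Subgroup PosReal} {A : AddSubgroup ℝ} {f y z : Equiv.Perm ℝ} {γ : ℝ}

lemma MemF.exists_affine_right (hf : MemF r Λ A f) (hγ : γ ∈ Ico 0 r) :
    ∃ a ∈ A, ∃ b, a ≤ γ ∧ γ < b ∧
      ∃ s ∈ Λ, ∃ c, ∀ u ∈ Icc a b, f u = (s : ℝ) * u + c := by
  obtain ⟨-, -, -, n, t, -, ht0, htn, htA, -, haff⟩ := hf
  obtain ⟨i, hi, hi'⟩ := Fin.exists_castSucc_and_not_succ (p := fun i => t i ≤ γ)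
    (by simpa [ht0] using hγ.1) (by simpa [htn] using hγ.2)
  exact ⟨t i.castSucc, htA _, t i.succ, hi, not_le.1 hi', haff i⟩

lemma MemF.exists_affine_left (hf : MemF r Λ A f) (hγ : γ ∈ Ioc 0 r) :
    ∃ a b, b ∈ A ∧ a < γ ∧ γ ≤ b ∧
      ∃ s ∈ Λ, ∃ c, ∀ u ∈ Icc a b, f u = (s : ℝ) * u + c := by
  obtain ⟨-, -, -, n, t, -, ht0, htn, htA, -, haff⟩ := hf
  obtain ⟨i, hi, hi'⟩ := Fin.exists_castSucc_and_not_succ (p := fun i => t i < γ)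
    (by simpa [ht0] using hγ.1) (by simpa [htn] using hγ.2)
  exact ⟨t i.castSucc, t i.succ, htA _, hi, not_lt.1 hi', haff i⟩

lemma MemF.exists_eventually_nhdsGT (hf : MemF r Λ A f) (hγ : γ ∈ Ico 0 r) :
    ∃ s ∈ Λ, ∀ᶠ u in 𝓝[>] γ, f u = (s : ℝ) * (u - γ) + f γ := by
  obtain ⟨a, -, b, haγ, hγb, s, hs, c, hc⟩ := hf.exists_affine_right hγ
  refine ⟨s, hs, eventually_of_mem (Ioo_mem_nhdsGT hγb) fun u hu => ?_⟩
  rw [hc u ⟨haγ.trans hu.1.le, hu.2.le⟩, hc γ ⟨haγ, hγb.le⟩]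
  ring

lemma MemF.exists_eventually_nhdsLT (hf : MemF r Λ A f) (hγ : γ ∈ Ioc 0 r) :
    ∃ s ∈ Λ, ∀ᶠ u in 𝓝[<] γ, f u = (s : ℝ) * (u - γ) + f γ := by
  obtain ⟨a, b, -, haγ, hγb, s, hs, c, hc⟩ := hf.exists_affine_left hγ
  refine ⟨s, hs, eventually_of_mem (Ioo_mem_nhdsLT haγ) fun u hu => ?_⟩
  rw [hc u ⟨hu.1.le, hu.2.le.trans hγb⟩, hc γ ⟨haγ.le, hγb⟩]
  ring

lemma MemF.exists_eventually_nhds_of_notMem (hf : MemF r Λ A f) (hγ : γ ∈ Ico 0 r)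
    (hγA : γ ∉ A) : ∃ s c : ℝ, ∀ᶠ u in 𝓝 γ, f u = s * u + c := by
  obtain ⟨a, ha, b, haγ, hγb, s, -, c, hc⟩ := hf.exists_affine_right hγ
  have haγ' : a < γ := haγ.lt_of_ne fun h => hγA (h ▸ ha)
  exact ⟨s, c, mem_of_superset (Ioo_mem_nhds haγ' hγb) fun u hu => hc u (Ioo_subset_Icc_self hu)⟩

lemma MemF.mem_of_mem_closure_setOf_ne (hy : MemF r Λ A y) (hz : MemF r Λ A z)
    (hγ : γ ∈ Ico 0 r) {l : Filter ℝ} [l.NeBot] (hl : l ≤ 𝓝[≠] γ) (hyz : ⇑y =ᶠ[l] ⇑z)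
    (hcl : γ ∈ closure {u | y u ≠ z u}) : γ ∈ A := by
  by_contra hγA
  obtain ⟨s, c, hy'⟩ := hy.exists_eventually_nhds_of_notMem hγ hγA
  obtain ⟨s', c', hz'⟩ := hz.exists_eventually_nhds_of_notMem hγ hγA
  have hle : l ≤ 𝓝 γ := hl.trans nhdsWithin_le_nhds
  have hcoeff : s = s' ∧ c = c' := affine_coeffs_eq_of_eventually hl <| by
    filter_upwards [hle hy', hle hz', hyz] with u hyu hzu h
    rwa [← hyu, ← hzu]
  obtain ⟨rfl, rfl⟩ := hcoeff
  have hyz' : ∀ᶠ u in 𝓝 γ, y u = z u := by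
    filter_upwards [hy', hz'] with u hyu hzu
    rw [hyu, hzu]
  obtain ⟨u, hne, heq⟩ := ((mem_closure_iff_frequently.1 hcl).and_eventually hyz').exists
  exact hne heq

end MemF

section MemFOn

variable {r : ℝ} {Λ : Subgroup PosReal} {A : AddSubgroup ℝ} {x y z : Equiv.Perm ℝ}
  {α β s t : ℝ}

lemma MemFOn.apply_eq_of_notMem {S : Set ℝ} (hy : MemFOn r Λ A S y) {u : ℝ} (hu : u ∉ S) :
    y u = u :=
  not_not.1 fun h => hu (hy.2 h)

lemma MemFOn.setOf_ne_subset {S : Set ℝ} (hy : MemFOn r Λ A S y) (hz : MemFOn r Λ A S z) :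
    {u | y u ≠ z u} ⊆ S := fun u hne => by
  by_contra hu
  exact hne (by rw [hy.apply_eq_of_notMem hu, hz.apply_eq_of_notMem hu])

lemma MemFOn.exists_eventually_nhdsGT (hy : MemFOn r Λ A (Ioo α β) y) (hα : α ∈ Ico 0 r) :
    ∃ s ∈ Λ, ∀ᶠ u in 𝓝[>] α, y u = (s : ℝ) * (u - α) + α := by
  simpa only [hy.apply_eq_of_notMem fun h => lt_irrefl α h.1]
    using hy.1.exists_eventually_nhdsGT hα

lemma MemFOn.exists_eventually_nhdsLT (hy : MemFOn r Λ A (Ioo α β) y) (hβ : β ∈ Ioc 0 r) :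
    ∃ s ∈ Λ, ∀ᶠ u in 𝓝[<] β, y u = (s : ℝ) * (u - β) + β := by
  simpa only [hy.apply_eq_of_notMem fun h => lt_irrefl β h.2]
    using hy.1.exists_eventually_nhdsLT hβ

lemma MemFOn.exists_hasRightSlope (hy : MemFOn r Λ A (Ioo α β) y) (hα : α ∈ Ico 0 r) :
    ∃ s ∈ Λ, HasRightSlope y α s := by
  obtain ⟨s, hs, hy'⟩ := hy.exists_eventually_nhdsGT hα
  exact ⟨s, hs, hasRightSlope_of_eventually hy'⟩

lemma MemFOn.exists_hasLeftSlope (hy : MemFOn r Λ A (Ioo α β) y) (hβ : β ∈ Ioc 0 r) :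
    ∃ s ∈ Λ, HasLeftSlope y β s := by
  obtain ⟨s, hs, hy'⟩ := hy.exists_eventually_nhdsLT hβ
  exact ⟨s, hs, hasLeftSlope_of_eventually hy'⟩

lemma MemFOn.hasRightSlope_mul (hy : MemFOn r Λ A (Ioo α β) y) (hz : MemFOn r Λ A (Ioo α β) z)
    (hα : α ∈ Ico 0 r) (hys : HasRightSlope y α s) (hzt : HasRightSlope z α t) :
    HasRightSlope (⇑(y * z)) α (s * t) := by
  obtain ⟨s', -, hy'⟩ := hy.exists_eventually_nhdsGT hα
  obtain ⟨t', -, hz'⟩ := hz.exists_eventually_nhdsGT hα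
  rw [hys.unique (hasRightSlope_of_eventually hy'), hzt.unique (hasRightSlope_of_eventually hz'),
    Equiv.Perm.coe_mul]
  exact hasRightSlope_comp hy' hz' t'.2

lemma MemFOn.hasLeftSlope_mul (hy : MemFOn r Λ A (Ioo α β) y) (hz : MemFOn r Λ A (Ioo α β) z)
    (hβ : β ∈ Ioc 0 r) (hys : HasLeftSlope y β s) (hzt : HasLeftSlope z β t) :
    HasLeftSlope (⇑(y * z)) β (s * t) := by
  obtain ⟨s', -, hy'⟩ := hy.exists_eventually_nhdsLT hβ
  obtain ⟨t', -, hz'⟩ := hz.exists_eventually_nhdsLT hβ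
  rw [hys.unique (hasLeftSlope_of_eventually hy'), hzt.unique (hasLeftSlope_of_eventually hz'),
    Equiv.Perm.coe_mul]
  exact hasLeftSlope_comp hy' hz' t'.2

lemma MemFOn.eventuallyEq_nhdsGT (hy : MemFOn r Λ A (Ioo α β) y) (hz : MemFOn r Λ A (Ioo α β) z)
    (hα : α ∈ Ico 0 r) (hys : HasRightSlope y α s) (hzs : HasRightSlope z α s) :
    ⇑y =ᶠ[𝓝[>] α] ⇑z := by
  obtain ⟨s', -, hy'⟩ := hy.exists_eventually_nhdsGT hα
  obtain ⟨s'', -, hz'⟩ := hz.exists_eventually_nhdsGT hα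
  have hs' := hys.unique (hasRightSlope_of_eventually hy')
  have hs'' := hzs.unique (hasRightSlope_of_eventually hz')
  filter_upwards [hy', hz'] with u hyu hzu
  rw [hyu, hzu, ← hs', ← hs'']

lemma MemFOn.eventuallyEq_nhdsLT (hy : MemFOn r Λ A (Ioo α β) y) (hz : MemFOn r Λ A (Ioo α β) z)
    (hβ : β ∈ Ioc 0 r) (hys : HasLeftSlope y β s) (hzs : HasLeftSlope z β s) :
    ⇑y =ᶠ[𝓝[<] β] ⇑z := by
  obtain ⟨s', -, hy'⟩ := hy.exists_eventually_nhdsLT hβ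
  obtain ⟨s'', -, hz'⟩ := hz.exists_eventually_nhdsLT hβ
  have hs' := hys.unique (hasLeftSlope_of_eventually hy')
  have hs'' := hzs.unique (hasLeftSlope_of_eventually hz')
  filter_upwards [hy', hz'] with u hyu hzu
  rw [hyu, hzu, ← hs', ← hs'']


lemma eq_of_commute_of_hasRightSlope_eq (hα : 0 ≤ α) (hαβ : α < β) (hβ : β ≤ r)
    (hx : MemF r Λ A x) (hfix : fixSet x ∩ Ioo α β ∩ (A : Set ℝ) = ∅)
    (hy : MemFOn r Λ A (Ioo α β) y) (hxy : Commute x y)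
    (hz : MemFOn r Λ A (Ioo α β) z) (hxz : Commute x z)
    (hys : HasRightSlope y α s) (hzs : HasRightSlope z α s) : y = z := by
  by_contra hne
  set D := {u | y u ≠ z u}
  obtain ⟨u₀, hu₀⟩ : D.Nonempty := by
    by_contra! h
    exact hne (Equiv.ext fun u => not_not.1 fun hu => h.subset hu)
  have hDI : D ⊆ Ioo α β := hy.setOf_ne_subset hz
  have hDr : D ⊆ Ico 0 r := hDI.trans (Ioo_subset_Ico_self.trans (Ico_subset_Ico hα hβ))
  have hbdd : BddBelow D := ⟨α, fun u hu => (hDI hu).1.le⟩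
  obtain ⟨b, hαb, hyz⟩ := mem_nhdsGT_iff_exists_Ioo_subset.1
    (hy.eventuallyEq_nhdsGT hz ⟨hα, hαβ.trans_le hβ⟩ hys hzs)
  set γ := sInf D
  have hγ : γ ∈ Ioo α β := ⟨hαb.trans_le <| le_csInf ⟨u₀, hu₀⟩ fun u hu =>
      not_lt.1 fun hub => hu (hyz ⟨(hDI hu).1, hub⟩),
    (csInf_le hbdd hu₀).trans_lt (hDI hu₀).2⟩
  have hγr : γ ∈ Ico 0 r := ⟨hα.trans hγ.1.le, hγ.2.trans_le hβ⟩
  have hxγ : x γ = γ := by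
    rw [(hx.2.1.monotoneOn.mono hDr).map_csInf_of_continuousWithinAt
      ((hx.2.2.1 γ hγr).mono hDr) ⟨u₀, hu₀⟩ hbdd, Equiv.Perm.image_setOf_ne_of_commute hxy hxz]
  have hγA : γ ∈ A := hy.1.mem_of_mem_closure_setOf_ne hz.1 hγr (l := 𝓝[<] γ)
    (nhdsWithin_mono _ fun _ hu => ne_of_lt hu)
    (eventually_nhdsWithin_of_forall fun _ hu => not_not.1 (notMem_of_lt_csInf hu hbdd))
    (csInf_mem_closure ⟨u₀, hu₀⟩ hbdd)
  exact hfix.subset ⟨⟨hxγ, hγ⟩, hγA⟩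

lemma eq_of_commute_of_hasLeftSlope_eq (hα : 0 ≤ α) (hαβ : α < β) (hβ : β ≤ r)
    (hx : MemF r Λ A x) (hfix : fixSet x ∩ Ioo α β ∩ (A : Set ℝ) = ∅)
    (hy : MemFOn r Λ A (Ioo α β) y) (hxy : Commute x y)
    (hz : MemFOn r Λ A (Ioo α β) z) (hxz : Commute x z)
    (hys : HasLeftSlope y β s) (hzs : HasLeftSlope z β s) : y = z := by
  by_contra hne
  set D := {u | y u ≠ z u}
  obtain ⟨u₀, hu₀⟩ : D.Nonempty := by
    by_contra! h
    exact hne (Equiv.ext fun u => not_not.1 fun hu => h.subset hu)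
  have hDI : D ⊆ Ioo α β := hy.setOf_ne_subset hz
  have hDr : D ⊆ Ico 0 r := hDI.trans (Ioo_subset_Ico_self.trans (Ico_subset_Ico hα hβ))
  have hbdd : BddAbove D := ⟨β, fun u hu => (hDI hu).2.le⟩
  obtain ⟨a, haβ, hyz⟩ := mem_nhdsLT_iff_exists_Ioo_subset.1
    (hy.eventuallyEq_nhdsLT hz ⟨hα.trans_lt hαβ, hβ⟩ hys hzs)
  set γ := sSup D
  have hγ : γ ∈ Ioo α β := ⟨(hDI hu₀).1.trans_le (le_csSup hbdd hu₀),
    (csSup_le ⟨u₀, hu₀⟩ fun u hu => not_lt.1 fun hau => hu (hyz ⟨hau, (hDI hu).2⟩)).trans_lt haβ⟩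
  have hγr : γ ∈ Ico 0 r := ⟨hα.trans hγ.1.le, hγ.2.trans_le hβ⟩
  have hxγ : x γ = γ := by
    rw [(hx.2.1.monotoneOn.mono hDr).map_csSup_of_continuousWithinAt
      ((hx.2.2.1 γ hγr).mono hDr) ⟨u₀, hu₀⟩ hbdd, Equiv.Perm.image_setOf_ne_of_commute hxy hxz]
  have hγA : γ ∈ A := hy.1.mem_of_mem_closure_setOf_ne hz.1 hγr (l := 𝓝[>] γ)
    (nhdsWithin_mono _ fun _ hu => ne_of_gt hu)
    (eventually_nhdsWithin_of_forall fun _ hu => not_not.1 (notMem_of_csSup_lt hu hbdd))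
    (csSup_mem_closure ⟨u₀, hu₀⟩ hbdd)
  exact hfix.subset ⟨⟨hxγ, hγ⟩, hγA⟩

end MemFOn

theorem rightSlope_hom_injOn_centralizer_general
    (r : ℝ) (Λ : Subgroup PosReal)
    (A : AddSubgroup ℝ)
    (α β : ℝ) (hα : α ∈ Set.Icc (0 : ℝ) r)
    (hβ : β ∈ Set.Icc (0 : ℝ) r) (hαβ : α < β)
    (x : Equiv.Perm ℝ) (hx : MemFOn r Λ A (Set.Ioo α β) x)
    (hfix : fixSet x ∩ Set.Ioo α β ∩ (A : Set ℝ) = ∅) :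
    -- the right slope at `α`: well defined with values in `Λ`
    (∀ y : Equiv.Perm ℝ, MemFOn r Λ A (Set.Ioo α β) y →
      ∃ s : PosReal, s ∈ Λ ∧ HasRightSlope (⇑y) α (s : ℝ)) ∧
    -- multiplicativity (homomorphism property)
    (∀ y z : Equiv.Perm ℝ, MemFOn r Λ A (Set.Ioo α β) y → MemFOn r Λ A (Set.Ioo α β) z →
      ∀ s t : ℝ, HasRightSlope (⇑y) α s → HasRightSlope (⇑z) α t →
        HasRightSlope (⇑(y * z)) α (s * t)) ∧
    -- injectivity on the centralizer of `x`
    (∀ y z : Equiv.Perm ℝ,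
      MemFOn r Λ A (Set.Ioo α β) y → Commute x y →
      MemFOn r Λ A (Set.Ioo α β) z → Commute x z →
      ∀ s : ℝ, HasRightSlope (⇑y) α s → HasRightSlope (⇑z) α s → y = z) ∧
    -- the same three statements for the left slope at `β`
    (∀ y : Equiv.Perm ℝ, MemFOn r Λ A (Set.Ioo α β) y →
      ∃ s : PosReal, s ∈ Λ ∧ HasLeftSlope (⇑y) β (s : ℝ)) ∧
    (∀ y z : Equiv.Perm ℝ, MemFOn r Λ A (Set.Ioo α β) y → MemFOn r Λ A (Set.Ioo α β) z →
      ∀ s t : ℝ, HasLeftSlope (⇑y) β s → HasLeftSlope (⇑z) β t →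
        HasLeftSlope (⇑(y * z)) β (s * t)) ∧
    (∀ y z : Equiv.Perm ℝ,
      MemFOn r Λ A (Set.Ioo α β) y → Commute x y →
      MemFOn r Λ A (Set.Ioo α β) z → Commute x z →
      ∀ s : ℝ, HasLeftSlope (⇑y) β s → HasLeftSlope (⇑z) β s → y = z) := by
  have hα' : α ∈ Ico 0 r := ⟨hα.1, hαβ.trans_le hβ.2⟩
  have hβ' : β ∈ Ioc 0 r := ⟨hα.1.trans_lt hαβ, hβ.2⟩
  exact ⟨fun _ hy => hy.exists_hasRightSlope hα',
    fun _ _ hy hz _ _ => hy.hasRightSlope_mul hz hα',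
    fun _ _ hy hxy hz hxz _ =>
      eq_of_commute_of_hasRightSlope_eq hα.1 hαβ hβ.2 hx.1 hfix hy hxy hz hxz,
    fun _ hy => hy.exists_hasLeftSlope hβ',
    fun _ _ hy hz _ _ => hy.hasLeftSlope_mul hz hβ',
    fun _ _ hy hxy hz hxz _ =>
      eq_of_commute_of_hasLeftSlope_eq hα.1 hαβ hβ.2 hx.1 hfix hy hxy hz hxz⟩

/-- Let `α, β ∈ [0, r] ∩ A` with `α < β`, `I = (α, β)`, and let
`x ∈ F_I(r, Λ, A)` satisfy `fix(x) ∩ I ∩ A = ∅`.  Then the map `φ : F_I(r,Λ,A) → Λ`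
sending `y` to its right slope at `α` is a group homomorphism whose restriction to the
centralizer of `x` in `F_I(r,Λ,A)` is injective; and the same holds for the map sending
`y` to its left slope at `β`.  (Stated relationally: every element of `F_I` has a right
slope at `α` lying in `Λ`, slopes are multiplicative under composition, and two elements
of the centralizer with the same right slope at `α` are equal; likewise for left slopes
at `β`.) -/
theorem rightSlope_hom_injOn_centralizer
    (r : ℝ) (hr : 0 < r) (Λ : Subgroup PosReal) (hΛ : Λ ≠ ⊥)
    (A : AddSubgroup ℝ) (hrA : r ∈ A)
    (hΛA : ∀ s : PosReal, s ∈ Λ → ∀ a : ℝ, a ∈ A → (s : ℝ) * a ∈ A)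
    (α β : ℝ) (hα : α ∈ Set.Icc (0 : ℝ) r) (hαA : α ∈ A)
    (hβ : β ∈ Set.Icc (0 : ℝ) r) (hβA : β ∈ A) (hαβ : α < β)
    (x : Equiv.Perm ℝ) (hx : MemFOn r Λ A (Set.Ioo α β) x)
    (hfix : fixSet x ∩ Set.Ioo α β ∩ (A : Set ℝ) = ∅) :
    -- the right slope at `α`: well defined with values in `Λ`
    (∀ y : Equiv.Perm ℝ, MemFOn r Λ A (Set.Ioo α β) y →
      ∃ s : PosReal, s ∈ Λ ∧ HasRightSlope (⇑y) α (s : ℝ)) ∧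
    -- multiplicativity (homomorphism property)
    (∀ y z : Equiv.Perm ℝ, MemFOn r Λ A (Set.Ioo α β) y → MemFOn r Λ A (Set.Ioo α β) z →
      ∀ s t : ℝ, HasRightSlope (⇑y) α s → HasRightSlope (⇑z) α t →
        HasRightSlope (⇑(y * z)) α (s * t)) ∧
    -- injectivity on the centralizer of `x`
    (∀ y z : Equiv.Perm ℝ,
      MemFOn r Λ A (Set.Ioo α β) y → Commute x y →
      MemFOn r Λ A (Set.Ioo α β) z → Commute x z →
      ∀ s : ℝ, HasRightSlope (⇑y) α s → HasRightSlope (⇑z) α s → y = z) ∧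
    -- the same three statements for the left slope at `β`
    (∀ y : Equiv.Perm ℝ, MemFOn r Λ A (Set.Ioo α β) y →
      ∃ s : PosReal, s ∈ Λ ∧ HasLeftSlope (⇑y) β (s : ℝ)) ∧
    (∀ y z : Equiv.Perm ℝ, MemFOn r Λ A (Set.Ioo α β) y → MemFOn r Λ A (Set.Ioo α β) z →
      ∀ s t : ℝ, HasLeftSlope (⇑y) β s → HasLeftSlope (⇑z) β t →
        HasLeftSlope (⇑(y * z)) β (s * t)) ∧
    (∀ y z : Equiv.Perm ℝ,
      MemFOn r Λ A (Set.Ioo α β) y → Commute x y →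
      MemFOn r Λ A (Set.Ioo α β) z → Commute x z →
      ∀ s : ℝ, HasLeftSlope (⇑y) β s → HasLeftSlope (⇑z) β s → y = z) :=
  rightSlope_hom_injOn_centralizer_general r Λ A α β hα hβ hαβ x hx hfix

end ThompsonStein
end
end

section
/- Let a ∈ F(r,Λ,A) satisfy a(t) ≥ t for all t ∈ [0,r) and supp(a) = (0, r). Let α₀ ∈ (0, r) ∩ A and set α_k = a^k(α₀) for k ∈ ℤ, so α₁ = a(α₀). Let b, d ∈ F(r,Λ,A) with supp(b) = supp(d) = (α₀, α₁), and assume d generates the centralizer of b in the subgroup F_{(α₀,α₁)}(r,Λ,A). For k ∈ ℤ write c_k = a^k ∘ b ∘ a^{−k} and e_k = a^k ∘ d ∘ a^{−k}. Then the centralizer in F(r,Λ,A) of the set {c_k : k ∈ ℤ} is exactly the subgroup generated by {e_k : k ∈ ℤ}. -/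
open Set

noncomputable section

/-!
A `y` in `F(r, Λ, A)` commuting with every `c_k` maps `supp c_k = (α_k, α_{k+1})` onto itself, so
it fixes every `α_k`. Conjugating its restriction to `(α_k, α_{k+1})` by `a^k` back to `(α₀, α₁)`
gives an element of `F_{(α₀,α₁)}(r, Λ, A)` commuting with `b`, i.e. a power of `d`; so that
restriction is a power of `e_k`. As `α_k → 0` for `k → -∞` and `α_k → r` for `k → ∞` (a limit of
the orbit would be a fixed point of `a` inside `(0, r)`), `y` fixes points accumulating at both ends
of `[0, r]`; being affine near the ends, it is the identity there, hence a finite product of its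
restrictions to the intervals `(α_k, α_{k+1})`. Conversely `e_k` commutes with `c_k` because `d`
commutes with `b`, and with `c_j`, `j ≠ k`, because their supports are disjoint.
-/

namespace ThompsonStein

open Equiv Filter Topology

variable {r : ℝ} {Λ : Subgroup PosReal} {A : AddSubgroup ℝ}

lemma _root_.StrictMono.perm_inv {f : Perm ℝ} (hf : StrictMono f) : StrictMono ⇑f⁻¹ :=
  fun x y h => hf.lt_iff_lt.mp (by simpa using h)

lemma _root_.StrictMono.perm_continuous {f : Perm ℝ} (hf : StrictMono f) : Continuous f :=
  (hf.orderIsoOfSurjective f f.surjective).continuous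

lemma apply_mem_Ioo_iff {α β : Type*} [LinearOrder α] [Preorder β] {f : α → β}
    (hf : StrictMono f) {x u v : α} :
    f x ∈ Ioo (f u) (f v) ↔ x ∈ Ioo u v := by
  simp only [mem_Ioo, hf.lt_iff_lt]

lemma exists_castSucc_le_lt_succ {α : Type*} [LinearOrder α] {n : ℕ} {t : Fin (n + 1) → α}
    {u : α} (h0 : t 0 ≤ u)
    (hn : u < t (Fin.last n)) : ∃ i : Fin n, t i.castSucc ≤ u ∧ u < t i.succ := by
  by_contra! h
  have hle : ∀ i, t i ≤ u := Fin.induction h0 h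
  exact (hle (Fin.last n)).not_gt hn

lemma eq_self_of_affine {K : Type*} [Field K] {s c p q x : K} (hp : s * p + c = p)
    (hq : s * q + c = q) (hpq : p ≠ q) : s * x + c = x := by
  have h : (s - 1) * (p - q) = 0 := by linear_combination hp - hq
  obtain rfl : s = 1 := sub_eq_zero.mp ((mul_eq_zero.mp h).resolve_right (sub_ne_zero.mpr hpq))
  linear_combination hp

lemma exists_lt_iterate {X : Type*} [ConditionallyCompleteLinearOrder X] [TopologicalSpace X]
    [OrderTopology X] {g : X → X} (hc : Continuous g) (hm : Monotone g) {x p b : X} (hp : p < b)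
    (hlt : ∀ t ∈ Ico x b, t < g t) : ∃ n : ℕ, p < g^[n] x := by
  by_contra! h
  have hbdd : BddAbove (range fun n => g^[n] x) := ⟨p, forall_mem_range.2 h⟩
  have hL : Tendsto (fun n => g^[n] x) atTop (𝓝 (⨆ n, g^[n] x)) :=
    tendsto_atTop_ciSup (hm.monotone_iterate_of_le_map (hlt x ⟨le_rfl, (h 0).trans_lt hp⟩).le) hbdd
  have hfixed : g (⨆ n, g^[n] x) = ⨆ n, g^[n] x :=
    tendsto_nhds_unique ((hc.tendsto _).comp hL) <|
      (hL.comp (tendsto_add_atTop_nat 1)).congr fun n => Function.iterate_succ_apply' g n x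
  exact (hlt _ ⟨le_ciSup hbdd 0, (ciSup_le h).trans_lt hp⟩).ne' hfixed

lemma closure_subset_of_commute {M : Type*} [Group M] (G : Subgroup M) {c e : ℤ → M}
    (he : ∀ k, e k ∈ G) (hce : ∀ j k, Commute (c j) (e k)) :
    (Subgroup.closure (range e) : Set M) ⊆ {y | y ∈ G ∧ ∀ k, Commute (c k) y} := by
  intro y hy
  induction hy using Subgroup.closure_induction with
  | mem _ h =>
    obtain ⟨k, rfl⟩ := h
    exact ⟨he k, fun j => hce j k⟩
  | one => exact ⟨G.one_mem, fun _ => Commute.one_right _⟩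
  | mul _ _ _ _ h₁ h₂ => exact ⟨G.mul_mem h₁.1 h₂.1, fun k => (h₁.2 k).mul_right (h₂.2 k)⟩
  | inv _ _ h => exact ⟨G.inv_mem h.1, fun k => (h.2 k).inv_right⟩

/-- Piecewise affinity with breakpoints in the finite set `T`. Unlike the subdivision in `MemF`,
`T` need not be sorted and may be enlarged freely, which makes composition and inversion easy. -/
def PiecewiseAffine (Λ : Subgroup PosReal) (T : Finset ℝ) (f : ℝ → ℝ) : Prop :=
  ∀ u v : ℝ, (∀ t ∈ T, t ∉ Ioo u v) → ∃ s ∈ Λ, ∃ c : ℝ, ∀ x ∈ Icc u v, f x = s * x + c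

namespace PiecewiseAffine

variable {T S : Finset ℝ} {f g : Perm ℝ}

lemma mono (hf : PiecewiseAffine Λ T f) (hTS : T ⊆ S) : PiecewiseAffine Λ S f :=
  fun u v huv => hf u v fun t ht => huv t (hTS ht)

lemma one : PiecewiseAffine Λ ∅ (1 : Perm ℝ) :=
  fun _ _ _ => ⟨1, Λ.one_mem, 0, fun x _ => by simp⟩

lemma inv (hm : StrictMono f) (hf : PiecewiseAffine Λ T f) :
    PiecewiseAffine Λ (T.image f) ⇑f⁻¹ := by
  intro u v huv
  obtain ⟨s, hs, c, hc⟩ := hf (f⁻¹ u) (f⁻¹ v) fun t ht htuv =>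
    huv (f t) (Finset.mem_image_of_mem f ht) (by simpa using (apply_mem_Ioo_iff hm).mpr htuv)
  refine ⟨s⁻¹, inv_mem hs, -c / s, fun x hx => ?_⟩
  have hx' := hc (f⁻¹ x) ⟨hm.perm_inv.monotone hx.1, hm.perm_inv.monotone hx.2⟩
  simp only [Perm.coe_inv, apply_symm_apply] at hx'
  have hs0 : (s : ℝ) ≠ 0 := s.2.ne'
  rw [show ((s⁻¹ : PosReal) : ℝ) = (s : ℝ)⁻¹ from rfl, Perm.coe_inv]
  field_simp
  linarith

lemma mul (hgm : StrictMono g) (hf : PiecewiseAffine Λ T f) (hg : PiecewiseAffine Λ S g) :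
    PiecewiseAffine Λ (S ∪ T.image ⇑g⁻¹) ⇑(f * g) := by
  intro u v huv
  obtain ⟨s₁, hs₁, c₁, hc₁⟩ := hg u v fun t ht => huv t (Finset.mem_union_left _ ht)
  obtain ⟨s₂, hs₂, c₂, hc₂⟩ := hf (g u) (g v) fun t ht htuv =>
    huv (g⁻¹ t) (Finset.mem_union_right _ (Finset.mem_image_of_mem _ ht))
      ((apply_mem_Ioo_iff hgm).mp (by simpa using htuv))
  refine ⟨s₂ * s₁, mul_mem hs₂ hs₁, s₂ * c₁ + c₂, fun x hx => ?_⟩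
  rw [Perm.mul_apply, hc₂ _ ⟨hgm.monotone hx.1, hgm.monotone hx.2⟩, hc₁ x hx, Positive.val_mul]
  ring

lemma apply_mem
    (hΛA : ∀ s : PosReal, s ∈ Λ → ∀ a : ℝ, a ∈ A → (s : ℝ) * a ∈ A)
    (hf : PiecewiseAffine Λ T f) (hT : ∀ t ∈ T, t ∈ A ∧ f t ∈ A) {p x : ℝ} (hp : p ∈ T)
    (hpx : p ≤ x) (hx : x ∈ A) : f x ∈ A := by
  classical
  have hne : (T.filter (· ≤ x)).Nonempty := ⟨p, Finset.mem_filter.mpr ⟨hp, hpx⟩⟩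
  obtain ⟨hqT, hqx⟩ := Finset.mem_filter.mp (Finset.max'_mem _ hne)
  set q := (T.filter (· ≤ x)).max' hne
  obtain ⟨s, hs, c, hc⟩ := hf q x fun t ht htx =>
    htx.1.not_ge (Finset.le_max' _ t (Finset.mem_filter.mpr ⟨ht, htx.2.le⟩))
  have hfx : f x = s * (x - q) + f q := by
    rw [hc x ⟨hqx, le_rfl⟩, hc q ⟨le_rfl, hqx⟩]; ring
  rw [hfx]
  exact add_mem (hΛA s hs _ (sub_mem hx (hT q hqT).1)) (hT q hqT).2

end PiecewiseAffine

section MemF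

variable {f g : Perm ℝ}

lemma apply_zero_of_fixes (hfix : ∀ t, t ∉ Ico 0 r → f t = t) (hm : StrictMono f) : f 0 = 0 := by
  obtain ⟨s, hs⟩ := f.surjective 0
  have hs0 : 0 ≤ s := by
    by_contra! h
    rw [hfix s fun h' => h.not_ge h'.1] at hs
    exact h.ne hs
  have hf0 : 0 ≤ f 0 := by
    by_contra! h
    exact h.ne (f.injective (hfix _ fun h' => h.not_ge h'.1))
  exact le_antisymm (by simpa [hs] using hm.monotone hs0) hf0

lemma strictMono_of_fixes (hfix : ∀ t, t ∉ Ico 0 r → f t = t)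
    (hm : StrictMonoOn f (Ico 0 r)) : StrictMono f := by
  have hmaps : ∀ t ∈ Ico 0 r, f t ∈ Ico 0 r := fun t ht => by
    by_contra h
    exact h (by rwa [f.injective (hfix _ h)])
  intro x y hxy
  by_cases hx : x ∈ Ico 0 r <;> by_cases hy : y ∈ Ico 0 r
  · exact hm hx hy hxy
  · rw [hfix y hy]
    exact (hmaps x hx).2.trans_le (le_of_not_gt fun h => hy ⟨hx.1.trans hxy.le, h⟩)
  · rw [hfix x hx]
    exact (lt_of_not_ge fun h => hx ⟨h, hxy.trans hy.2⟩).trans_le (hmaps y hy).1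
  · rw [hfix x hx, hfix y hy]
    exact hxy

lemma MemF.strictMono (hf : MemF r Λ A f) : StrictMono f :=
  strictMono_of_fixes hf.1 hf.2.1

lemma MemF.apply_zero (hf : MemF r Λ A f) : f 0 = 0 :=
  apply_zero_of_fixes hf.1 hf.strictMono

lemma MemF.apply_mem_Ioo (hf : MemF r Λ A f) {x : ℝ} (hx : x ∈ Ioo 0 r) : f x ∈ Ioo 0 r := by
  have hr : f r = r := hf.1 r fun h => h.2.false
  simpa only [hf.apply_zero, hr] using (apply_mem_Ioo_iff hf.strictMono).mpr hx

lemma MemF.apply_eq_self (hf : MemF r Λ A f) {x : ℝ} (hx : x ∉ Ioo 0 r) : f x = x := by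
  rcases eq_or_ne x 0 with rfl | hx0
  · exact hf.apply_zero
  · exact hf.1 x fun h => hx ⟨lt_of_le_of_ne h.1 hx0.symm, h.2⟩

lemma MemF.exists_piecewiseAffine (hf : MemF r Λ A f) :
    ∃ T : Finset ℝ, (∀ t ∈ T, t ∈ A ∧ f t ∈ A) ∧ PiecewiseAffine Λ T f := by
  classical
  obtain ⟨-, -, -, n, t, -, ht0, htn, htA, hftA, haff⟩ := id hf
  refine ⟨Finset.univ.image t, by simpa using fun i => ⟨htA i, hftA i⟩, fun u v huv => ?_⟩
  have hT : ∀ i, t i ∉ Ioo u v := fun i => huv _ (Finset.mem_image_of_mem t (Finset.mem_univ i))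
  by_cases hid : v ≤ 0 ∨ r ≤ u
  · refine ⟨1, Λ.one_mem, 0, fun x hx => ?_⟩
    rw [hf.apply_eq_self fun h => ?_]
    · simp
    rcases hid with h' | h'
    exacts [(hx.2.trans h').not_gt h.1, (h'.trans hx.1).not_gt h.2]
  push Not at hid
  have hu0 : 0 ≤ u := le_of_not_gt fun h => hT 0 (ht0 ▸ ⟨h, hid.1⟩)
  obtain ⟨i, hiu, hui⟩ := exists_castSucc_le_lt_succ (ht0 ▸ hu0) (htn ▸ hid.2)
  have hvi : v ≤ t i.succ := le_of_not_gt fun h => hT _ ⟨hui, h⟩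
  obtain ⟨s, hs, c, hc⟩ := haff i
  exact ⟨s, hs, c, fun x hx => hc x ⟨hiu.trans hx.1, hx.2.trans hvi⟩⟩

lemma memF_of_piecewiseAffine (hr : 0 ≤ r) (hrA : r ∈ A) (hfix : ∀ t, t ∉ Ico 0 r → f t = t)
    (hm : StrictMono f) {T : Finset ℝ} (hT : ∀ t ∈ T, t ∈ A ∧ f t ∈ A)
    (hf : PiecewiseAffine Λ T f) : MemF r Λ A f := by
  classical
  have hf0 := apply_zero_of_fixes hfix hm
  have hfr : f r = r := hfix r fun h => h.2.false
  -- sorted, `S` is the subdivision `0 = t 0 < ⋯ < t n = r` required by `MemF`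
  set S := (insert 0 (insert r T)).filter (· ∈ Icc 0 r)
  have hS : ∀ x ∈ S, x ∈ Icc 0 r ∧ x ∈ A ∧ f x ∈ A := by
    intro x hx
    obtain ⟨hx, hxI⟩ := Finset.mem_filter.mp hx
    rcases Finset.mem_insert.mp hx with rfl | hx
    · simp [hf0, hr]
    rcases Finset.mem_insert.mp hx with rfl | hx
    · simp [hfr, hrA, hr]
    · exact ⟨hxI, hT x hx⟩
  have h0S : 0 ∈ S := by simp [S, hr]
  have hrS : r ∈ S := by simp [S, hr]
  obtain ⟨n, hn⟩ : ∃ n, S.card = n + 1 :=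
    Nat.exists_eq_succ_of_ne_zero (Finset.card_ne_zero_of_mem h0S)
  set t := S.orderEmbOfFin hn
  have htS : ∀ i, t i ∈ S := S.orderEmbOfFin_mem hn
  have hSt : ∀ x ∈ S, ∃ i, t i = x := fun x hx => by
    rw [← Set.mem_range, S.range_orderEmbOfFin hn]; exact hx
  refine ⟨hfix, hm.strictMonoOn _, hm.perm_continuous.continuousOn, n, t, t.strictMono, ?_, ?_,
    fun i => (hS _ (htS i)).2.1, fun i => (hS _ (htS i)).2.2, fun i => hf _ _ fun w hw hwi => ?_⟩
  · obtain ⟨i, hi⟩ := hSt 0 h0S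
    exact le_antisymm (hi ▸ t.monotone (Fin.zero_le i)) (hS _ (htS 0)).1.1
  · obtain ⟨i, hi⟩ := hSt r hrS
    exact le_antisymm (hS _ (htS _)).1.2 (hi ▸ t.monotone (Fin.le_last i))
  · have hwS : w ∈ S := Finset.mem_filter.mpr ⟨by simp [hw],
      (hS _ (htS _)).1.1.trans hwi.1.le, hwi.2.le.trans (hS _ (htS _)).1.2⟩
    obtain ⟨j, rfl⟩ := hSt w hwS
    exact (Fin.castSucc_lt_iff_succ_le.mp (t.lt_iff_lt.mp hwi.1)).not_gt (t.lt_iff_lt.mp hwi.2)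

lemma MemF.apply_mem (hΛA : ∀ s : PosReal, s ∈ Λ → ∀ a : ℝ, a ∈ A → (s : ℝ) * a ∈ A)
    (hf : MemF r Λ A f) {x : ℝ} (hx : x ∈ A) : f x ∈ A := by
  by_cases hx0 : 0 ≤ x
  · obtain ⟨T, hT, hPA⟩ := hf.exists_piecewiseAffine
    refine (hPA.mono (Finset.subset_insert 0 T)).apply_mem hΛA ?_ (Finset.mem_insert_self 0 T)
      hx0 hx
    simpa [hf.apply_zero] using hT
  · rwa [hf.1 x fun h => hx0 h.1]

lemma MemF.inv (hr : 0 ≤ r) (hrA : r ∈ A) (hf : MemF r Λ A f) : MemF r Λ A f⁻¹ := by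
  obtain ⟨T, hT, hPA⟩ := hf.exists_piecewiseAffine
  refine memF_of_piecewiseAffine hr hrA (fun t ht => Perm.inv_eq_iff_eq.mpr (hf.1 t ht).symm)
    hf.strictMono.perm_inv (fun x hx => ?_) (hPA.inv hf.strictMono)
  obtain ⟨t, ht, rfl⟩ := Finset.mem_image.mp hx
  simpa using (hT t ht).symm

lemma MemF.mul (hr : 0 ≤ r) (hrA : r ∈ A)
    (hΛA : ∀ s : PosReal, s ∈ Λ → ∀ a : ℝ, a ∈ A → (s : ℝ) * a ∈ A)
    (hf : MemF r Λ A f) (hg : MemF r Λ A g) : MemF r Λ A (f * g) := by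
  obtain ⟨T, hT, hPAf⟩ := hf.exists_piecewiseAffine
  obtain ⟨S, hS, hPAg⟩ := hg.exists_piecewiseAffine
  refine memF_of_piecewiseAffine hr hrA (fun t ht => by rw [Perm.mul_apply, hg.1 t ht, hf.1 t ht])
    (hf.strictMono.comp hg.strictMono) (fun x hx => ?_) (hPAf.mul hg.strictMono hPAg)
  rcases Finset.mem_union.mp hx with hx | hx
  · exact ⟨(hS x hx).1, hf.apply_mem hΛA (hS x hx).2⟩
  · obtain ⟨t, ht, rfl⟩ := Finset.mem_image.mp hx
    exact ⟨(hg.inv hr hrA).apply_mem hΛA (hT t ht).1, by simpa using (hT t ht).2⟩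

lemma memF_one (hr : 0 ≤ r) (hrA : r ∈ A) : MemF r Λ A 1 :=
  memF_of_piecewiseAffine hr hrA (fun _ _ => rfl) strictMono_id (T := ∅) (by simp)
    PiecewiseAffine.one

lemma MemF.exists_affine_Icc_zero (hr : 0 < r) (hf : MemF r Λ A f) :
    ∃ ε > 0, ∃ s c : ℝ, ∀ x ∈ Icc 0 ε, f x = s * x + c := by
  obtain ⟨-, -, -, n, t, htm, ht0, htn, -, -, haff⟩ := hf
  obtain ⟨m, rfl⟩ : ∃ m, n = m + 1 :=
    Nat.exists_eq_succ_of_ne_zero fun hn => hr.ne (by subst hn; exact ht0.symm.trans htn)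
  obtain ⟨s, -, c, hc⟩ := haff 0
  exact ⟨t 1, ht0 ▸ htm Fin.zero_lt_one, s, c, fun x hx => hc x (by simpa [ht0] using hx)⟩

lemma MemF.exists_affine_Icc_r (hr : 0 < r) (hf : MemF r Λ A f) :
    ∃ ε < r, ∃ s c : ℝ, ∀ x ∈ Icc ε r, f x = s * x + c := by
  obtain ⟨-, -, -, n, t, htm, ht0, htn, -, -, haff⟩ := hf
  obtain ⟨m, rfl⟩ : ∃ m, n = m + 1 :=
    Nat.exists_eq_succ_of_ne_zero fun hn => hr.ne (by subst hn; exact ht0.symm.trans htn)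
  obtain ⟨s, -, c, hc⟩ := haff (Fin.last m)
  exact ⟨t (Fin.last m).castSucc, htn ▸ htm (Fin.castSucc_lt_last _), s, c,
    fun x hx => hc x (by simpa [htn] using hx)⟩

lemma MemF.exists_eqOn_Icc_zero (hr : 0 < r) (hf : MemF r Λ A f)
    (hacc : ∀ ε > 0, ∃ x ∈ Ioo 0 ε, f x = x) : ∃ δ > 0, ∀ x ∈ Icc 0 δ, f x = x := by
  obtain ⟨ε, hε, s, c, hc⟩ := hf.exists_affine_Icc_zero hr
  obtain ⟨x₁, hx₁, hfx₁⟩ := hacc ε hε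
  have h0 : s * 0 + c = 0 := by rw [← hc 0 ⟨le_rfl, hε.le⟩, hf.apply_zero]
  have h1 : s * x₁ + c = x₁ := by rw [← hc x₁ (Ioo_subset_Icc_self hx₁), hfx₁]
  exact ⟨ε, hε, fun x hx => (hc x hx).trans (eq_self_of_affine h0 h1 hx₁.1.ne)⟩

lemma MemF.exists_eqOn_Icc_r (hr : 0 < r) (hf : MemF r Λ A f)
    (hacc : ∀ ε < r, ∃ x ∈ Ioo ε r, f x = x) : ∃ δ < r, ∀ x ∈ Icc δ r, f x = x := by
  obtain ⟨ε, hε, s, c, hc⟩ := hf.exists_affine_Icc_r hr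
  obtain ⟨x₁, hx₁, hfx₁⟩ := hacc ε hε
  have h0 : s * r + c = r := by rw [← hc r ⟨hε.le, le_rfl⟩, hf.1 r fun h => h.2.false]
  have h1 : s * x₁ + c = x₁ := by rw [← hc x₁ (Ioo_subset_Icc_self hx₁), hfx₁]
  exact ⟨ε, hε, fun x hx => (hc x hx).trans (eq_self_of_affine h0 h1 hx₁.2.ne')⟩

end MemF

/-- The Stein–Thompson group `F(r, Λ, A)`. -/
def steinThompson (r : ℝ) (Λ : Subgroup PosReal) (A : AddSubgroup ℝ) (hr : 0 ≤ r) (hrA : r ∈ A)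
    (hΛA : ∀ s : PosReal, s ∈ Λ → ∀ a : ℝ, a ∈ A → (s : ℝ) * a ∈ A) : Subgroup (Perm ℝ) where
  carrier := {f | MemF r Λ A f}
  mul_mem' := MemF.mul hr hrA hΛA
  one_mem' := memF_one hr hrA
  inv_mem' := MemF.inv hr hrA

section Support

lemma supp_conj (f g : Perm ℝ) : supp (g * f * g⁻¹) = g '' supp f := by
  ext x
  rw [Equiv.image_eq_preimage_symm]
  simp [supp, Perm.mul_apply, ← Equiv.eq_symm_apply]

lemma image_Ioo_of_strictMono {g : Perm ℝ} (hg : StrictMono g) (p q : ℝ) :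
    g '' Ioo p q = Ioo (g p) (g q) :=
  (hg.orderIsoOfSurjective g g.surjective).image_Ioo p q

lemma fixes_endpoints_of_commute {c y : Perm ℝ} (hy : StrictMono y) {p q : ℝ} (hpq : p < q)
    (hc : supp c = Ioo p q) (h : Commute c y) : y p = p ∧ y q = q := by
  have hI : Ioo (y p) (y q) = Ioo p q := by
    rw [← image_Ioo_of_strictMono hy, ← hc, ← supp_conj, ← h.eq, mul_inv_cancel_right]
  exact ⟨by rw [← csInf_Ioo (hy hpq), hI, csInf_Ioo hpq],
    by rw [← csSup_Ioo (hy hpq), hI, csSup_Ioo hpq]⟩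

lemma apply_mem_iff_of_supp_subset {c : Perm ℝ} {S : Set ℝ} (hc : supp c ⊆ S) (x : ℝ) :
    c x ∈ S ↔ x ∈ S := by
  by_cases hx : c x = x
  · rw [hx]
  · exact iff_of_true (hc fun h => hx (c.injective h)) (hc hx)

lemma commute_of_disjoint_supp {f g : Perm ℝ} (h : Disjoint (supp f) (supp g)) : Commute f g :=
  Perm.Disjoint.commute fun _ => or_iff_not_imp_left.mpr fun hx =>
    not_not.mp (disjoint_left.mp h hx)

end Support

section Restriction

lemma apply_mem_Ioo_iff_of_fixed {f : Perm ℝ} (hm : StrictMono f) {p q : ℝ} (hp : f p = p)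
    (hq : f q = q) (x : ℝ) : f x ∈ Ioo p q ↔ x ∈ Ioo p q := by
  simpa only [hp, hq] using apply_mem_Ioo_iff hm (x := x) (u := p) (v := q)

def restrictIoo (f : Perm ℝ) (hm : StrictMono f) {p q : ℝ} (hp : f p = p) (hq : f q = q) :
    Perm ℝ :=
  Perm.ofSubtype (f.subtypePerm (apply_mem_Ioo_iff_of_fixed hm hp hq))

variable {f : Perm ℝ} {p q : ℝ} (hm : StrictMono f) (hp : f p = p) (hq : f q = q)

lemma restrictIoo_apply (x : ℝ) :
    restrictIoo f hm hp hq x = if x ∈ Ioo p q then f x else x := by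
  split_ifs with hx
  · exact Perm.ofSubtype_apply_of_mem _ hx
  · exact Perm.ofSubtype_apply_of_not_mem _ hx

lemma supp_restrictIoo_subset : supp (restrictIoo f hm hp hq) ⊆ Ioo p q := fun x hx => by
  by_contra h
  exact hx (by rw [restrictIoo_apply, if_neg h])

lemma restrictIoo_eq_self (h : ∀ x ∉ Ioo p q, f x = x) : restrictIoo f hm hp hq = f :=
  Perm.ofSubtype_subtypePerm _ fun x hx => by_contra fun h' => hx (h x h')

lemma restrictIoo_eqOn_Icc {x : ℝ} (hx : x ∈ Icc p q) : restrictIoo f hm hp hq x = f x := by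
  rw [restrictIoo_apply]
  split_ifs with h
  · rfl
  rcases hx.1.eq_or_lt with rfl | h1
  · exact hp.symm
  rcases hx.2.eq_or_lt with rfl | h2
  · exact hq.symm
  exact absurd ⟨h1, h2⟩ h

lemma restrictIoo_self : restrictIoo f hm hp hp = 1 := by
  ext x
  simp [restrictIoo_apply]

lemma restrictIoo_mul_restrictIoo {s : ℝ} (hs : f s = s) (hpq : p ≤ q) (hqs : q ≤ s) :
    restrictIoo f hm hp hq * restrictIoo f hm hq hs = restrictIoo f hm hp hs := by
  ext x
  have hfx := apply_mem_Ioo_iff_of_fixed hm hq hs x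
  simp only [Perm.mul_apply, restrictIoo_apply]
  split_ifs <;> grind

lemma strictMono_restrictIoo : StrictMono (restrictIoo f hm hp hq) := by
  intro x y hxy
  simp only [restrictIoo_apply]
  split_ifs with hx hy hy
  · exact hm hxy
  · exact (hm hx.2).trans_le (by rw [hq]; exact le_of_not_gt fun h => hy ⟨hx.1.trans hxy, h⟩)
  · exact (le_of_not_gt fun h => hx ⟨h, hxy.trans hy.2⟩).trans_lt (by rw [← hp]; exact hm hy.1)
  · exact hxy

lemma commute_restrictIoo {c : Perm ℝ} (hc : supp c ⊆ Ioo p q) (h : Commute c f) :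
    Commute c (restrictIoo f hm hp hq) := by
  rw [← Perm.ofSubtype_subtypePerm (apply_mem_iff_of_supp_subset hc) fun x hx => hc hx]
  refine Commute.map ?_ Perm.ofSubtype
  ext x
  exact Perm.congr_fun h.eq x

end Restriction

lemma memF_restrictIoo (hr : 0 ≤ r) (hrA : r ∈ A)
    (hΛA : ∀ s : PosReal, s ∈ Λ → ∀ a : ℝ, a ∈ A → (s : ℝ) * a ∈ A)
    {f : Perm ℝ} (hf : MemF r Λ A f) {p q : ℝ} (hp : f p = p) (hq : f q = q) (hpA : p ∈ A)
    (hqA : q ∈ A) : MemF r Λ A (restrictIoo f hf.strictMono hp hq) := by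
  classical
  obtain ⟨T, hT, hPA⟩ := hf.exists_piecewiseAffine
  have happ := restrictIoo_apply hf.strictMono hp hq
  refine memF_of_piecewiseAffine hr hrA (fun t ht => ?_) (strictMono_restrictIoo _ hp hq)
    (T := insert p (insert q T)) (fun t ht => ?_) (fun u v huv => ?_)
  · rw [happ]
    split_ifs
    exacts [hf.1 t ht, rfl]
  · have htA : t ∈ A := by
      rcases Finset.mem_insert.mp ht with rfl | ht
      · exact hpA
      rcases Finset.mem_insert.mp ht with rfl | ht
      exacts [hqA, (hT t ht).1]
    rw [happ]
    split_ifs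
    exacts [⟨htA, hf.apply_mem hΛA htA⟩, ⟨htA, htA⟩]
  by_cases hin : p ≤ u ∧ v ≤ q
  · obtain ⟨s, hs, c, hc⟩ := hPA u v fun t ht => huv t (by simp [ht])
    exact ⟨s, hs, c, fun x hx =>
      (restrictIoo_eqOn_Icc _ hp hq ⟨hin.1.trans hx.1, hx.2.trans hin.2⟩).trans (hc x hx)⟩
  · refine ⟨1, Λ.one_mem, 0, fun x hx => ?_⟩
    have hpuv := huv p (by simp)
    have hquv := huv q (by simp)
    rw [happ, if_neg fun hxI => hin ⟨?_, ?_⟩]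
    · simp
    · exact le_of_not_gt fun h => hpuv ⟨h, hxI.1.trans_le hx.2⟩
    · exact le_of_not_gt fun h => hquv ⟨hx.1.trans_lt hxI.2, h⟩

lemma restrictIoo_mem_of_forall_succ_mem {H : Subgroup (Perm ℝ)} {y : Perm ℝ} (hy : StrictMono y)
    {α : ℤ → ℝ} (hα : Monotone α) (hfix : ∀ k, y (α k) = α k)
    (hstep : ∀ m, restrictIoo y hy (hfix m) (hfix (m + 1)) ∈ H) {lo hi : ℤ} (hle : lo ≤ hi) :
    restrictIoo y hy (hfix lo) (hfix hi) ∈ H := by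
  induction hi, hle using Int.leInduction with
  | base => rw [restrictIoo_self]; exact H.one_mem
  | succ n hn ih =>
    rw [← restrictIoo_mul_restrictIoo hy (hfix lo) (hfix n) (hfix (n + 1)) (hα hn)
      (hα (Int.le_add_one le_rfl))]
    exact H.mul_mem ih (hstep n)

section Orbit

variable {a : Perm ℝ} {x : ℝ}

lemma strictMono_zpow_apply (hpow : ∀ k : ℤ, StrictMono ⇑(a ^ k)) (hx : x < a x) :
    StrictMono fun k : ℤ => (a ^ k) x :=
  strictMono_int_of_lt_succ fun k => by simpa only [zpow_add_one, Perm.mul_apply] using hpow k hx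

lemma exists_lt_zpow_apply (hm : StrictMono a) (hlt : ∀ t ∈ Ioo 0 r, t < a t) (hx : 0 < x)
    {p : ℝ} (hp : p < r) : ∃ k : ℤ, p < (a ^ k) x := by
  obtain ⟨n, hn⟩ := exists_lt_iterate hm.perm_continuous hm.monotone hp fun t ht =>
    hlt t ⟨hx.trans_le ht.1, ht.2⟩
  exact ⟨n, by rwa [zpow_natCast, ← Perm.iterate_eq_pow]⟩

lemma exists_zpow_apply_lt (hm : StrictMono a) (hlt : ∀ t ∈ Ioo 0 r, t < a t) (hx : x < r)
    {q : ℝ} (hq : 0 < q) : ∃ k : ℤ, (a ^ k) x < q := by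
  have hinv : ∀ t ∈ Ioo 0 r, a⁻¹ t < t := fun t ht => hm.lt_iff_lt.mp (by simpa using hlt t ht)
  -- the backward orbit of `a` is the forward orbit of `a⁻¹` in the order dual
  obtain ⟨n, hn⟩ := exists_lt_iterate (X := ℝᵒᵈ) (g := ⇑a⁻¹) (x := x) (p := q) (b := 0)
    hm.perm_inv.perm_continuous (fun s t h => hm.perm_inv.monotone h) hq
    fun t ht => hinv t ⟨ht.2, (show OrderDual.ofDual t ≤ x from ht.1).trans_lt hx⟩
  exact ⟨-n, by rwa [zpow_neg, zpow_natCast, ← inv_pow, ← Perm.iterate_eq_pow]⟩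

end Orbit

lemma MemF.exists_eq_self_of_notMem_Ioo (hr : 0 < r) {y : Perm ℝ} (hy : MemF r Λ A y)
    {α : ℤ → ℝ} (hα : Monotone α) (hfix : ∀ k, y (α k) = α k) (hαmem : ∀ k, α k ∈ Ioo 0 r)
    (hlow : ∀ q > 0, ∃ k, α k < q) (hhigh : ∀ p < r, ∃ k, p < α k) :
    ∃ lo hi : ℤ, lo ≤ hi ∧ ∀ x ∉ Ioo (α lo) (α hi), y x = x := by
  obtain ⟨δ₀, hδ₀, h₀⟩ := hy.exists_eqOn_Icc_zero hr fun ε hε => by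
    obtain ⟨k, hk⟩ := hlow ε hε
    exact ⟨α k, ⟨(hαmem k).1, hk⟩, hfix k⟩
  obtain ⟨δ₁, hδ₁, h₁⟩ := hy.exists_eqOn_Icc_r hr fun ε hε => by
    obtain ⟨k, hk⟩ := hhigh ε hε
    exact ⟨α k, ⟨hk, (hαmem k).2⟩, hfix k⟩
  obtain ⟨lo, hlo⟩ := hlow δ₀ hδ₀
  obtain ⟨hi, hhi⟩ := hhigh δ₁ hδ₁
  refine ⟨lo, max lo hi, le_max_left _ _, fun x hx => ?_⟩
  by_cases hx0 : x ∈ Ioo 0 r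
  · rcases le_or_gt x (α lo) with h | h
    · exact h₀ x ⟨hx0.1.le, h.trans hlo.le⟩
    · refine h₁ x ⟨hhi.le.trans ((hα (le_max_right lo hi)).trans ?_), hx0.2.le⟩
      exact le_of_not_gt fun h' => hx ⟨h, h'⟩
  · exact hy.apply_eq_self hx0

lemma MemF.mem_of_restrictIoo_mem (hr : 0 < r) {y : Perm ℝ} (hy : MemF r Λ A y)
    {α : ℤ → ℝ} (hα : Monotone α) (hfix : ∀ k, y (α k) = α k) (hαmem : ∀ k, α k ∈ Ioo 0 r)
    (hlow : ∀ q > 0, ∃ k, α k < q) (hhigh : ∀ p < r, ∃ k, p < α k) {H : Subgroup (Perm ℝ)}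
    (hstep : ∀ m, restrictIoo y hy.strictMono (hfix m) (hfix (m + 1)) ∈ H) : y ∈ H := by
  obtain ⟨lo, hi, hle, hid⟩ := hy.exists_eq_self_of_notMem_Ioo hr hα hfix hαmem hlow hhigh
  rw [← restrictIoo_eq_self hy.strictMono (hfix lo) (hfix hi) hid]
  exact restrictIoo_mem_of_forall_succ_mem hy.strictMono hα hfix hstep hle

lemma exists_restrictIoo_eq_conj_zpow (hr : 0 ≤ r) (hrA : r ∈ A)
    (hΛA : ∀ s : PosReal, s ∈ Λ → ∀ a : ℝ, a ∈ A → (s : ℝ) * a ∈ A)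
    {p q p' q' : ℝ} {b d g y : Perm ℝ}
    (hdgen : ∀ z, MemFOn r Λ A (Ioo p q) z → Commute b z → ∃ n : ℤ, z = d ^ n)
    (hbsupp : supp b = Ioo p q) (hpA : p ∈ A) (hqA : q ∈ A) (hg : MemF r Λ A g)
    (hy : MemF r Λ A y) (hc : Commute (g * b * g⁻¹) y) (hgp : g p = p') (hgq : g q = q')
    (hp : y p' = p') (hq : y q' = q') :
    ∃ n : ℤ, restrictIoo y hy.strictMono hp hq = g * d ^ n * g⁻¹ := by
  subst hgp hgq
  set z := restrictIoo y hy.strictMono hp hq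
  have hz : MemF r Λ A z :=
    memF_restrictIoo hr hrA hΛA hy hp hq (hg.apply_mem hΛA hpA) (hg.apply_mem hΛA hqA)
  have hw : MemF r Λ A (g⁻¹ * z * g) := ((hg.inv hr hrA).mul hr hrA hΛA hz).mul hr hrA hΛA hg
  have hwsupp : supp (g⁻¹ * z * g) ⊆ Ioo p q := by
    have h := supp_conj z g⁻¹
    rw [inv_inv] at h
    rw [h]
    calc ⇑g⁻¹ '' supp z ⊆ ⇑g⁻¹ '' Ioo (g p) (g q) := image_mono (supp_restrictIoo_subset ..)
      _ = Ioo p q := by rw [image_Ioo_of_strictMono hg.strictMono.perm_inv]; simp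
  have hbw : Commute b (g⁻¹ * z * g) := by
    have h := commute_restrictIoo hy.strictMono hp hq
      (by rw [supp_conj, hbsupp, image_Ioo_of_strictMono hg.strictMono]) hc
    have hconj : g * (g⁻¹ * z * g) * g⁻¹ = z := by group
    exact (Commute.conj_iff g).mp (by rwa [hconj])
  obtain ⟨n, hn⟩ := hdgen _ ⟨hw, hwsupp⟩ hbw
  exact ⟨n, by rw [← hn]; group⟩

lemma commute_conj_conj {a b d : Perm ℝ} {α : ℤ → ℝ} (hα : Monotone α) (hbd : Commute b d)
    (hb : ∀ k : ℤ, supp (a ^ k * b * (a ^ k)⁻¹) ⊆ Ioo (α k) (α (k + 1)))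
    (hd : ∀ k : ℤ, supp (a ^ k * d * (a ^ k)⁻¹) ⊆ Ioo (α k) (α (k + 1))) (j k : ℤ) :
    Commute (a ^ j * b * (a ^ j)⁻¹) (a ^ k * d * (a ^ k)⁻¹) := by
  rcases eq_or_ne j k with rfl | hjk
  · exact (Commute.conj_iff _).mpr hbd
  · have h := hα.pairwise_disjoint_on_Ioo_succ hjk
    simp only [Function.onFun, Order.succ_eq_add_one] at h
    exact commute_of_disjoint_supp (h.mono (hb j) (hd k))

theorem centralizer_of_conjugates_eq_closure_of_conjugates_general
    (r : ℝ) (hr : 0 < r) (Λ : Subgroup PosReal)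
    (A : AddSubgroup ℝ) (hrA : r ∈ A)
    (hΛA : ∀ s : PosReal, s ∈ Λ → ∀ a : ℝ, a ∈ A → (s : ℝ) * a ∈ A)
    (a : Equiv.Perm ℝ) (ha : MemF r Λ A a)
    (haid : ∀ t ∈ Set.Ico (0 : ℝ) r, t ≤ a t)
    (hasupp : supp a = Set.Ioo 0 r)
    (α₀ : ℝ) (hα₀ : α₀ ∈ Set.Ioo (0 : ℝ) r) (hα₀A : α₀ ∈ A)
    (b d : Equiv.Perm ℝ)
    (hbsupp : supp b = Set.Ioo α₀ (a α₀))
    (hdgen : {y : Equiv.Perm ℝ | MemFOn r Λ A (Set.Ioo α₀ (a α₀)) y ∧ Commute b y}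
      = {y : Equiv.Perm ℝ | ∃ n : ℤ, y = d ^ n}) :
    {y : Equiv.Perm ℝ | MemF r Λ A y ∧ ∀ k : ℤ, Commute (a ^ k * b * (a ^ k)⁻¹) y}
      = ((Subgroup.closure (Set.range fun k : ℤ => a ^ k * d * (a ^ k)⁻¹) :
          Subgroup (Equiv.Perm ℝ)) : Set (Equiv.Perm ℝ)) := by
  set G := steinThompson r Λ A hr.le hrA hΛA
  have hpow : ∀ k : ℤ, MemF r Λ A (a ^ k) := G.zpow_mem ha
  have hlt : ∀ t ∈ Ioo 0 r, t < a t := fun t ht =>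
    (haid t (Ioo_subset_Ico_self ht)).lt_of_ne' (show t ∈ supp a from hasupp ▸ ht)
  set α : ℤ → ℝ := fun k => (a ^ k) α₀
  have hα : StrictMono α := strictMono_zpow_apply (fun k => (hpow k).strictMono) (hlt α₀ hα₀)
  have hsucc : ∀ k : ℤ, (a ^ k) (a α₀) = α (k + 1) := fun k => by
    simp only [α, zpow_add_one, Perm.mul_apply]
  have hIoo : ∀ k : ℤ, ⇑(a ^ k) '' Ioo α₀ (a α₀) = Ioo (α k) (α (k + 1)) := fun k => by
    rw [image_Ioo_of_strictMono (hpow k).strictMono, hsucc]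
  have hsuppc : ∀ k : ℤ, supp (a ^ k * b * (a ^ k)⁻¹) = Ioo (α k) (α (k + 1)) := fun k => by
    rw [supp_conj, hbsupp, hIoo]
  obtain ⟨⟨hd, hdsupp⟩, hbd⟩ :=
    hdgen.superset (show d ∈ {y : Perm ℝ | ∃ n : ℤ, y = d ^ n} from ⟨1, (zpow_one d).symm⟩)
  apply Subset.antisymm
  · rintro y ⟨hy, hyc⟩
    have hyα : ∀ k, y (α k) = α k := fun k =>
      (fixes_endpoints_of_commute hy.strictMono (hα (lt_add_one k)) (hsuppc k) (hyc k)).1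
    refine hy.mem_of_restrictIoo_mem hr hα.monotone hyα (fun k => (hpow k).apply_mem_Ioo hα₀)
      (fun q => exists_zpow_apply_lt ha.strictMono hlt hα₀.2)
      (fun p => exists_lt_zpow_apply ha.strictMono hlt hα₀.1) fun m => ?_
    obtain ⟨n, hn⟩ := exists_restrictIoo_eq_conj_zpow hr.le hrA hΛA
      (fun z hz hbz => hdgen.subset ⟨hz, hbz⟩) hbsupp hα₀A (ha.apply_mem hΛA hα₀A) (hpow m) hy
      (hyc m) rfl (hsucc m) (hyα m) (hyα (m + 1))
    rw [hn, ← conj_zpow]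
    exact zpow_mem (Subgroup.subset_closure (mem_range_self m)) n
  · refine closure_subset_of_commute G
      (fun k => G.mul_mem (G.mul_mem (hpow k) hd) (G.inv_mem (hpow k)))
      (commute_conj_conj hα.monotone hbd (fun k => (hsuppc k).subset) fun k => ?_)
    rw [supp_conj, ← hIoo]
    exact image_mono hdsupp

/-- Let `a ∈ F(r,Λ,A)` with `a t ≥ t` on `[0, r)` and `supp a = (0, r)`.
Let `α₀ ∈ (0, r) ∩ A` and `α₁ = a α₀`.  Let `b, d ∈ F(r,Λ,A)` with
`supp b = supp d = (α₀, α₁)`, and assume `d` generates the centralizer of `b` in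
`F_{(α₀,α₁)}(r,Λ,A)`.  With `c k = a^k * b * a^{-k}` and `e k = a^k * d * a^{-k}`, the
centralizer in `F(r,Λ,A)` of `{c k : k ∈ ℤ}` is exactly the subgroup generated by
`{e k : k ∈ ℤ}`. -/
theorem centralizer_of_conjugates_eq_closure_of_conjugates
    (r : ℝ) (hr : 0 < r) (Λ : Subgroup PosReal) (hΛ : Λ ≠ ⊥)
    (A : AddSubgroup ℝ) (hrA : r ∈ A)
    (hΛA : ∀ s : PosReal, s ∈ Λ → ∀ a : ℝ, a ∈ A → (s : ℝ) * a ∈ A)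
    (a : Equiv.Perm ℝ) (ha : MemF r Λ A a)
    (haid : ∀ t ∈ Set.Ico (0 : ℝ) r, t ≤ a t)
    (hasupp : supp a = Set.Ioo 0 r)
    (α₀ : ℝ) (hα₀ : α₀ ∈ Set.Ioo (0 : ℝ) r) (hα₀A : α₀ ∈ A)
    (b d : Equiv.Perm ℝ) (hb : MemF r Λ A b) (hd : MemF r Λ A d)
    (hbsupp : supp b = Set.Ioo α₀ (a α₀)) (hdsupp : supp d = Set.Ioo α₀ (a α₀))
    (hdgen : {y : Equiv.Perm ℝ | MemFOn r Λ A (Set.Ioo α₀ (a α₀)) y ∧ Commute b y}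
      = {y : Equiv.Perm ℝ | ∃ n : ℤ, y = d ^ n}) :
    {y : Equiv.Perm ℝ | MemF r Λ A y ∧ ∀ k : ℤ, Commute (a ^ k * b * (a ^ k)⁻¹) y}
      = ((Subgroup.closure (Set.range fun k : ℤ => a ^ k * d * (a ^ k)⁻¹) :
          Subgroup (Equiv.Perm ℝ)) : Set (Equiv.Perm ℝ)) :=
  centralizer_of_conjugates_eq_closure_of_conjugates_general r hr Λ A hrA hΛA a ha haid hasupp α₀
    hα₀ hα₀A b d hbsupp hdgen

end ThompsonStein
end
end

section
/- Let α, β ∈ [0, r] ∩ A with α < β, and let p, q ∈ Λ with p > 1 > q. Then there exists x ∈ F(r,Λ,A) such that x(t) ≥ t for all t ∈ [0, r), supp(x) = (α, β), the right slope of x at α equals p, and the left slope of x at β equals q. -/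
/-!
Take `x = max id (min ℓ₁ (min ℓ₂ ℓ₃))`, where `ℓ₁` has slope `p` through `(α, α)`, `ℓ₃` has
slope `q` through `(β, β)` and `ℓ₂` is a translate of the diagonal. Then `x` is the identity off
`(α, β)` and lies strictly above it inside, with breakpoints `α + (1 - q) m` and `β - (p - 1) m`.
For `m = q ^ n (β - α)` with `n` large these are in order, and since `A` is a `Λ`-module all
breakpoints and their images lie in `A`.
-/

open Set

noncomputable section

open Filter

namespace ThompsonStein

/-- The last clause of `MemF`, on an arbitrary interval `[a, b]`. -/
def IsPiecewiseAffineOn (Λ : Subgroup PosReal) (A : AddSubgroup ℝ) (f : ℝ → ℝ) (a b : ℝ) :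
    Prop :=
  ∃ n : ℕ, ∃ t : Fin (n + 1) → ℝ,
    StrictMono t ∧ t 0 = a ∧ t (Fin.last n) = b ∧
    (∀ i, t i ∈ A) ∧ (∀ i, f (t i) ∈ A) ∧
    ∀ i : Fin n, ∃ s : PosReal, s ∈ Λ ∧ ∃ c : ℝ,
      ∀ u ∈ Set.Icc (t i.castSucc) (t i.succ), f u = (s : ℝ) * u + c

namespace IsPiecewiseAffineOn

variable {Λ : Subgroup PosReal} {A : AddSubgroup ℝ} {f : ℝ → ℝ} {a b c : ℝ}

lemma refl (ha : a ∈ A) (hfa : f a ∈ A) : IsPiecewiseAffineOn Λ A f a a :=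
  ⟨0, fun _ => a, fun i j hij => (hij.ne (Subsingleton.elim (α := Fin 1) i j)).elim, rfl, rfl,
    fun _ => ha, fun _ => hfa, fun i => i.elim0⟩

lemma snoc (hΛA : ∀ s : PosReal, s ∈ Λ → ∀ a : ℝ, a ∈ A → (s : ℝ) * a ∈ A)
    (h : IsPiecewiseAffineOn Λ A f a b) (hbc : b ≤ c) (hc : c ∈ A) {s : PosReal} (hs : s ∈ Λ)
    {k : ℝ} (hf : ∀ u ∈ Icc b c, f u = s * u + k) : IsPiecewiseAffineOn Λ A f a c := by
  rcases hbc.eq_or_lt with rfl | hbc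
  · exact h
  obtain ⟨n, t, ht, h0, hb, htA, hfA, hpieces⟩ := h
  have hfc : f c ∈ A := by
    have hbA : b ∈ A := hb ▸ htA _
    have : f c = f b + s * (c - b) := by
      rw [hf c ⟨hbc.le, le_rfl⟩, hf b ⟨le_rfl, hbc.le⟩]; ring
    exact this ▸ A.add_mem (hb ▸ hfA _) (hΛA s hs _ (A.sub_mem hc hbA))
  refine ⟨n + 1, Fin.snoc t c, ?_, ?_, by simp, ?_, ?_, ?_⟩
  · refine Fin.strictMono_iff_lt_succ.2 fun i => ?_
    induction i using Fin.lastCases with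
    | last => simpa [hb] using hbc
    | cast i =>
      rw [Fin.succ_castSucc, Fin.snoc_castSucc, Fin.snoc_castSucc]
      exact ht i.castSucc_lt_succ
  · rw [← Fin.castSucc_zero, Fin.snoc_castSucc, h0]
  · exact Fin.lastCases (by simpa using hc) (fun i => by simpa using htA i)
  · exact Fin.lastCases (by simpa using hfc) (fun i => by simpa using hfA i)
  · refine Fin.lastCases ⟨s, hs, k, by simpa [hb] using hf⟩ fun i => ?_
    rw [Fin.succ_castSucc, Fin.snoc_castSucc, Fin.snoc_castSucc]
    exact hpieces i

end IsPiecewiseAffineOn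

/-- The lines of slopes `p` through `(α, α)` and `q` through `(β, β)`, capped by a translate
of the diagonal; the cap starts at `α + (1 - q) m` and ends at `β - (p - 1) m`. -/
def bump (α β p q m : ℝ) (u : ℝ) : ℝ :=
  max u (min (α + p * (u - α)) (min (u + (p - 1) * (1 - q) * m) (β + q * (u - β))))

section Bump

variable {α β p q m : ℝ}

lemma le_bump (u : ℝ) : u ≤ bump α β p q m u := le_max_left _ _

lemma continuous_bump : Continuous (bump α β p q m) := by
  unfold bump; fun_prop

lemma bump_strictMono (hp : 0 < p) (hq : 0 < q) : StrictMono (bump α β p q m) := by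
  intro u v huv
  exact max_lt_max huv (min_lt_min (by nlinarith) (min_lt_min (by linarith) (by nlinarith)))

lemma bump_eq_self_iff (hp : 1 < p) (hq : q < 1) (hm : 0 < m) {u : ℝ} :
    bump α β p q m u = u ↔ u ∉ Ioo α β := by
  have hE : 0 < (p - 1) * (1 - q) * m := by
    have := sub_pos.2 hp; have := sub_pos.2 hq; positivity
  simp only [bump, max_eq_left_iff, min_le_iff, mem_Ioo, not_and_or, not_lt]
  constructor
  · rintro (h | h | h)
    · left; nlinarith
    · linarith
    · right; nlinarith
  · rintro (h | h)
    · left; nlinarith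
    · right; right; nlinarith

lemma bump_surjective (hp : 1 < p) (hq : q < 1) (hm : 0 < m) :
    Function.Surjective (bump α β p q m) := by
  have hbot : bump α β p q m =ᶠ[atBot] id := by
    filter_upwards [eventually_le_atBot α] with u hu
    exact (bump_eq_self_iff hp hq hm).2 fun h => h.1.not_ge hu
  have htop : bump α β p q m =ᶠ[atTop] id := by
    filter_upwards [eventually_ge_atTop β] with u hu
    exact (bump_eq_self_iff hp hq hm).2 fun h => h.2.not_ge hu
  exact continuous_bump.surjective (tendsto_id.congr' htop.symm)
    (tendsto_id.congr' hbot.symm)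

lemma bump_eq_left (hp : 1 ≤ p) (hq : q ≤ 1) (hm : (p - q) * m ≤ β - α) {u : ℝ}
    (hu : u ∈ Icc α (α + (1 - q) * m)) : bump α β p q m u = α + p * (u - α) := by
  obtain ⟨h1, h2⟩ := hu
  have hE : α + p * (u - α) ≤ u + (p - 1) * (1 - q) * m := by nlinarith
  have hF : u + (p - 1) * (1 - q) * m ≤ β + q * (u - β) := by nlinarith
  rw [bump, min_eq_left (le_min hE (hE.trans hF)), max_eq_right (by nlinarith)]

lemma bump_eq_middle (hp : 1 ≤ p) (hq : q ≤ 1) (hm0 : 0 ≤ m) {u : ℝ}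
    (hu : u ∈ Icc (α + (1 - q) * m) (β - (p - 1) * m)) :
    bump α β p q m u = u + (p - 1) * (1 - q) * m := by
  obtain ⟨h1, h2⟩ := hu
  have hE : u + (p - 1) * (1 - q) * m ≤ α + p * (u - α) := by nlinarith
  have hF : u + (p - 1) * (1 - q) * m ≤ β + q * (u - β) := by nlinarith
  have hE0 : 0 ≤ (p - 1) * (1 - q) * m := by
    have := sub_nonneg.2 hp; have := sub_nonneg.2 hq; positivity
  rw [bump, min_eq_left hF, min_eq_right hE, max_eq_right (by linarith)]

lemma bump_eq_right (hp : 1 ≤ p) (hq : q ≤ 1) (hm : (p - q) * m ≤ β - α) {u : ℝ}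
    (hu : u ∈ Icc (β - (p - 1) * m) β) : bump α β p q m u = β + q * (u - β) := by
  obtain ⟨h1, h2⟩ := hu
  have hF : β + q * (u - β) ≤ u + (p - 1) * (1 - q) * m := by nlinarith
  have hE : u + (p - 1) * (1 - q) * m ≤ α + p * (u - α) := by nlinarith
  rw [bump, min_eq_right hF, min_eq_right (hF.trans hE), max_eq_right (by nlinarith)]

lemma hasRightSlope_bump (hp : 1 ≤ p) (hq : q < 1) (hm0 : 0 < m)
    (hm : (p - q) * m ≤ β - α) : HasRightSlope (bump α β p q m) α p :=
  ⟨(1 - q) * m, by have := sub_pos.2 hq; positivity, α - p * α, fun u hu => by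
    rw [bump_eq_left hp hq.le hm (Ioo_subset_Icc_self hu)]; ring⟩

lemma hasLeftSlope_bump (hp : 1 < p) (hq : q ≤ 1) (hm0 : 0 < m)
    (hm : (p - q) * m ≤ β - α) : HasLeftSlope (bump α β p q m) β q :=
  ⟨(p - 1) * m, by have := sub_pos.2 hp; positivity, β - q * β, fun u hu => by
    rw [bump_eq_right hp.le hq hm (Ioo_subset_Icc_self hu)]; ring⟩

end Bump

section Subdivision

variable {r : ℝ} {Λ : Subgroup PosReal} {A : AddSubgroup ℝ}

lemma isPiecewiseAffineOn_bump
    (hΛA : ∀ s : PosReal, s ∈ Λ → ∀ a : ℝ, a ∈ A → (s : ℝ) * a ∈ A) (hrA : r ∈ A)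
    {α β m : ℝ} (hα : 0 ≤ α) (hαA : α ∈ A) (hβ : β ≤ r) (hβA : β ∈ A) (hmA : m ∈ A)
    {p q : PosReal} (hp : p ∈ Λ) (hq : q ∈ Λ) (hp1 : (1 : ℝ) < p) (hq1 : (q : ℝ) < 1)
    (hm0 : 0 < m) (hm : ((p : ℝ) - q) * m ≤ β - α) :
    IsPiecewiseAffineOn Λ A (bump α β p q m) 0 r := by
  have hfix : ∀ u, u ∉ Ioo α β → bump α β p q m u = u := fun u =>
    (bump_eq_self_iff hp1 hq1 hm0).2
  have hαe : α + (1 - q) * m ∈ A := by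
    convert A.add_mem hαA (A.sub_mem hmA (hΛA q hq m hmA)) using 1; ring
  have hβd : β - (p - 1) * m ∈ A := by
    convert A.sub_mem hβA (A.sub_mem (hΛA p hp m hmA) hmA) using 1; ring
  have h0 : IsPiecewiseAffineOn Λ A (bump α β p q m) 0 0 :=
    .refl A.zero_mem (by rw [hfix 0 fun h => h.1.not_ge hα]; exact A.zero_mem)
  have h1 := h0.snoc hΛA hα hαA (one_mem Λ) (k := 0) fun u hu => by
    rw [hfix u fun h => h.1.not_ge hu.2]; simp
  have h2 := h1.snoc hΛA (by nlinarith) hαe hp (k := α - p * α) fun u hu => by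
    rw [bump_eq_left hp1.le hq1.le hm hu]; ring
  have h3 := h2.snoc hΛA (by nlinarith) hβd (one_mem Λ) (k := (p - 1) * (1 - q) * m)
    fun u hu => by rw [bump_eq_middle hp1.le hq1.le hm0.le hu]; simp
  have h4 := h3.snoc hΛA (by nlinarith) hβA hq (k := β - q * β) fun u hu => by
    rw [bump_eq_right hp1.le hq1.le hm hu]; ring
  exact h4.snoc hΛA hβ hrA (one_mem Λ) (k := 0) fun u hu => by
    rw [hfix u fun h => h.2.not_ge hu.1]; simp

lemma exists_pos_mem_mul_le (hΛA : ∀ s : PosReal, s ∈ Λ → ∀ a : ℝ, a ∈ A → (s : ℝ) * a ∈ A)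
    {q : PosReal} (hq : q ∈ Λ) (hq1 : (q : ℝ) < 1) {L : ℝ} (hLA : L ∈ A) (hL : 0 < L)
    {C : ℝ} (hC : 0 < C) : ∃ m ∈ A, 0 < m ∧ C * m ≤ L := by
  obtain ⟨n, hn⟩ := exists_pow_lt_of_lt_one (inv_pos.2 hC) hq1
  refine ⟨(q : ℝ) ^ n * L, ?_, by have := q.2; positivity, ?_⟩
  · simpa [Positive.val_pow] using hΛA (q ^ n) (pow_mem hq n) L hLA
  · have : C * (q : ℝ) ^ n ≤ 1 := by
      rw [← mul_inv_cancel₀ hC.ne']; exact mul_le_mul_of_nonneg_left hn.le hC.le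
    nlinarith

end Subdivision

theorem exists_bump_with_prescribed_slopes_general
    (r : ℝ) (Λ : Subgroup PosReal)
    (A : AddSubgroup ℝ) (hrA : r ∈ A)
    (hΛA : ∀ s : PosReal, s ∈ Λ → ∀ a : ℝ, a ∈ A → (s : ℝ) * a ∈ A)
    (α β : ℝ) (hα : α ∈ Set.Icc (0 : ℝ) r) (hαA : α ∈ A)
    (hβ : β ∈ Set.Icc (0 : ℝ) r) (hβA : β ∈ A) (hαβ : α < β)
    (p q : PosReal) (hp : p ∈ Λ) (hq : q ∈ Λ)
    (hp1 : (1 : ℝ) < (p : ℝ)) (hq1 : (q : ℝ) < 1) :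
    ∃ x : Equiv.Perm ℝ, MemF r Λ A x ∧
      (∀ t ∈ Set.Ico (0 : ℝ) r, t ≤ x t) ∧
      supp x = Set.Ioo α β ∧
      HasRightSlope (⇑x) α (p : ℝ) ∧
      HasLeftSlope (⇑x) β (q : ℝ) := by
  obtain ⟨m, hmA, hm0, hm⟩ := exists_pos_mem_mul_le hΛA hq hq1 (A.sub_mem hβA hαA)
    (sub_pos.2 hαβ) (sub_pos.2 (hq1.trans hp1))
  have hfix := fun t => bump_eq_self_iff (α := α) (β := β) (u := t) hp1 hq1 hm0
  let x : Equiv.Perm ℝ := .ofBijective (bump α β p q m)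
    ⟨(bump_strictMono (by linarith) q.2).injective, bump_surjective hp1 hq1 hm0⟩
  refine ⟨x, ⟨fun t ht => (hfix t).2 fun h => ht ⟨hα.1.trans h.1.le, h.2.trans_le hβ.2⟩,
    (bump_strictMono (by linarith) q.2).strictMonoOn _, continuous_bump.continuousOn,
    isPiecewiseAffineOn_bump hΛA hrA hα.1 hαA hβ.2 hβA hmA hp hq hp1 hq1 hm0 hm⟩,
    fun t _ => le_bump t, ?_, hasRightSlope_bump hp1.le hq1 hm0 hm,
    hasLeftSlope_bump hp1 hq1.le hm0 hm⟩
  ext t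
  exact (hfix t).not_left

/-- Let `α, β ∈ [0, r] ∩ A` with `α < β`, and let `p, q ∈ Λ` with
`p > 1 > q`.  Then there exists `x ∈ F(r, Λ, A)` with `x t ≥ t` for all `t ∈ [0, r)`,
`supp x = (α, β)`, right slope `p` at `α`, and left slope `q` at `β`. -/
theorem exists_bump_with_prescribed_slopes
    (r : ℝ) (hr : 0 < r) (Λ : Subgroup PosReal) (hΛ : Λ ≠ ⊥)
    (A : AddSubgroup ℝ) (hrA : r ∈ A)
    (hΛA : ∀ s : PosReal, s ∈ Λ → ∀ a : ℝ, a ∈ A → (s : ℝ) * a ∈ A)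
    (α β : ℝ) (hα : α ∈ Set.Icc (0 : ℝ) r) (hαA : α ∈ A)
    (hβ : β ∈ Set.Icc (0 : ℝ) r) (hβA : β ∈ A) (hαβ : α < β)
    (p q : PosReal) (hp : p ∈ Λ) (hq : q ∈ Λ)
    (hp1 : (1 : ℝ) < (p : ℝ)) (hq1 : (q : ℝ) < 1) :
    ∃ x : Equiv.Perm ℝ, MemF r Λ A x ∧
      (∀ t ∈ Set.Ico (0 : ℝ) r, t ≤ x t) ∧
      supp x = Set.Ioo α β ∧
      HasRightSlope (⇑x) α (p : ℝ) ∧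
      HasLeftSlope (⇑x) β (q : ℝ) :=
  exists_bump_with_prescribed_slopes_general r Λ A hrA hΛA α β hα hαA hβ hβA hαβ p q hp hq hp1 hq1

end ThompsonStein
end
end

section
/- Let α, β ∈ [0, r] ∩ A with α < β, and set I = (α, β). Let x ∈ F_I(r,Λ,A) satisfy fix(x) ∩ I ∩ A = ∅. Then the set fix(x) ∩ I is finite, and for every element y ≠ id of the centralizer of x in F_I(r,Λ,A), one has fix(y) ∩ I = fix(x) ∩ I. -/
open Set

noncomputable section

/-!
On an affine piece of `x`, two fixed points would make `x` the identity on an interval, which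
meets the dense group `A`; so `fix(x) ∩ I` is finite. An element `y` of the centralizer permutes
this finite set monotonically, hence fixes it. Suppose `y` also fixes some `ξ ∈ I` moved by `x`.
On the component `(c, d)` of `ξ` in `I \ fix(x)`, the orbit of `ξ` under `x` or `x⁻¹` accumulates
at `d` and is fixed by `y`, so `y` is the identity on its last affine piece before `d`, hence,
by commutation, on all of `(c, d)`. The points of `fix(x) ∩ I` lie outside `A`, so they are not
breakpoints of `y`, and the identity spreads across them: the set of points near which `y` is the
identity is open, nonempty and relatively closed in `I`, so `y = 1`.
-/

open Filter Topology

lemma exists_castSucc_lt_le_succ {α : Type*} [LinearOrder α] {n : ℕ} {t : Fin (n + 1) → α}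
    {d : α} (h0 : t 0 < d) (hn : d ≤ t (Fin.last n)) :
    ∃ i : Fin n, t i.castSucc < d ∧ d ≤ t i.succ := by
  by_contra! h
  exact (Fin.induction (motive := fun k => t k < d) h0 h (Fin.last n)).not_ge hn

lemma Set.Finite.exists_Ioo_disjoint {α : Type*} [LinearOrder α] {T : Set α} (hT : T.Finite)
    {a b u : α} (ha : a ∈ T) (hb : b ∈ T) (hau : a < u) (hub : u < b) (hu : u ∉ T) :
    ∃ c ∈ T, ∃ d ∈ T, u ∈ Ioo c d ∧ Disjoint (Ioo c d) T := by
  obtain ⟨c, ⟨hcT, hcu⟩, hc⟩ := exists_max_image _ id (hT.sep (· < u)) ⟨a, ha, hau⟩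
  obtain ⟨d, ⟨hdT, hud⟩, hd⟩ := exists_min_image _ id (hT.sep (u < ·)) ⟨b, hb, hub⟩
  refine ⟨c, hcT, d, hdT, ⟨hcu, hud⟩, disjoint_left.mpr fun t ht htT => ?_⟩
  rcases lt_trichotomy t u with htu | rfl | hut
  · exact (hc t ⟨htT, htu⟩).not_gt ht.1
  · exact hu htT
  · exact (hd t ⟨htT, hut⟩).not_gt ht.2

lemma Set.Finite.eqOn_id_of_strictMonoOn {α : Type*} [LinearOrder α] {s : Set α}
    (hs : s.Finite) {f : α → α} (hmaps : MapsTo f s s) (hmono : StrictMonoOn f s) :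
    EqOn f id s := by
  have := hs.to_subtype
  have hg : StrictMono (hmaps.restrict f s s) := fun u v huv => hmono u.2 v.2 huv
  exact fun u hu => congrArg Subtype.val (le_antisymm (hg.apply_le (x := ⟨u, hu⟩)) hg.le_apply)

lemma eqOn_id_of_eqOn_affine {f : ℝ → ℝ} {S : Set ℝ} {s k : ℝ}
    (hf : EqOn f (fun w => s * w + k) S) {u v : ℝ} (hu : u ∈ S) (hv : v ∈ S) (huv : u ≠ v)
    (hfu : f u = u) (hfv : f v = v) : EqOn f id S := by
  have eu : s * u + k = u := (hf hu).symm.trans hfu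
  have ev : s * v + k = v := (hf hv).symm.trans hfv
  have hs : s = 1 := mul_right_cancel₀ (sub_ne_zero.mpr huv) (by linarith)
  have hk : k = 0 := by rw [hs] at eu; linarith
  intro w hw
  simp [hf hw, hs, hk]

lemma eqOn_id_of_eqOn_affine_of_eventually {f : ℝ → ℝ} {U : Set ℝ} (hU : IsOpen U) {s k : ℝ}
    (hf : EqOn f (fun w => s * w + k) U) {v : ℝ} (hv : v ∈ U) (hfv : ∀ᶠ w in 𝓝 v, f w = w) :
    EqOn f id U := by
  obtain ⟨w, ⟨hfw, hw⟩, hwv⟩ :=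
    (((hfv.and (hU.mem_nhds hv)).filter_mono nhdsWithin_le_nhds).and
      (self_mem_nhdsWithin (s := {v}ᶜ))).exists
  exact eqOn_id_of_eqOn_affine hf hv hw (Ne.symm hwv) hfv.self_of_nhds hfw

lemma continuousOn_of_strictMonoOn_of_bijOn {f : ℝ → ℝ} {c d : ℝ}
    (hmono : StrictMonoOn f (Ioo c d)) (hbij : BijOn f (Ioo c d) (Ioo c d)) :
    ContinuousOn f (Ioo c d) := fun u hu =>
  (continuousAt_of_monotoneOn_of_image_mem_nhds hmono.monotoneOn (isOpen_Ioo.mem_nhds hu)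
    (by rw [hbij.image_eq]; exact isOpen_Ioo.mem_nhds (hbij.mapsTo hu))).continuousWithinAt

lemma forall_lt_or_forall_gt_of_isPreconnected {f : ℝ → ℝ} {s : Set ℝ} (hs : IsPreconnected s)
    (hf : ContinuousOn f s) (hfree : ∀ u ∈ s, f u ≠ u) :
    (∀ u ∈ s, u < f u) ∨ ∀ u ∈ s, f u < u := by
  by_contra! h
  obtain ⟨⟨a, ha, hfa⟩, b, hb, hfb⟩ := h
  obtain ⟨w, hw, hfw⟩ := hs.intermediate_value₂ ha hb hf continuousOn_id hfa hfb
  exact hfree w hw hfw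

lemma exists_lt_iterate {g : ℝ → ℝ} {c d : ℝ} (hg : ContinuousOn g (Ioo c d))
    (hmaps : MapsTo g (Ioo c d) (Ioo c d)) (hlt : ∀ u ∈ Ioo c d, u < g u) :
    ∀ u ∈ Ioo c d, ∀ b < d, ∃ n, b < g^[n] u := by
  intro u hu b hb
  by_contra! h
  have hmono : Monotone fun n => g^[n] u := monotone_nat_of_le_succ fun n => by
    rw [Function.iterate_succ_apply']
    exact (hlt _ (hmaps.iterate n hu)).le
  have hbdd : BddAbove (range fun n => g^[n] u) := ⟨b, forall_mem_range.mpr h⟩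
  have hL : ⨆ n, g^[n] u ∈ Ioo c d :=
    ⟨hu.1.trans_le (le_ciSup hbdd 0), (ciSup_le h).trans_lt hb⟩
  have hfix := isFixedPt_of_tendsto_iterate (tendsto_atTop_ciSup hmono hbdd)
    (hg.continuousAt (isOpen_Ioo.mem_nhds hL))
  exact (hlt _ hL).ne hfix.symm

lemma eqOn_id_of_commute_of_fixedPointFree {x y : Equiv.Perm ℝ} (hxy : Commute x y) {c d : ℝ}
    (hbij : BijOn x (Ioo c d) (Ioo c d)) (hmono : StrictMonoOn x (Ioo c d))
    (hfree : ∀ u ∈ Ioo c d, x u ≠ u) {a s k : ℝ} (had : a < d)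
    (haff : EqOn y (fun w => s * w + k) (Ioo a d)) {ξ : ℝ} (hξ : ξ ∈ Ioo c d)
    (hyξ : y ξ = ξ) : EqOn y id (Ioo c d) := by
  have hcont := continuousOn_of_strictMonoOn_of_bijOn hmono hbij
  wlog hlt : ∀ u ∈ Ioo c d, u < x u generalizing x
  · have hgt := (forall_lt_or_forall_gt_of_isPreconnected isPreconnected_Ioo hcont
      hfree).resolve_left hlt
    have hbij' : BijOn ⇑(x⁻¹) (Ioo c d) (Ioo c d) := Equiv.bijOn_symm.mpr hbij
    have hmono' : StrictMonoOn ⇑(x⁻¹) (Ioo c d) := fun u hu v hv huv =>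
      (hmono.lt_iff_lt (hbij'.mapsTo hu) (hbij'.mapsTo hv)).mp (by simpa using huv)
    refine this hxy.inv_left hbij' hmono' (fun u hu hxu => hfree u hu ?_)
      (continuousOn_of_strictMonoOn_of_bijOn hmono' hbij') fun u hu => ?_
    · simpa using (congrArg x hxu).symm
    · simpa using hgt _ (hbij'.mapsTo hu)
  have hcomm (n : ℕ) (u : ℝ) : y (x^[n] u) = x^[n] (y u) := by
    rw [Equiv.Perm.iterate_eq_pow]
    exact (DFunLike.congr_fun (hxy.pow_left n).eq u).symm
  have hmaps (n : ℕ) : MapsTo x^[n] (Ioo c d) (Ioo c d) := hbij.mapsTo.iterate n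
  have hescape := exists_lt_iterate hcont hbij.mapsTo hlt
  have hb : max a c < d := max_lt had (hξ.1.trans hξ.2)
  have hmem {n : ℕ} {u : ℝ} (hu : u ∈ Ioo c d) (hn : max a c < x^[n] u) :
      x^[n] u ∈ Ioo a d :=
    ⟨(le_max_left a c).trans_lt hn, (hmaps n hu).2⟩
  obtain ⟨n, hn⟩ := hescape ξ hξ _ hb
  have hn' : x^[n] ξ < x^[n + 1] ξ := by
    rw [Function.iterate_succ_apply']; exact hlt _ (hmaps n hξ)
  -- two consecutive points of the orbit of `ξ` lie on the last affine piece of `y` before `d`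
  have hid : EqOn y id (Ioo a d) :=
    eqOn_id_of_eqOn_affine haff (hmem hξ hn) (hmem hξ (hn.trans hn')) hn'.ne
      (by rw [hcomm, hyξ]) (by rw [hcomm, hyξ])
  intro u hu
  obtain ⟨m, hm⟩ := hescape u hu _ hb
  exact (x.injective.iterate m) ((hcomm m u).symm.trans (hid (hmem hu hm)))

namespace ThompsonStein

section MemF

variable {r : ℝ} {Λ : Subgroup PosReal} {A : AddSubgroup ℝ} {f : Equiv.Perm ℝ}

lemma apply_eq_of_supp_subset {S : Set ℝ} (h : supp f ⊆ S) {u : ℝ} (hu : u ∉ S) : f u = u :=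
  not_not.mp fun hfu => hu (h hfu)

lemma mapsTo_of_supp_subset {S : Set ℝ} (h : supp f ⊆ S) : MapsTo f S S := fun u hu => by
  by_cases hfu : f u = u
  · rwa [hfu]
  · exact h fun hffu => hfu (f.injective hffu)

lemma MemF.apply_mem_Ico_iff (hf : MemF r Λ A f) {u : ℝ} : f u ∈ Ico 0 r ↔ u ∈ Ico 0 r := by
  refine ⟨fun h => ?_, fun h => ?_⟩
  · by_contra hu
    exact hu (hf.1 u hu ▸ h)
  · by_contra hfu
    rw [f.injective (hf.1 _ hfu)] at hfu
    exact hfu h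

lemma MemF.strictMonoOn_Icc (hf : MemF r Λ A f) : StrictMonoOn f (Icc 0 r) := by
  intro u hu v hv huv
  rcases hv.2.lt_or_eq with hvr | hvr
  · exact hf.2.1 ⟨hu.1, huv.trans hvr⟩ ⟨hv.1, hvr⟩ huv
  · rw [hvr, hf.1 r (by simp)]
    rw [hvr] at huv
    exact (hf.apply_mem_Ico_iff.mpr ⟨hu.1, huv⟩).2

lemma MemF.bijOn_Ioo (hf : MemF r Λ A f) {c d : ℝ} (hc : c ∈ Icc 0 r) (hd : d ∈ Icc 0 r)
    (hfc : f c = c) (hfd : f d = d) : BijOn f (Ioo c d) (Ioo c d) := by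
  have hsub : Ioo c d ⊆ Icc 0 r := Ioo_subset_Icc_self.trans (Icc_subset_Icc hc.1 hd.2)
  have hmono := hf.strictMonoOn_Icc
  refine ⟨fun u hu => ⟨hfc ▸ hmono hc (hsub hu) hu.1, hfd ▸ hmono (hsub hu) hd hu.2⟩,
    f.injective.injOn, fun v hv => ⟨f.symm v, ?_, f.apply_symm_apply v⟩⟩
  have hw : f.symm v ∈ Icc 0 r := Ico_subset_Icc_self <| hf.apply_mem_Ico_iff.mp <| by
    rw [f.apply_symm_apply]; exact ⟨(hsub hv).1, hv.2.trans_le hd.2⟩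
  exact ⟨(hmono.lt_iff_lt hc hw).mp (by rw [hfc, f.apply_symm_apply]; exact hv.1),
    (hmono.lt_iff_lt hw hd).mp (by rw [hfd, f.apply_symm_apply]; exact hv.2)⟩

lemma MemF.exists_eqOn_affine_Icc (hf : MemF r Λ A f) {u : ℝ} (hu : u ∈ Ioc 0 r) :
    ∃ a b : ℝ, b ∈ A ∧ u ∈ Ioc a b ∧ ∃ s k : ℝ, EqOn f (fun w => s * w + k) (Icc a b) := by
  obtain ⟨-, -, -, n, t, -, ht0, htn, htA, -, haff⟩ := hf
  obtain ⟨i, hi⟩ := exists_castSucc_lt_le_succ (t := t) (ht0 ▸ hu.1) (htn ▸ hu.2)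
  obtain ⟨s, -, k, hk⟩ := haff i
  exact ⟨_, _, htA _, hi, s, k, hk⟩

lemma MemF.exists_eqOn_affine_Ioo (hf : MemF r Λ A f) {u : ℝ} (hu : u ∈ Ioo 0 r)
    (huA : u ∉ A) :
    ∃ a b : ℝ, u ∈ Ioo a b ∧ ∃ s k : ℝ, EqOn f (fun w => s * w + k) (Ioo a b) := by
  obtain ⟨a, b, hbA, hab, s, k, hk⟩ := hf.exists_eqOn_affine_Icc (Ioo_subset_Ioc_self hu)
  exact ⟨a, b, ⟨hab.1, hab.2.lt_of_ne (ne_of_mem_of_not_mem hbA huA).symm⟩, s, k,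
    hk.mono Ioo_subset_Icc_self⟩

lemma MemF.finite_fixSet_inter_Ioo (hf : MemF r Λ A f) (hA : Dense (A : Set ℝ)) {α β : ℝ}
    (hα : 0 ≤ α) (hβ : β ≤ r) (hfix : fixSet f ∩ Ioo α β ∩ (A : Set ℝ) = ∅) :
    (fixSet f ∩ Ioo α β).Finite := by
  obtain ⟨-, -, -, n, t, -, ht0, htn, -, -, haff⟩ := hf
  refine (finite_iUnion fun i : Fin n =>
    (?_ : (fixSet f ∩ Ioo α β ∩ Icc (t i.castSucc) (t i.succ)).Finite)).subset fun u hu => ?_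
  · -- two fixed points on one piece make `f` the identity between them, where `A` is dense
    refine Subsingleton.finite fun u hu v hv => by_contra fun huv => ?_
    wlog h : u < v generalizing u v
    · exact this v hv u hu (Ne.symm huv) ((not_lt.mp h).lt_of_ne (Ne.symm huv))
    obtain ⟨s, -, k, hk⟩ := haff i
    have hid : EqOn f id (Icc u v) := eqOn_id_of_eqOn_affine
      (fun w hw => hk w (Icc_subset_Icc hu.2.1 hv.2.2 hw)) (left_mem_Icc.mpr h.le)
      (right_mem_Icc.mpr h.le) huv hu.1.1 hv.1.1
    obtain ⟨q, hqA, hq⟩ := hA.exists_between h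
    have hqI : q ∈ Ioo α β := ⟨hu.1.2.1.trans hq.1, hq.2.trans hv.1.2.2⟩
    exact hfix.subset ⟨⟨hid (Ioo_subset_Icc_self hq), hqI⟩, hqA⟩
  · obtain ⟨i, hi⟩ := exists_castSucc_lt_le_succ (t := t) (ht0 ▸ hα.trans_lt hu.2.1)
      (htn ▸ (hu.2.2.trans_le hβ).le)
    exact mem_iUnion.mpr ⟨i, hu, hi.1.le, hi.2⟩

end MemF

lemma dense_of_mul_mem {Λ : Subgroup PosReal} (hΛ : Λ ≠ ⊥) {A : AddSubgroup ℝ} {r : ℝ}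
    (hr : 0 < r) (hrA : r ∈ A)
    (hΛA : ∀ s : PosReal, s ∈ Λ → ∀ a : ℝ, a ∈ A → (s : ℝ) * a ∈ A) :
    Dense (A : Set ℝ) := by
  obtain ⟨σ, hσΛ, hσ1⟩ : ∃ σ ∈ Λ, (σ : ℝ) < 1 := by
    obtain ⟨⟨s, hsΛ⟩, hs1⟩ := Subgroup.ne_bot_iff_exists_ne_one.mp hΛ
    rcases lt_or_gt_of_ne fun h : (s : ℝ) = 1 => hs1 (Subtype.ext (Subtype.ext h)) with h | h
    · exact ⟨s, hsΛ, h⟩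
    · exact ⟨s⁻¹, inv_mem hsΛ, by rw [Positive.coe_inv]; exact inv_lt_one_of_one_lt₀ h⟩
  refine AddSubgroup.dense_of_not_isolated_zero A fun ε hε => ?_
  obtain ⟨n, hn⟩ := exists_pow_lt_of_lt_one (div_pos hε hr) hσ1
  refine ⟨_, hΛA _ (pow_mem hσΛ n) r hrA, mul_pos (σ ^ n).2 hr, ?_⟩
  rw [Positive.val_pow]
  exact (lt_div_iff₀ hr).mp hn

section Centralizer

variable {r : ℝ} {Λ : Subgroup PosReal} {A : AddSubgroup ℝ} {α β : ℝ} {x y : Equiv.Perm ℝ}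

lemma exists_isOpen_eqOn_id_of_apply_ne (hx : MemFOn r Λ A (Ioo α β) x) (hy : MemF r Λ A y)
    (hxy : Commute x y) (hα : 0 ≤ α) (hβ : β ≤ r) (hfin : (fixSet x ∩ Ioo α β).Finite) {u : ℝ}
    (hu : u ∈ Ioo α β) (hxu : x u ≠ u) :
    ∃ J : Set ℝ, IsOpen J ∧ u ∈ J ∧ ∀ v ∈ J, y v = v → EqOn y id J := by
  set T := insert α (insert β (fixSet x ∩ Ioo α β))
  have hT : ∀ t ∈ T, t ∈ Icc α β ∧ x t = t := by
    rintro t (rfl | rfl | ⟨ht, htI⟩)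
    · exact ⟨left_mem_Icc.mpr (hu.1.trans hu.2).le, apply_eq_of_supp_subset hx.2 (by simp)⟩
    · exact ⟨right_mem_Icc.mpr (hu.1.trans hu.2).le, apply_eq_of_supp_subset hx.2 (by simp)⟩
    · exact ⟨Ioo_subset_Icc_self htI, ht⟩
  have huT : u ∉ T := by
    rintro (h | h | ⟨h, -⟩)
    exacts [hu.1.ne' h, hu.2.ne h, hxu h]
  obtain ⟨c, hcT, d, hdT, hucd, hdisj⟩ := (hfin.insert β).insert α |>.exists_Ioo_disjoint
    (mem_insert α _) (mem_insert_of_mem α (mem_insert β _)) hu.1 hu.2 huT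
  obtain ⟨⟨hαc, hcβ⟩, hxc⟩ := hT c hcT
  obtain ⟨⟨hαd, hdβ⟩, hxd⟩ := hT d hdT
  have hsub : Ioo c d ⊆ Icc 0 r :=
    Ioo_subset_Icc_self.trans (Icc_subset_Icc (hα.trans hαc) (hdβ.trans hβ))
  have hfree : ∀ w ∈ Ioo c d, x w ≠ w := fun w hw hxw => disjoint_left.mp hdisj hw
    (mem_insert_of_mem _ (mem_insert_of_mem _ ⟨hxw, Ioo_subset_Ioo hαc hdβ hw⟩))
  obtain ⟨a, b, -, had, s, k, haff⟩ :=
    hy.exists_eqOn_affine_Icc ⟨(hα.trans hαc).trans_lt (hucd.1.trans hucd.2), hdβ.trans hβ⟩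
  refine ⟨Ioo c d, isOpen_Ioo, hucd, fun v hv hyv => ?_⟩
  exact eqOn_id_of_commute_of_fixedPointFree hxy
    (hx.1.bijOn_Ioo ⟨hα.trans hαc, hcβ.trans hβ⟩ ⟨hα.trans hαd, hdβ.trans hβ⟩ hxc hxd)
    (hx.1.strictMonoOn_Icc.mono hsub) hfree had.1
    (fun w hw => haff (Ioo_subset_Icc_self.trans (Icc_subset_Icc_right had.2) hw)) hv hyv

lemma eq_one_of_commute_of_apply_eq (hx : MemFOn r Λ A (Ioo α β) x)
    (hy : MemFOn r Λ A (Ioo α β) y) (hxy : Commute x y) (hα : 0 ≤ α) (hβ : β ≤ r)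
    (hfin : (fixSet x ∩ Ioo α β).Finite) (hfix : fixSet x ∩ Ioo α β ∩ (A : Set ℝ) = ∅)
    {ξ : ℝ} (hξ : ξ ∈ Ioo α β) (hxξ : x ξ ≠ ξ) (hyξ : y ξ = ξ) : y = 1 := by
  set W := {u | ∀ᶠ w in 𝓝 u, y w = w}
  have hcomp := fun u => exists_isOpen_eqOn_id_of_apply_ne (u := u) hx hy.1 hxy hα hβ hfin
  have hclosed : closure W ∩ Ioo α β ⊆ W := by
    rintro u ⟨hu, huI⟩
    by_cases hxu : x u = u
    · have huA : u ∉ A := fun huA => hfix.subset ⟨⟨hxu, huI⟩, huA⟩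
      obtain ⟨a, b, hab, s, k, haff⟩ :=
        hy.1.exists_eqOn_affine_Ioo ⟨hα.trans_lt huI.1, huI.2.trans_le hβ⟩ huA
      obtain ⟨v, hv, hvW⟩ := mem_closure_iff.mp hu _ isOpen_Ioo hab
      exact eventually_of_mem (isOpen_Ioo.mem_nhds hab)
        (eqOn_id_of_eqOn_affine_of_eventually isOpen_Ioo haff hv hvW)
    · obtain ⟨J, hJ, huJ, hid⟩ := hcomp u huI hxu
      obtain ⟨v, hv, hvW⟩ := mem_closure_iff.mp hu J hJ huJ
      exact eventually_of_mem (hJ.mem_nhds huJ) (hid v hv hvW.self_of_nhds)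
  have hξW : ξ ∈ W := by
    obtain ⟨J, hJ, hξJ, hid⟩ := hcomp ξ hξ hxξ
    exact eventually_of_mem (hJ.mem_nhds hξJ) (hid ξ hξJ hyξ)
  have hIW := isPreconnected_Ioo.subset_of_closure_inter_subset
    isOpen_setOfPred_eventually_nhds ⟨ξ, hξ, hξW⟩ hclosed
  ext u
  by_cases hu : u ∈ Ioo α β
  · exact (hIW hu).self_of_nhds
  · exact apply_eq_of_supp_subset hy.2 hu

end Centralizer

theorem fixSet_inter_finite_and_centralizer_fixSet_eq_general
    (r : ℝ) (hr : 0 < r) (Λ : Subgroup PosReal) (hΛ : Λ ≠ ⊥)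
    (A : AddSubgroup ℝ) (hrA : r ∈ A)
    (hΛA : ∀ s : PosReal, s ∈ Λ → ∀ a : ℝ, a ∈ A → (s : ℝ) * a ∈ A)
    (α β : ℝ) (hα : α ∈ Set.Icc (0 : ℝ) r)
    (hβ : β ∈ Set.Icc (0 : ℝ) r)
    (x : Equiv.Perm ℝ) (hx : MemFOn r Λ A (Set.Ioo α β) x)
    (hfix : fixSet x ∩ Set.Ioo α β ∩ (A : Set ℝ) = ∅) :
    (fixSet x ∩ Set.Ioo α β).Finite ∧
    ∀ y : Equiv.Perm ℝ, MemFOn r Λ A (Set.Ioo α β) y → Commute x y → y ≠ 1 →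
      fixSet y ∩ Set.Ioo α β = fixSet x ∩ Set.Ioo α β := by
  have hfin := hx.1.finite_fixSet_inter_Ioo (dense_of_mul_mem hΛ hr hrA hΛA) hα.1 hβ.2 hfix
  refine ⟨hfin, fun y hy hxy hy1 => ?_⟩
  have hI : Ioo α β ⊆ Ico 0 r := Ioo_subset_Ico_self.trans (Ico_subset_Ico hα.1 hβ.2)
  have hFy : fixSet x ∩ Ioo α β ⊆ fixSet y := fun u hu => hfin.eqOn_id_of_strictMonoOn
    (fun v ⟨hxv, hv⟩ => ⟨(DFunLike.congr_fun hxy.eq v).trans (congrArg y hxv),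
      mapsTo_of_supp_subset hy.2 hv⟩)
    (hy.1.2.1.mono (inter_subset_right.trans hI)) hu
  refine Subset.antisymm (fun ξ ⟨hyξ, hξ⟩ => ⟨by_contra fun hxξ => hy1 ?_, hξ⟩)
    (subset_inter hFy inter_subset_right)
  exact eq_one_of_commute_of_apply_eq hx hy hxy hα.1 hβ.2 hfin hfix hξ hxξ hyξ

/-- Let `α, β ∈ [0, r] ∩ A` with `α < β`, `I = (α, β)`, and let
`x ∈ F_I(r, Λ, A)` satisfy `fix(x) ∩ I ∩ A = ∅`.  Then `fix(x) ∩ I` is finite, and every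
element `y ≠ 1` of the centralizer of `x` in `F_I(r, Λ, A)` satisfies
`fix(y) ∩ I = fix(x) ∩ I`. -/
theorem fixSet_inter_finite_and_centralizer_fixSet_eq
    (r : ℝ) (hr : 0 < r) (Λ : Subgroup PosReal) (hΛ : Λ ≠ ⊥)
    (A : AddSubgroup ℝ) (hrA : r ∈ A)
    (hΛA : ∀ s : PosReal, s ∈ Λ → ∀ a : ℝ, a ∈ A → (s : ℝ) * a ∈ A)
    (α β : ℝ) (hα : α ∈ Set.Icc (0 : ℝ) r) (hαA : α ∈ A)
    (hβ : β ∈ Set.Icc (0 : ℝ) r) (hβA : β ∈ A) (hαβ : α < β)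
    (x : Equiv.Perm ℝ) (hx : MemFOn r Λ A (Set.Ioo α β) x)
    (hfix : fixSet x ∩ Set.Ioo α β ∩ (A : Set ℝ) = ∅) :
    (fixSet x ∩ Set.Ioo α β).Finite ∧
    ∀ y : Equiv.Perm ℝ, MemFOn r Λ A (Set.Ioo α β) y → Commute x y → y ≠ 1 →
      fixSet y ∩ Set.Ioo α β = fixSet x ∩ Set.Ioo α β :=
  fixSet_inter_finite_and_centralizer_fixSet_eq_general r hr Λ hΛ A hrA hΛA α β hα hβ x hx hfix

end ThompsonStein
end
end

section
/- Let r > 0 and let f be a bijection of [0, r) onto itself that is right-continuous at every point of [0, r) and has only finitely many points of discontinuity. Then f is strictly increasing on each of its (finitely many) maximal intervals of continuity; in particular, if J ⊆ [0, r) is an interval such that f is continuous at every point of J, then f is strictly increasing on J. -/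
open Set Filter Topology

/-!
On a piece `[x, b)` running from a point to the next discontinuity (or to `r`), `f` is continuous
and injective, hence strictly monotone; a decreasing piece is mapped onto `(L, f x]`, where `L` is
the left limit of `f` at `b`. These limits form a finite set; if it were nonempty, its least
element `L₀` would lie in `[0, r)`, so `L₀ = f x₀`. The piece starting at `x₀` cannot decrease, as
its left limit would be smaller than `L₀`; nor can it increase, since then the values just above
`L₀` would be taken both just after `x₀` and on the decreasing piece with limit `L₀`. So no piece
decreases.
-/

theorem ContinuousOn.strictMonoOn_or_strictAntiOn_of_injOn {α δ : Type*}
    [ConditionallyCompleteLinearOrder α] [TopologicalSpace α] [OrderTopology α]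
    [DenselyOrdered α] [LinearOrder δ] [TopologicalSpace δ] [OrderClosedTopology δ]
    {f : α → δ} {s : Set α} [s.OrdConnected] (hc : ContinuousOn f s) (hi : InjOn f s) :
    StrictMonoOn f s ∨ StrictAntiOn f s := by
  rcases s.eq_empty_or_nonempty with rfl | hs
  · exact Or.inl (subsingleton_empty.strictMonoOn f)
  have : Inhabited s := Classical.inhabited_of_nonempty hs.to_subtype
  exact (Continuous.strictMono_of_inj hc.domRestrict hi.injective).imp
    strictMono_domRestrict.mp strictAntiOn_iff_strictAnti.mpr

theorem Set.Finite.exists_mem_insert_forall_Ioo_notMem {α : Type*} [LinearOrder α] {s : Set α}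
    (hs : s.Finite) {w r : α} (hwr : w < r) :
    ∃ b ∈ insert r s, w < b ∧ ∀ y ∈ Ioo w b, y ∉ s := by
  obtain ⟨b, ⟨hb, hwb⟩, hmin⟩ :=
    exists_min_image _ id ((hs.insert r).inter_of_left (Ioi w)) ⟨r, mem_insert r s, hwr⟩
  exact ⟨b, hb, hwb, fun y hy hys => (hmin y ⟨mem_insert_of_mem r hys, hy.1⟩).not_gt hy.2⟩

theorem ContinuousOn.image_Ico_of_strictAntiOn_of_tendsto {f : ℝ → ℝ} {a b L : ℝ} (hab : a < b)
    (hc : ContinuousOn f (Ico a b)) (hf : StrictAntiOn f (Ico a b))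
    (hL : Tendsto f (𝓝[<] b) (𝓝 L)) : f '' Ico a b = Ioc L (f a) := by
  refine subset_antisymm ?_ fun y hy => ?_
  · rintro _ ⟨x, hx, rfl⟩
    obtain ⟨x', hxx', hx'b⟩ := exists_between hx.2
    have hx' : x' ∈ Ico a b := ⟨hx.1.trans hxx'.le, hx'b⟩
    have hLx' : L ≤ f x' := le_of_tendsto hL <| mem_of_superset (Ioo_mem_nhdsLT hx'b)
      fun z hz => (hf hx' ⟨hx'.1.trans hz.1.le, hz.2⟩ hz.1).le
    exact ⟨hLx'.trans_lt (hf hx hx' hxx'), hf.antitoneOn (left_mem_Ico.2 hab) hx hx.1⟩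
  · obtain ⟨z, hzy, hz⟩ := ((hL.eventually (gt_mem_nhds hy.1)).and (Ioo_mem_nhdsLT hab)).exists
    have hsub : Icc a z ⊆ Ico a b := Icc_subset_Ico_right hz.2
    exact image_mono hsub (intermediate_value_Icc' hz.1.le (hc.mono hsub) ⟨hzy.le, hy.2⟩)

theorem not_injOn_of_strictMonoOn_of_image_Ico_eq_Ioc {f : ℝ → ℝ} {x₀ b₀ a b : ℝ}
    (hxb₀ : x₀ < b₀) (hc₀ : ContinuousOn f (Ico x₀ b₀)) (hmono : StrictMonoOn f (Ico x₀ b₀))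
    (himg : f '' Ico a b = Ioc (f x₀) (f a)) (ha : f x₀ < f a) (hx₀ : x₀ ∉ Ico a b) :
    ¬ InjOn f (Ico x₀ b₀ ∪ Ico a b) := by
  intro hinj
  obtain ⟨c, hx₀c, hcb₀, hca⟩ : ∃ c, x₀ < c ∧ c < b₀ ∧ (x₀ < a → c ≤ a) := by
    obtain ⟨c, hx₀c, hcb₀⟩ := exists_between hxb₀
    by_cases h : x₀ < a
    · exact ⟨min c a, lt_min hx₀c h, (min_le_left _ _).trans_lt hcb₀, fun _ => min_le_right _ _⟩
    · exact ⟨c, hx₀c, hcb₀, fun h' => absurd h' h⟩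
  have hIcc : Icc x₀ c ⊆ Ico x₀ b₀ := Icc_subset_Ico_right hcb₀
  have hfc : f x₀ < f c := hmono (left_mem_Ico.2 hxb₀) (hIcc (right_mem_Icc.2 hx₀c.le)) hx₀c
  obtain ⟨y, hy, hyc⟩ := exists_between (lt_min hfc ha)
  obtain ⟨q, hq, rfl⟩ :=
    intermediate_value_Ioo hx₀c.le (hc₀.mono hIcc) ⟨hy, hyc.trans_le (min_le_left _ _)⟩
  obtain ⟨p, hp, hpq⟩ : f q ∈ f '' Ico a b := himg ▸ ⟨hy, (hyc.trans_le (min_le_right _ _)).le⟩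
  obtain rfl : p = q := hinj (Or.inr hp) (Or.inl (hIcc (Ioo_subset_Icc_self hq))) hpq
  by_cases h : x₀ < a
  · exact (hq.2.trans_le (hca h)).not_ge hp.1
  · exact hx₀ ⟨not_lt.1 h, hq.1.trans hp.2⟩

section BijOnIco

variable {f : ℝ → ℝ} {r : ℝ}

def discontinuityPoints (f : ℝ → ℝ) (r : ℝ) : Set ℝ :=
  {x ∈ Ico 0 r | ¬ ContinuousWithinAt f (Ico 0 r) x}

theorem exists_continuousOn_Ico_of_rightContinuous
    (hrc : ∀ x ∈ Ico 0 r, ContinuousWithinAt f (Ico x r) x)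
    (hfin : (discontinuityPoints f r).Finite) {x w : ℝ} (hx : x ∈ Ico 0 r) (hwr : w < r)
    (hcont : ∀ y ∈ Ioc x w, ContinuousWithinAt f (Ico 0 r) y) :
    ∃ b ∈ insert r (discontinuityPoints f r), w < b ∧ Ico x b ⊆ Ico 0 r ∧
      ContinuousOn f (Ico x b) := by
  obtain ⟨b, hb, hwb, hgap⟩ := hfin.exists_mem_insert_forall_Ioo_notMem hwr
  have hbr : b ≤ r := by
    rcases hb with rfl | hb
    exacts [le_rfl, hb.1.2.le]
  have hsub : Ico x b ⊆ Ico 0 r := fun y hy => ⟨hx.1.trans hy.1, hy.2.trans_le hbr⟩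
  refine ⟨b, hb, hwb, hsub, fun y hy => ?_⟩
  rcases hy.1.eq_or_lt with rfl | hxy
  · exact (hrc _ hx).mono (Ico_subset_Ico_right hbr)
  refine ContinuousWithinAt.mono ?_ hsub
  rcases le_or_gt y w with hyw | hwy
  · exact hcont y ⟨hxy, hyw⟩
  · by_contra h
    exact hgap y ⟨hwy, hy.2⟩ ⟨hsub hy, h⟩

def decreasingPieceLimits (f : ℝ → ℝ) (r : ℝ) : Set ℝ :=
  {L | ∃ a b, a < b ∧ Ico a b ⊆ Ico 0 r ∧ b ∈ insert r (discontinuityPoints f r) ∧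
    ContinuousOn f (Ico a b) ∧ StrictAntiOn f (Ico a b) ∧ Tendsto f (𝓝[<] b) (𝓝 L)}

theorem finite_decreasingPieceLimits (hfin : (discontinuityPoints f r).Finite) :
    (decreasingPieceLimits f r).Finite :=
  ((hfin.insert r).image fun b => limUnder (𝓝[<] b) f).subset
    fun _ ⟨_, b, _, _, hb, _, _, hL⟩ => ⟨b, hb, hL.limUnder_eq⟩

theorem exists_mem_decreasingPieceLimits_lt (hmaps : MapsTo f (Ico 0 r) (Ico 0 r)) {a b : ℝ}
    (hab : a < b) (hsub : Ico a b ⊆ Ico 0 r) (hb : b ∈ insert r (discontinuityPoints f r))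
    (hc : ContinuousOn f (Ico a b)) (hf : StrictAntiOn f (Ico a b)) :
    ∃ L ∈ decreasingPieceLimits f r, L < f a := by
  have hbdd : BddBelow (f '' Ioo a b) :=
    ⟨0, forall_mem_image.2 fun x hx => (hmaps (hsub (Ioo_subset_Ico_self hx))).1⟩
  have hL := (hf.antitoneOn.mono Ioo_subset_Ico_self).tendsto_nhdsWithin_Ioo_left
    (nonempty_Ioo.2 hab) hbdd
  refine ⟨_, ⟨a, b, hab, hsub, hb, hc, hf, hL⟩, ?_⟩
  have := hc.image_Ico_of_strictAntiOn_of_tendsto hab hf hL ▸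
    mem_image_of_mem f (left_mem_Ico.2 hab)
  exact this.1

theorem decreasingPieceLimits_eq_empty (hf : BijOn f (Ico 0 r) (Ico 0 r))
    (hrc : ∀ x ∈ Ico 0 r, ContinuousWithinAt f (Ico x r) x)
    (hfin : (discontinuityPoints f r).Finite) : decreasingPieceLimits f r = ∅ := by
  by_contra hne
  obtain ⟨L₀, ⟨a, b, hab, hsub, -, hc, hanti, hlim⟩, hmin⟩ :=
    exists_min_image _ id (finite_decreasingPieceLimits hfin) (nonempty_iff_ne_empty.2 hne)
  have himg := hc.image_Ico_of_strictAntiOn_of_tendsto hab hanti hlim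
  have hL₀a : L₀ < f a := (himg ▸ mem_image_of_mem f (left_mem_Ico.2 hab) :).1
  have hL₀ : L₀ ∈ Ico 0 r := by
    refine ⟨ge_of_tendsto hlim ?_, hL₀a.trans (hf.mapsTo (hsub (left_mem_Ico.2 hab))).2⟩
    filter_upwards [Ioo_mem_nhdsLT hab] with x hx
    exact (hf.mapsTo (hsub (Ioo_subset_Ico_self hx))).1
  obtain ⟨x₀, hx₀, rfl⟩ := hf.surjOn hL₀
  have hx₀ab : x₀ ∉ Ico a b := fun h => (himg ▸ mem_image_of_mem f h :).1.false
  obtain ⟨b₀, hb₀, hxb₀, hsub₀, hc₀⟩ := exists_continuousOn_Ico_of_rightContinuous hrc hfin hx₀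
    hx₀.2 fun y hy => absurd hy.2 hy.1.not_ge
  rcases hc₀.strictMonoOn_or_strictAntiOn_of_injOn (hf.injOn.mono hsub₀) with hmono | hanti₀
  · exact not_injOn_of_strictMonoOn_of_image_Ico_eq_Ioc hxb₀ hc₀ hmono himg hL₀a hx₀ab
      (hf.injOn.mono (union_subset hsub₀ hsub))
  · obtain ⟨L, hL, hLx₀⟩ := exists_mem_decreasingPieceLimits_lt hf.mapsTo hxb₀ hsub₀ hb₀ hc₀ hanti₀
    exact (hmin L hL).not_gt hLx₀

end BijOnIco

theorem strictMonoOn_of_rightContinuous_bijOn_general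
    (r : ℝ) (f : ℝ → ℝ)
    (hf : Set.BijOn f (Set.Ico 0 r) (Set.Ico 0 r))
    (hrc : ∀ x ∈ Set.Ico 0 r, ContinuousWithinAt f (Set.Ico x r) x)
    (hfin : {x ∈ Set.Ico 0 r | ¬ ContinuousWithinAt f (Set.Ico 0 r) x}.Finite)
    (J : Set ℝ) (hJ : J ⊆ Set.Ico 0 r) (hJint : Set.OrdConnected J)
    (hJcont : ∀ x ∈ J, ContinuousWithinAt f (Set.Ico 0 r) x) :
    StrictMonoOn f J := by
  intro x hx y hy hxy
  obtain ⟨b, hb, hyb, hsub, hc⟩ := exists_continuousOn_Ico_of_rightContinuous hrc hfin (hJ hx)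
    (hJ hy).2 fun z hz => hJcont z (hJint.out hx hy (Ioc_subset_Icc_self hz))
  rcases hc.strictMonoOn_or_strictAntiOn_of_injOn (hf.injOn.mono hsub) with hmono | hanti
  · exact hmono (left_mem_Ico.2 (hxy.trans hyb)) ⟨hxy.le, hyb⟩ hxy
  · obtain ⟨L, hL, -⟩ :=
      exists_mem_decreasingPieceLimits_lt hf.mapsTo (hxy.trans hyb) hsub hb hc hanti
    simp [decreasingPieceLimits_eq_empty hf hrc hfin] at hL

/-- Let `r > 0` and let `f` be a bijection of `[0, r)` onto itself that is
right-continuous at every point of `[0, r)` and has only finitely many points of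
discontinuity.  Then `f` is strictly increasing on each of its maximal intervals of
continuity; in particular, if `J ⊆ [0, r)` is an interval such that `f` is continuous at
every point of `J`, then `f` is strictly increasing on `J`. -/
theorem strictMonoOn_of_rightContinuous_bijOn
    (r : ℝ) (hr : 0 < r) (f : ℝ → ℝ)
    (hf : Set.BijOn f (Set.Ico 0 r) (Set.Ico 0 r))
    (hrc : ∀ x ∈ Set.Ico 0 r, ContinuousWithinAt f (Set.Ico x r) x)
    (hfin : {x ∈ Set.Ico 0 r | ¬ ContinuousWithinAt f (Set.Ico 0 r) x}.Finite)
    (J : Set ℝ) (hJ : J ⊆ Set.Ico 0 r) (hJint : Set.OrdConnected J)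
    (hJcont : ∀ x ∈ J, ContinuousWithinAt f (Set.Ico 0 r) x) :
    StrictMonoOn f J :=
  strictMonoOn_of_rightContinuous_bijOn_general r f hf hrc hfin J hJ hJint hJcont
end

section
/- In the group W = ℤ ≀ ℤ, the centralizer of a equals the cyclic subgroup ⟨a⟩ generated by a, and the centralizer of b equals the base subgroup H. -/
noncomputable section

namespace ZWrZ

/-- The base group of the restricted wreath product `ℤ ≀ ℤ`: the direct sum
`⨁_{k ∈ ℤ} ℤ`, written multiplicatively. -/
abbrev WBase : Type := Multiplicative (ℤ →₀ ℤ)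

/-- The shift-by-one automorphism of the base group, sending `f` to `k ↦ f (k - 1)`. -/
def shiftOne : MulAut WBase :=
  AddEquiv.toMultiplicative (Finsupp.domCongr (Equiv.addRight (1 : ℤ)))

/-- The action of `ℤ` on the base group by shifting indices: `n` acts as the `n`-th power
of the shift-by-one automorphism. -/
def wreathAction : Multiplicative ℤ →* MulAut WBase :=
  zpowersHom (MulAut WBase) shiftOne

/-- The restricted wreath product `W = ℤ ≀ ℤ`, realized as the semidirect product
`(⨁_{k∈ℤ} ℤ) ⋊ ℤ` in which `ℤ` acts on the direct sum by shifting indices. -/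
abbrev W : Type := WBase ⋊[wreathAction] Multiplicative ℤ

/-- The element `a = (0, 1)` of `W`: the generator of the acting copy of `ℤ`. -/
def aW : W := SemidirectProduct.inr (Multiplicative.ofAdd (1 : ℤ))

/-- The element `b = (e₀, 0)` of `W`: the standard generator of the index-`0` summand of
the base. -/
def bW : W := SemidirectProduct.inl (Multiplicative.ofAdd (Finsupp.single (0 : ℤ) (1 : ℤ)))

/-- The base subgroup `H = {(h, 0)} ≤ W`. -/
def HW : Subgroup W := (SemidirectProduct.inl : WBase →* W).range

end ZWrZ

/-!
Write elements of `W` as pairs `(f, n)`. Commuting with `a = (0, 1)` says that `f` is invariant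
under the shift; a finitely supported function on `ℤ` that is invariant under the shift is
constant, hence zero, so the centralizer of `a` is `{(0, n)} = ⟨a⟩`. Commuting with `b = (e₀, 0)`
says, since the base is abelian, that `n` fixes `e₀`; as `n` moves `e₀` to `eₙ`, this forces
`n = 0`, so the centralizer of `b` is `H`.
-/

theorem Finsupp.eq_zero_of_forall_apply_eq {α M : Type*} [Infinite α] [Zero M] (f : α →₀ M)
    (h : ∀ a b, f a = f b) : f = 0 := by
  obtain ⟨b, hb⟩ := Infinite.exists_notMem_finset f.support
  ext a
  rw [h a b]
  exact Finsupp.notMem_support_iff.mp hb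

theorem Finsupp.eq_zero_of_apply_add_one_eq {M : Type*} [Zero M] (f : ℤ →₀ M)
    (h : ∀ k, f (k + 1) = f k) : f = 0 := by
  have hconst : ∀ k, f k = f 0 := by
    intro k
    induction k using Int.induction_on with
    | zero => rfl
    | succ i ih => rw [h, ih]
    | pred i ih => rw [← ih, ← h, sub_add_cancel]
  exact f.eq_zero_of_forall_apply_eq fun a b => (hconst a).trans (hconst b).symm

namespace ZWrZ

open SemidirectProduct Multiplicative

lemma shiftOne_apply (f : WBase) (k : ℤ) : toAdd (shiftOne f) k = toAdd f (k - 1) := by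
  simp [shiftOne, Finsupp.domCongr, sub_eq_add_neg]

lemma shiftOne_inv_apply (f : WBase) (k : ℤ) : toAdd (shiftOne⁻¹ f) k = toAdd f (k + 1) := by
  rw [← add_sub_cancel_right k 1, ← shiftOne_apply, MulAut.apply_inv_self, sub_add_cancel]

lemma shiftOne_zpow_apply (n : ℤ) (f : WBase) (k : ℤ) :
    toAdd ((shiftOne ^ n) f) k = toAdd f (k - n) := by
  induction n using Int.induction_on generalizing f with
  | zero => simp
  | succ m ih => rw [zpow_add_one, MulAut.mul_apply, ih, shiftOne_apply, sub_sub]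
  | pred m ih =>
    rw [zpow_sub_one, MulAut.mul_apply, ih, shiftOne_inv_apply]
    ring_nf

lemma wreathAction_apply (n : Multiplicative ℤ) (f : WBase) (k : ℤ) :
    toAdd (wreathAction n f) k = toAdd f (k - toAdd n) :=
  shiftOne_zpow_apply (toAdd n) f k

lemma wreathAction_single (n : Multiplicative ℤ) (k m : ℤ) :
    wreathAction n (ofAdd (Finsupp.single k m)) = ofAdd (Finsupp.single (k + toAdd n) m) := by
  ext j
  rw [wreathAction_apply]
  simp [Finsupp.single_apply, eq_sub_iff_add_eq]

lemma commute_aW_iff {g : W} : Commute g aW ↔ g.left = 1 := by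
  have hleft : Commute g aW ↔ wreathAction (ofAdd 1) g.left = g.left := by
    simp [Commute, SemiconjBy, SemidirectProduct.ext_iff, aW, mul_comm, eq_comm]
  rw [hleft]
  constructor
  · intro h
    refine congrArg ofAdd ((toAdd g.left).eq_zero_of_apply_add_one_eq fun k => ?_)
    simpa [wreathAction_apply] using (congrArg (fun f : WBase => toAdd f (k + 1)) h).symm
  · intro h
    rw [h, map_one]

lemma mem_zpowers_aW_iff {g : W} : g ∈ Subgroup.zpowers aW ↔ g.left = 1 := by
  constructor
  · rintro ⟨n, rfl⟩
    simp [aW, ← map_zpow]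
  · intro h
    refine ⟨toAdd g.right, ?_⟩
    rw [← inl_left_mul_inr_right g, h, map_one, one_mul]
    simp [aW, ← map_zpow, ← ofAdd_zsmul]

lemma commute_bW_iff {g : W} : Commute g bW ↔ g.right = 1 := by
  have hleft : Commute g bW ↔ wreathAction g.right bW.left = bW.left := by
    simp [Commute, SemiconjBy, SemidirectProduct.ext_iff, bW, mul_comm]
  rw [hleft, bW, left_inl, wreathAction_single, zero_add,
    EmbeddingLike.apply_eq_iff_eq, Finsupp.single_left_inj one_ne_zero, toAdd_eq_zero]

/-- In `W = ℤ ≀ ℤ`, the centralizer of `a` equals the cyclic subgroup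
`⟨a⟩`, and the centralizer of `b` equals the base subgroup `H`. -/
theorem centralizer_a_eq_zpowers_and_centralizer_b_eq_base :
    Subgroup.centralizer ({aW} : Set W) = Subgroup.zpowers aW ∧
    Subgroup.centralizer ({bW} : Set W) = HW := by
  constructor
  · ext g
    exact Subgroup.mem_centralizer_singleton_iff.trans
      (commute_aW_iff.trans mem_zpowers_aW_iff.symm)
  · ext g
    rw [Subgroup.mem_centralizer_singleton_iff, HW, range_inl_eq_ker_rightHom]
    exact commute_bW_iff

end ZWrZ
end
end

section
/- In the group W = ℤ ≀ ℤ, for every nonzero integer n, the centralizer of the element b·aⁿ equals the cyclic subgroup ⟨b·aⁿ⟩ generated by b·aⁿ. -/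
/-!
Write `w = (f, m)` and `g = b * a ^ n = (δ₀, n)`, with `σ` the shift. Then `w` commutes with `g`
iff `f + δₘ = δ₀ + σⁿ f`. Pushing this forward along `ℤ → ℤ/n`, which makes `σⁿ` trivial,
leaves `δ₀ = δ_(m mod n)`, so `m = j * n`. Then `w * g ^ (-j)` is a base
element commuting with `g`, i.e. a finitely supported `n`-periodic function, hence trivial.
-/

noncomputable section

namespace Finsupp

theorem eq_zero_of_periodic {M : Type*} [Zero M] (f : ℤ →₀ M) {c : ℤ} (hc : c ≠ 0)
    (hf : Function.Periodic f c) : f = 0 := by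
  by_contra hne
  obtain ⟨k, hk⟩ := Finsupp.ne_iff.mp hne
  have hinj : Function.Injective fun i : ℕ => k + i * c := fun i j h => by simpa [hc] using h
  refine f.support.finite_toSet.not_infinite
    (Set.infinite_of_injective_forall_mem hinj fun i => ?_)
  rwa [Finset.mem_coe, mem_support_iff, hf.nat_mul i k]

theorem mapDomain_equivMapDomain_of_comp_eq {α β M : Type*} [AddCommMonoid M] {e : α ≃ α}
    {π : α → β} (h : π ∘ e = π) (f : α →₀ M) :
    mapDomain π (equivMapDomain e f) = mapDomain π f := by
  rw [equivMapDomain_eq_mapDomain, ← mapDomain_comp, h]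

theorem dvd_of_add_single_eq_single_add_equivMapDomain {M : Type*} [AddCancelCommMonoid M]
    {r : M} (hr : r ≠ 0) {f : ℤ →₀ M} {m n : ℤ}
    (h : f + single m r = single 0 r + equivMapDomain (Equiv.addRight n) f) : n ∣ m := by
  let π : ℤ → ZMod n.natAbs := Int.cast
  have hn : (n : ZMod n.natAbs) = 0 := by
    rw [ZMod.intCast_zmod_eq_zero_iff_dvd, Int.natAbs_dvd]
  have hπ : π ∘ Equiv.addRight n = π := by
    funext k
    simp [π, hn]
  have := congrArg (mapDomain π) h
  rw [mapDomain_add, mapDomain_add, mapDomain_equivMapDomain_of_comp_eq hπ, add_comm,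
    add_right_cancel_iff, mapDomain_single, mapDomain_single, single_left_inj hr] at this
  rw [← Int.natAbs_dvd, ← ZMod.intCast_zmod_eq_zero_iff_dvd]
  simpa [π] using this

end Finsupp

namespace ZWrZ

open Finsupp

theorem toAdd_zpow_shiftOne_apply (m : ℤ) (x : WBase) (k : ℤ) :
    ((shiftOne ^ m) x).toAdd k = x.toAdd (k - m) := by
  induction m using Int.induction_on generalizing x k with
  | zero => simp
  | succ i ih =>
    rw [zpow_add_one, MulAut.mul_apply, ih, sub_add_eq_sub_sub]
    rfl
  | pred i ih =>
    rw [zpow_sub_one, MulAut.mul_apply, ih]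
    conv_rhs => rw [← MulAut.apply_inv_self _ shiftOne x]
    exact congrArg (shiftOne⁻¹ x).toAdd (by simp; ring)

theorem toAdd_wreathAction (t : Multiplicative ℤ) (x : WBase) :
    (wreathAction t x).toAdd = equivMapDomain (Equiv.addRight t.toAdd) x.toAdd := by
  ext k
  simpa [wreathAction, sub_eq_add_neg] using toAdd_zpow_shiftOne_apply t.toAdd x k

section

variable {n : ℤ}

theorem left_bW_mul_aW_zpow : (bW * aW ^ n).left = .ofAdd (single 0 1) := by
  simp [aW, bW, ← map_zpow]

theorem right_bW_mul_aW_zpow : (bW * aW ^ n).right = .ofAdd n := by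
  simp [aW, bW, ← map_zpow, ← ofAdd_zsmul]

theorem toAdd_left_of_commute {w : W} (hw : Commute w (bW * aW ^ n)) :
    w.left.toAdd + single w.right.toAdd 1
      = single 0 1 + equivMapDomain (Equiv.addRight n) w.left.toAdd := by
  have hleft := left_bW_mul_aW_zpow (n := n)
  have hright := right_bW_mul_aW_zpow (n := n)
  generalize bW * aW ^ n = g at hw hleft hright
  have := congrArg (fun z : W => z.left.toAdd) hw.eq
  simpa [toAdd_wreathAction, hleft, hright] using this

theorem dvd_toAdd_right_of_commute {w : W} (hw : Commute w (bW * aW ^ n)) :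
    n ∣ w.right.toAdd :=
  dvd_of_add_single_eq_single_add_equivMapDomain one_ne_zero (toAdd_left_of_commute hw)

theorem eq_one_of_commute_of_right_eq_one (hn : n ≠ 0) {u : W}
    (hu : Commute u (bW * aW ^ n)) (hr : u.right = 1) : u = 1 := by
  have hfix := toAdd_left_of_commute hu
  rw [hr, toAdd_one, add_comm, add_left_cancel_iff] at hfix
  have hper : Function.Periodic u.left.toAdd n := fun k => by
    simpa using congrArg (· (k + n)) hfix
  have hleft : u.left = 1 := toAdd_eq_zero.mp (eq_zero_of_periodic _ hn hper)
  exact SemidirectProduct.ext hleft hr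

end

/-- In `W = ℤ ≀ ℤ`, for every nonzero integer `n`, the centralizer of
`b * a ^ n` equals the cyclic subgroup generated by `b * a ^ n`. -/
theorem centralizer_b_mul_a_zpow_eq_zpowers (n : ℤ) (hn : n ≠ 0) :
    Subgroup.centralizer ({bW * aW ^ n} : Set W) = Subgroup.zpowers (bW * aW ^ n) := by
  set g := bW * aW ^ n
  refine le_antisymm (fun w hw => ?_)
    (Subgroup.zpowers_le.mpr (Subgroup.mem_centralizer_singleton_iff.mpr rfl))
  have hwg : Commute w g := Subgroup.mem_centralizer_singleton_iff.mp hw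
  obtain ⟨j, hj⟩ := dvd_toAdd_right_of_commute hwg
  have hright : (w * g ^ (-j)).right = 1 := by
    rw [← SemidirectProduct.rightHom_eq_right, map_mul, map_zpow,
      SemidirectProduct.rightHom_eq_right, right_bW_mul_aW_zpow]
    apply Multiplicative.toAdd.injective
    simp [hj, mul_comm]
  have hu := eq_one_of_commute_of_right_eq_one hn
    (hwg.mul_left ((Commute.refl g).zpow_left _)) hright
  rw [zpow_neg, mul_inv_eq_one] at hu
  exact Subgroup.mem_zpowers_iff.mpr ⟨j, hu.symm⟩

end ZWrZ
end
end

section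
/- In the group W = ℤ ≀ ℤ: (1) for every integer n, the set of products H·C_W(b·aⁿ) = {h·c : h ∈ H, c ∈ C_W(b·aⁿ)} equals the set of products H·⟨aⁿ⟩; and (2) for all integers m, n: m divides n if and only if H·C_W(b·aⁿ) ⊆ H·C_W(b·aᵐ). -/
noncomputable section

/-!
`H` is the kernel of the projection `W → ℤ`, so `H · K` is the full preimage of the image of
`K`, for every subgroup `K`. Both `a^n` and `b a^n` project to `n`, hence both
`H · C_W(b a^n)` and `H · ⟨a^n⟩` are the preimage of `nℤ` once we know that everything
commuting with `b a^n` projects into `nℤ`. For `w = (f, t)` the base coordinates of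
`(b a^n) w = w (b a^n)` read `e₀ + shiftₙ f = f + e_t`; pushing indices forward to `ℤ/nℤ`
makes the shift invisible, leaving `e₀ = e_t` there, i.e. `n ∣ t`.
-/

namespace Finsupp

theorem equivMapDomain_addRight_add {M : Type*} [AddCommMonoid M] (s t : ℤ) (f : ℤ →₀ M) :
    (f.equivMapDomain (Equiv.addRight s)).equivMapDomain (Equiv.addRight t)
      = f.equivMapDomain (Equiv.addRight (s + t)) := by
  rw [← equivMapDomain_trans]
  congr 1
  ext
  simp [add_assoc]

theorem mapDomain_intCast_equivMapDomain_addRight_self {M : Type*} [AddCommMonoid M] (n : ℤ)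
    (f : ℤ →₀ M) :
    (f.equivMapDomain (Equiv.addRight n)).mapDomain ((↑) : ℤ → ZMod n.natAbs)
      = f.mapDomain ((↑) : ℤ → ZMod n.natAbs) := by
  rw [equivMapDomain_eq_mapDomain, ← mapDomain_comp]
  congr 1
  funext k
  simp [(ZMod.intCast_zmod_eq_zero_iff_dvd n n.natAbs).2 Int.natAbs_dvd_self]

theorem dvd_of_single_add_equivMapDomain_addRight_eq {n t : ℤ} {f : ℤ →₀ ℤ}
    (h : f + single t 1 = single 0 1 + f.equivMapDomain (Equiv.addRight n)) : n ∣ t := by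
  have hmod := congrArg (mapDomain ((↑) : ℤ → ZMod n.natAbs)) h
  rw [mapDomain_add, mapDomain_add, mapDomain_single, mapDomain_single,
    mapDomain_intCast_equivMapDomain_addRight_self, add_comm, add_left_inj,
    single_left_inj one_ne_zero, Int.cast_zero, ZMod.intCast_zmod_eq_zero_iff_dvd] at hmod
  exact Int.natAbs_dvd.1 hmod

end Finsupp

theorem Int.ofAdd_mem_zpowers_ofAdd_iff {m n : ℤ} :
    Multiplicative.ofAdd n ∈ Subgroup.zpowers (Multiplicative.ofAdd m) ↔ m ∣ n := by
  simp only [Subgroup.mem_zpowers_iff, ← ofAdd_zsmul, EmbeddingLike.apply_eq_iff_eq, smul_eq_mul,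
    dvd_def, eq_comm, mul_comm]

open Pointwise in
theorem SemidirectProduct.coe_range_inl_mul {N G : Type*} [Group N] [Group G]
    {φ : G →* MulAut N} (K : Subgroup (N ⋊[φ] G)) :
    ((inl : N →* N ⋊[φ] G).range : Set (N ⋊[φ] G)) * (K : Set (N ⋊[φ] G))
      = ((K.map rightHom).comap rightHom : Subgroup (N ⋊[φ] G)) := by
  rw [Subgroup.comap_map_eq, sup_comm, range_inl_eq_ker_rightHom, Subgroup.normal_mul]

namespace ZWrZ

open Finsupp Multiplicative SemidirectProduct

theorem shiftOne_ofAdd (f : ℤ →₀ ℤ) :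
    shiftOne (ofAdd f) = ofAdd (f.equivMapDomain (Equiv.addRight 1)) := rfl

theorem shiftOne_inv_ofAdd (f : ℤ →₀ ℤ) :
    shiftOne⁻¹ (ofAdd f) = ofAdd (f.equivMapDomain (Equiv.addRight (-1))) := by
  rw [← Equiv.addRight_symm]
  rfl

theorem shiftOne_zpow_ofAdd (t : ℤ) (f : ℤ →₀ ℤ) :
    (shiftOne ^ t) (ofAdd f) = ofAdd (f.equivMapDomain (Equiv.addRight t)) := by
  induction t using Int.induction_on generalizing f with
  | zero =>
    rw [zpow_zero, MulAut.one_apply, Equiv.addRight_zero, Equiv.Perm.one_def,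
      equivMapDomain_refl]
  | succ k ih =>
    rw [zpow_add_one, MulAut.mul_apply, shiftOne_ofAdd, ih, equivMapDomain_addRight_add,
      add_comm]
  | pred k ih =>
    rw [zpow_sub_one, MulAut.mul_apply, shiftOne_inv_ofAdd, ih, equivMapDomain_addRight_add,
      sub_eq_neg_add]

theorem wreathAction_ofAdd (t : ℤ) (f : ℤ →₀ ℤ) :
    wreathAction (ofAdd t) (ofAdd f) = ofAdd (f.equivMapDomain (Equiv.addRight t)) := by
  rw [wreathAction, zpowersHom_apply, toAdd_ofAdd, shiftOne_zpow_ofAdd]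

theorem aW_zpow (n : ℤ) : aW ^ n = inr (ofAdd n) := by
  simp [aW, ← map_zpow, ← ofAdd_zsmul]

theorem bW_mul_aW_zpow (n : ℤ) : bW * aW ^ n = ⟨ofAdd (single 0 1), ofAdd n⟩ := by
  ext <;> simp [bW, aW_zpow]

theorem dvd_toAdd_right_of_mem_centralizer {n : ℤ} {w : W}
    (hw : w ∈ Subgroup.centralizer {bW * aW ^ n}) : n ∣ toAdd w.right := by
  obtain ⟨l, r⟩ := w
  obtain ⟨f, rfl⟩ := ofAdd.surjective l
  obtain ⟨t, rfl⟩ := ofAdd.surjective r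
  have hcomm := congrArg SemidirectProduct.left (Subgroup.mem_centralizer_singleton_iff.1 hw)
  rw [bW_mul_aW_zpow, mul_left, mul_left, wreathAction_ofAdd, wreathAction_ofAdd,
    equivMapDomain_single] at hcomm
  simp only [Equiv.coe_addRight, zero_add, ← ofAdd_add, ofAdd.injective.eq_iff] at hcomm
  exact dvd_of_single_add_equivMapDomain_addRight_eq hcomm

theorem map_rightHom_centralizer (n : ℤ) :
    (Subgroup.centralizer {bW * aW ^ n}).map rightHom = Subgroup.zpowers (ofAdd n) := by
  refine le_antisymm ?_ (Subgroup.zpowers_le.2 ⟨bW * aW ^ n, ?_, ?_⟩)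
  · rintro _ ⟨w, hw, rfl⟩
    exact Int.ofAdd_mem_zpowers_ofAdd_iff.2 (dvd_toAdd_right_of_mem_centralizer hw)
  · exact Subgroup.mem_centralizer_singleton_iff.2 rfl
  · rw [bW_mul_aW_zpow, rightHom_eq_right]

theorem map_rightHom_zpowers_aW_zpow (n : ℤ) :
    (Subgroup.zpowers (aW ^ n)).map rightHom = Subgroup.zpowers (ofAdd n) := by
  rw [MonoidHom.map_zpowers, aW_zpow, rightHom_inr]

open Pointwise

theorem base_mul_centralizer_eq_comap (n : ℤ) :
    (HW : Set W) * (Subgroup.centralizer ({bW * aW ^ n} : Set W) : Set W)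
      = ((Subgroup.zpowers (ofAdd n)).comap rightHom : Subgroup W) := by
  rw [HW, coe_range_inl_mul, map_rightHom_centralizer]

theorem base_mul_zpowers_eq_comap (n : ℤ) :
    (HW : Set W) * (Subgroup.zpowers (aW ^ n) : Set W)
      = ((Subgroup.zpowers (ofAdd n)).comap rightHom : Subgroup W) := by
  rw [HW, coe_range_inl_mul, map_rightHom_zpowers_aW_zpow]

/-- In `W = ℤ ≀ ℤ`: (1) for every integer `n`,
`H · C_W(b a^n) = H · ⟨a^n⟩` as sets of products; and (2) for all integers `m, n`:
`m ∣ n` if and only if `H · C_W(b a^n) ⊆ H · C_W(b a^m)`. -/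
theorem base_mul_centralizer_eq_and_dvd_iff :
    (∀ n : ℤ,
      (HW : Set W) * (Subgroup.centralizer ({bW * aW ^ n} : Set W) : Set W)
        = (HW : Set W) * (Subgroup.zpowers (aW ^ n) : Set W)) ∧
    (∀ m n : ℤ, m ∣ n ↔
      (HW : Set W) * (Subgroup.centralizer ({bW * aW ^ n} : Set W) : Set W)
        ⊆ (HW : Set W) * (Subgroup.centralizer ({bW * aW ^ m} : Set W) : Set W)) := by
  refine ⟨fun n => ?_, fun m n => ?_⟩
  · rw [base_mul_centralizer_eq_comap, base_mul_zpowers_eq_comap]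
  · rw [base_mul_centralizer_eq_comap, base_mul_centralizer_eq_comap, SetLike.coe_subset_coe,
      Subgroup.comap_le_comap_of_surjective rightHom_surjective, Subgroup.zpowers_le,
      Int.ofAdd_mem_zpowers_ofAdd_iff]

end ZWrZ
end
end

section
/- For all integers n and k: n = k(k+1) if and only if both (i) for every integer m, n divides m if and only if (k divides m and k+1 divides m), and (ii) 2k+1 divides 2n − k. -/
/-!
Since `k` and `k + 1` are coprime, being divisible by both is the same as being divisible by
`k * (k + 1)`, so condition (i) says that `n` and `k * (k + 1)` have the same multiples, i.e.
`n = ± k * (k + 1)`. For the minus sign, `2 * n - k = -(2 * k + 1) * (k + 1) + 1`, so (ii) forces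
`2 * k + 1 = ± 1`, that is `k * (k + 1) = 0`, and both signs agree.
-/

theorem IsCoprime.mul_dvd_iff {R : Type*} [CommSemiring R] {x y z : R} (H : IsCoprime x y) :
    x * y ∣ z ↔ x ∣ z ∧ y ∣ z :=
  ⟨fun h => ⟨(dvd_mul_right x y).trans h, (dvd_mul_left y x).trans h⟩,
    fun h => H.mul_dvd h.1 h.2⟩

theorem associated_of_forall_dvd_iff {M : Type*} [MonoidWithZero M] [IsLeftCancelMulZero M]
    {a b : M} (h : ∀ m, a ∣ m ↔ b ∣ m) : Associated a b :=
  associated_of_dvd_dvd ((h b).2 dvd_rfl) ((h a).1 dvd_rfl)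

theorem Int.mul_add_one_eq_zero_of_two_mul_add_one_dvd {k : ℤ}
    (h : 2 * k + 1 ∣ 2 * -(k * (k + 1)) - k) : k * (k + 1) = 0 := by
  have hunit : 2 * k + 1 ∣ 1 := by
    have := dvd_sub h (dvd_mul_right (2 * k + 1) (-(k + 1)))
    rwa [show 2 * -(k * (k + 1)) - k - (2 * k + 1) * -(k + 1) = 1 by ring] at this
  have hk : k = 0 ∨ k + 1 = 0 := by
    rcases Int.isUnit_iff.mp (isUnit_of_dvd_one hunit) with hone | hnegone <;> omega
  exact mul_eq_zero.mpr hk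

/-- For all integers `n` and `k`: `n = k * (k + 1)` if and only if
(i) for every integer `m`, `n ∣ m ↔ (k ∣ m ∧ (k + 1) ∣ m)`, and
(ii) `(2 * k + 1) ∣ (2 * n - k)`. -/
theorem int_eq_mul_succ_iff_dvd_characterization (n k : ℤ) :
    n = k * (k + 1) ↔
      ((∀ m : ℤ, n ∣ m ↔ (k ∣ m ∧ (k + 1) ∣ m)) ∧ (2 * k + 1) ∣ (2 * n - k)) := by
  have hcop : IsCoprime k (k + 1) := .add_one_right_of_dvd dvd_rfl
  constructor
  · rintro rfl
    exact ⟨fun _ => hcop.mul_dvd_iff, ⟨k, by ring⟩⟩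
  · rintro ⟨hmultiples, hodd⟩
    have hassoc : Associated n (k * (k + 1)) :=
      associated_of_forall_dvd_iff fun m => (hmultiples m).trans hcop.mul_dvd_iff.symm
    rcases Int.associated_iff.mp hassoc with hpos | hneg
    · exact hpos
    · rw [hneg] at hodd ⊢
      rw [Int.mul_add_one_eq_zero_of_two_mul_add_one_dvd hodd, neg_zero]
end
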